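/- arXiv:math/0512035 — 9 statements merged into one kernel-verified Lean document; each statement's English description precedes it below -/
import Mathlib

section
/- The expected value E(n) = (1/n!) Σ_{w ∈ S_n} is(w) of the length of the longest increasing subsequence of a uniformly random permutation of {1,…,n} satisfies E(n) ≥ √n. -/
/-!
Label each position `i` of a sequence of distinct values by the pair (length of the longest
increasing subsequence ending at `i`, length of the longest decreasing one ending at `i`).
For `i < j` one of the two lengths strictly grows from `i` to `j`, so the labels are distinct, and
the Erdős–Szekeres bound `n ≤ is(w) · ds(w)` follows. By AM–GM, `is(w) + ds(w) ≥ 2√n`, and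
averaging over `S_n`, where `w ↦ rev ∘ w` exchanges `is` and `ds`, gives `E(n) ≥ √n`.
-/

open scoped Classical in
/-- The length of the longest increasing subsequence of the permutation `w` of `{1,…,n}`. -/
noncomputable def isLen (n : ℕ) (w : Equiv.Perm (Fin n)) : ℕ :=
  Finset.sup ((Finset.univ : Finset (Fin n)).powerset.filter
    fun s : Finset (Fin n) => StrictMonoOn w ↑s) Finset.card

open Finset OrderDual

section LongestIncreasing

variable {α β γ : Type*} [Fintype α]

section Preorder

variable [Preorder α] [Preorder β]

open scoped Classical in
noncomputable def lisLen (f : α → β) : ℕ :=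
  ((univ : Finset α).powerset.filter fun s : Finset α => StrictMonoOn f ↑s).sup card

open scoped Classical in
noncomputable def lisEndingAt (f : α → β) (i : α) : ℕ :=
  ((univ : Finset α).powerset.filter
    fun s : Finset α => StrictMonoOn f ↑s ∧ IsGreatest (↑s : Set α) i).sup card

lemma card_le_lisLen {f : α → β} {s : Finset α} (hs : StrictMonoOn f ↑s) : #s ≤ lisLen f := by
  classical
  exact le_sup (f := card) (by simpa using hs)

lemma card_le_lisEndingAt {f : α → β} {i : α} {s : Finset α} (hs : StrictMonoOn f ↑s)
    (hi : IsGreatest (↑s : Set α) i) : #s ≤ lisEndingAt f i := by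
  classical
  exact le_sup (f := card) (by simpa using ⟨hs, hi⟩)

lemma exists_card_eq_lisEndingAt (f : α → β) (i : α) :
    ∃ s : Finset α, StrictMonoOn f ↑s ∧ IsGreatest (↑s : Set α) i ∧ #s = lisEndingAt f i := by
  classical
  have hsingleton : {i} ∈ (univ : Finset α).powerset.filter
      fun s : Finset α => StrictMonoOn f ↑s ∧ IsGreatest (↑s : Set α) i := by
    simp [Set.strictMonoOn_singleton, isGreatest_singleton]
  obtain ⟨s, hs, hcard⟩ := exists_mem_eq_sup _ ⟨_, hsingleton⟩ card
  simp only [mem_filter, mem_powerset] at hs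
  exact ⟨s, hs.2.1, hs.2.2, hcard.symm⟩

lemma one_le_lisEndingAt (f : α → β) (i : α) : 1 ≤ lisEndingAt f i := by
  simpa using card_le_lisEndingAt (f := f) (s := {i})
    (by simp [Set.strictMonoOn_singleton]) (by simp [isGreatest_singleton])

lemma lisEndingAt_le_lisLen (f : α → β) (i : α) : lisEndingAt f i ≤ lisLen f := by
  obtain ⟨s, hs, -, hcard⟩ := exists_card_eq_lisEndingAt f i
  exact hcard ▸ card_le_lisLen hs

end Preorder

variable [LinearOrder α] [LinearOrder β] {f : α → β}

lemma lisLen_comp_strictMono [Preorder γ] {g : β → γ}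
    (hg : StrictMono g) (f : α → β) : lisLen (g ∘ f) = lisLen f := by
  have hcomp (s : Set α) : StrictMonoOn (g ∘ f) s ↔ StrictMonoOn f s := by
    simp only [StrictMonoOn, Function.comp_apply, hg.lt_iff_lt]
  unfold lisLen
  simp only [hcomp]
  congr

lemma lisEndingAt_lt_lisEndingAt {i j : α} (hij : i < j) (hf : f i < f j) :
    lisEndingAt f i < lisEndingAt f j := by
  classical
  obtain ⟨s, hmono, hgreat, hcard⟩ := exists_card_eq_lisEndingAt f i
  have hle : ∀ x ∈ s, x ≤ j := fun x hx => (hgreat.2 hx).trans hij.le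
  have hj : j ∉ s := fun hjs => (hgreat.2 hjs).not_gt hij
  have hextend : StrictMonoOn f ↑(insert j s) := by
    rw [coe_insert, strictMonoOn_insert_iff_of_forall_le hle]
    refine ⟨fun b hb _ => ?_, hmono⟩
    rcases (hgreat.2 hb).eq_or_lt with rfl | hbi
    · exact hf
    · exact (hmono hb hgreat.1 hbi).trans hf
  have hgreat' : IsGreatest (↑(insert j s) : Set α) j := by
    simpa [max_eq_left hij.le] using hgreat.insert j
  calc lisEndingAt f i < #s + 1 := by omega
    _ = #(insert j s) := (card_insert_of_notMem hj).symm
    _ ≤ lisEndingAt f j := card_le_lisEndingAt hextend hgreat'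

theorem card_le_lisLen_mul_lisLen_toDual (hf : Function.Injective f) :
    Fintype.card α ≤ lisLen f * lisLen (toDual ∘ f) := by
  let label (i : α) : ℕ × ℕ := (lisEndingAt f i, lisEndingAt (toDual ∘ f) i)
  have hlabel : Function.Injective label := by
    refine Function.Injective.of_lt_imp_ne fun i j hij heq => ?_
    rcases (hf.ne hij.ne).lt_or_gt with h | h
    · exact (lisEndingAt_lt_lisEndingAt hij h).ne (congrArg Prod.fst heq)
    · exact (lisEndingAt_lt_lisEndingAt (f := toDual ∘ f) hij (toDual_lt_toDual.2 h)).ne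
        (congrArg Prod.snd heq)
  have hrange (i : α) : label i ∈ Icc 1 (lisLen f) ×ˢ Icc 1 (lisLen (toDual ∘ f)) := by
    simp [label, one_le_lisEndingAt, lisEndingAt_le_lisLen]
  simpa using card_le_card_of_injOn (s := univ) label (fun i _ => hrange i) hlabel.injOn

end LongestIncreasing

lemma isLen_eq_lisLen (n : ℕ) (w : Equiv.Perm (Fin n)) : isLen n w = lisLen w := by
  unfold isLen lisLen
  congr

lemma sum_lisLen_toDual_comp_perm (n : ℕ) :
    ∑ w : Equiv.Perm (Fin n), lisLen (toDual ∘ ⇑w) = ∑ w : Equiv.Perm (Fin n), lisLen ⇑w := by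
  have hrev (w : Equiv.Perm (Fin n)) :
      lisLen (toDual ∘ ⇑w) = lisLen ⇑(Fin.revPerm * w : Equiv.Perm (Fin n)) := by
    rw [← lisLen_comp_strictMono Fin.revOrderIso.strictMono]
    rfl
  simp_rw [hrev]
  exact Equiv.sum_comp (Equiv.mulLeft Fin.revPerm) (fun w => lisLen ⇑w)

lemma two_mul_sqrt_le_add {a b c : ℝ} (ha : 0 ≤ a) (hb : 0 ≤ b) (h : c ≤ a * b) :
    2 * √c ≤ a + b := by
  calc 2 * √c ≤ 2 * √a * √b := by
        rw [mul_assoc, ← Real.sqrt_mul ha]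
        gcongr
    _ ≤ √a ^ 2 + √b ^ 2 := two_mul_le_add_sq _ _
    _ = a + b := by rw [Real.sq_sqrt ha, Real.sq_sqrt hb]

/-- The expected length of the longest increasing subsequence of a uniformly random
permutation of `{1,…,n}` is at least `√n`. -/
theorem expectation_isLen_ge_sqrt (n : ℕ) :
    Real.sqrt n ≤ (∑ w : Equiv.Perm (Fin n), (isLen n w : ℝ)) / (n.factorial : ℝ) := by
  have hpair (w : Equiv.Perm (Fin n)) : 2 * √n ≤ (lisLen ⇑w : ℝ) + lisLen (toDual ∘ ⇑w) := by
    refine two_mul_sqrt_le_add (by positivity) (by positivity) ?_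
    exact_mod_cast Fintype.card_fin n ▸ card_le_lisLen_mul_lisLen_toDual w.injective
  have hsum := sum_le_sum fun w (_ : w ∈ univ) => hpair w
  rw [sum_add_distrib, ← Nat.cast_sum, ← Nat.cast_sum, sum_lisLen_toDual_comp_perm, sum_const,
    card_univ, Fintype.card_perm, Fintype.card_fin, nsmul_eq_mul] at hsum
  simp_rw [isLen_eq_lisLen]
  rw [le_div_iff₀ (by positivity)]
  push_cast at hsum ⊢
  linarith
end

section
/- The number of permutations w ∈ S_n with no increasing subsequence of length 3 (i.e., is(w) ≤ 2) equals the Catalan number C_n = (1/(n+1))·binom(2n, n). -/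
open scoped List


def DecAbove (t : ℕ) (l : List ℕ) : Prop :=
  (l.filter (fun x => t < x)).Pairwise (fun a b => ¬ a < b)

def Avoid (l : List ℕ) : Prop :=
  ∀ a ∈ l, ∀ b ∈ l, ∀ c ∈ l, [a,b,c] <+ l → a < b → b < c → False

instance : ∀ t, DecidablePred (DecAbove t) := fun t l => by unfold DecAbove; infer_instance
instance : DecidablePred Avoid := fun l => by unfold Avoid; infer_instance

lemma avoid_iff {l : List ℕ} :
    Avoid l ↔ ∀ a b c : ℕ, [a,b,c] <+ l → a < b → b < c → False := by
  constructor
  · intro h a b c hs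
    have hm := hs.subset
    exact h a (hm (by simp)) b (hm (by simp)) c (hm (by simp)) hs
  · intro h a _ b _ c _ hs
    exact h a b c hs

lemma decAbove_iff {t : ℕ} {l : List ℕ} :
    DecAbove t l ↔ l.Pairwise (fun a b => t < a → t < b → ¬ a < b) := by
  unfold DecAbove
  rw [List.pairwise_filter]
  simp only [decide_eq_true_eq]

lemma avoid_cons {k : ℕ} {l : List ℕ} :
    Avoid (k :: l) ↔ Avoid l ∧ DecAbove k l := by
  constructor
  · intro h
    refine ⟨avoid_iff.2 fun a b c hs => avoid_iff.1 h a b c (hs.cons k), ?_⟩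
    rw [decAbove_iff, List.pairwise_iff_forall_sublist]
    intro a b hs ha hb hab
    exact avoid_iff.1 h k a b ((List.cons_sublist_cons ..).2 hs) ha hab
  · rintro ⟨h1, h2⟩
    rw [avoid_iff]
    intro a b c hs hab hbc
    rcases List.sublist_cons_iff.1 hs with h | ⟨r, hr, hrs⟩
    · exact avoid_iff.1 h1 a b c h hab hbc
    · obtain rfl : a = k := by injection hr
      obtain rfl : r = [b, c] := by injection hr; tauto
      have := List.pairwise_iff_forall_sublist.1 (decAbove_iff.1 h2) hrs
      exact this hab (hab.trans hbc) hbc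

lemma decAbove_mono {k t : ℕ} {l : List ℕ} (hkt : k ≤ t) (h : DecAbove k l) :
    DecAbove t l := by
  rw [decAbove_iff] at h ⊢
  exact h.imp fun hab h1 h2 => hab (lt_of_le_of_lt hkt h1) (lt_of_le_of_lt hkt h2)

lemma decAbove_cons_of_le {t k : ℕ} {l : List ℕ} (h : k ≤ t) :
    DecAbove t (k :: l) ↔ DecAbove t l := by
  unfold DecAbove
  rw [List.filter_cons_of_neg (by simpa using h)]

lemma decAbove_cons_of_lt {t k : ℕ} {l : List ℕ} (h : t < k) :
    DecAbove t (k :: l) ↔ (∀ x ∈ l, t < x → ¬ k < x) ∧ DecAbove t l := by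
  unfold DecAbove
  rw [List.filter_cons_of_pos (by simpa using h), List.pairwise_cons]
  simp

lemma P_cons_le {t k : ℕ} {l : List ℕ} (h : k ≤ t) :
    (Avoid (k :: l) ∧ DecAbove t (k :: l)) ↔ (Avoid l ∧ DecAbove k l) := by
  rw [avoid_cons, decAbove_cons_of_le h, and_assoc]
  constructor
  · rintro ⟨h1, h2, _⟩; exact ⟨h1, h2⟩
  · rintro ⟨h1, h2⟩; exact ⟨h1, h2, decAbove_mono h h2⟩

lemma P_cons_gt {t k : ℕ} {l : List ℕ} (h : t < k) (hmax : ∀ x ∈ l, ¬ k < x) :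
    (Avoid (k :: l) ∧ DecAbove t (k :: l)) ↔ (Avoid l ∧ DecAbove t l) := by
  rw [avoid_cons, decAbove_cons_of_lt h]
  constructor
  · rintro ⟨⟨h1, _⟩, _, h2⟩; exact ⟨h1, h2⟩
  · rintro ⟨h1, h2⟩
    refine ⟨⟨h1, ?_⟩, fun x hx _ => hmax x hx, h2⟩
    unfold DecAbove
    have : l.filter (fun x => k < x) = [] := by
      rw [List.filter_eq_nil_iff]
      intro x hx
      simpa using hmax x hx
    rw [this]
    exact List.Pairwise.nil

lemma P_cons_bad {t k x : ℕ} {l : List ℕ} (h : t < k) (hx : x ∈ l) (hkx : k < x) :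
    ¬ (Avoid (k :: l) ∧ DecAbove t (k :: l)) := by
  rintro ⟨-, h2⟩
  exact ((decAbove_cons_of_lt h).1 h2).1 x hx (h.trans hkx) hkx

def permsF (S : Finset ℕ) : Finset (List ℕ) :=
  ⟨(↑((S.sort (· ≤ ·)).permutations) : Multiset (List ℕ)),
    by exact List.nodup_permutations _ (S.sort_nodup _)⟩

lemma mem_permsF {S : Finset ℕ} {l : List ℕ} :
    l ∈ permsF S ↔ l.Nodup ∧ l.toFinset = S := by
  show l ∈ (S.sort (· ≤ ·)).permutations ↔ _
  rw [List.mem_permutations]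
  constructor
  · intro h
    exact ⟨h.nodup_iff.2 (S.sort_nodup _), by rw [List.toFinset_eq_of_perm _ _ h, Finset.sort_toFinset]⟩
  · rintro ⟨h1, h2⟩
    exact List.perm_of_nodup_nodup_toFinset_eq h1 (S.sort_nodup _)
      (by rw [h2, Finset.sort_toFinset])

lemma length_of_mem_permsF {S : Finset ℕ} {l : List ℕ} (h : l ∈ permsF S) :
    l.length = S.card := by
  rw [mem_permsF] at h
  rw [← h.2, List.card_toFinset, h.1.dedup]

def g (S : Finset ℕ) (t : ℕ) : ℕ :=
  ((permsF S).filter (fun l => Avoid l ∧ DecAbove t l)).card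

lemma cons_mem_permsF {S : Finset ℕ} {k : ℕ} {l' : List ℕ} (hk : k ∈ S) :
    k :: l' ∈ permsF S ↔ l' ∈ permsF (S.erase k) := by
  rw [mem_permsF, mem_permsF, List.nodup_cons, List.toFinset_cons]
  constructor
  · rintro ⟨⟨hkl, h1⟩, h2⟩
    refine ⟨h1, ?_⟩
    rw [← h2, Finset.erase_insert (by simpa using hkl)]
  · rintro ⟨h1, h2⟩
    have hkl : k ∉ l' := by
      intro hmem
      have : k ∈ S.erase k := h2 ▸ List.mem_toFinset.2 hmem
      simp at this
    exact ⟨⟨hkl, h1⟩, by rw [h2, Finset.insert_erase hk]⟩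

lemma g_decomp {S : Finset ℕ} (hS : S.Nonempty) (t : ℕ) :
    g S t = ∑ k ∈ S, ((permsF (S.erase k)).filter
      (fun l' => Avoid (k :: l') ∧ DecAbove t (k :: l'))).card := by
  unfold g
  have hset : (permsF S).filter (fun l => Avoid l ∧ DecAbove t l) =
      S.biUnion (fun k => ((permsF (S.erase k)).filter
        (fun l' => Avoid (k :: l') ∧ DecAbove t (k :: l'))).image (k :: ·)) := by
    ext l
    simp only [Finset.mem_filter, Finset.mem_biUnion, Finset.mem_image]
    constructor
    · rintro ⟨hl, hP⟩
      have hlen : l.length = S.card := length_of_mem_permsF hl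
      have hpos : 0 < l.length := by rw [hlen]; exact hS.card_pos
      obtain ⟨k, l', rfl⟩ : ∃ k l', l = k :: l' := by
        cases l with
        | nil => simp at hpos
        | cons k l' => exact ⟨k, l', rfl⟩
      have hk : k ∈ S := by
        rw [← (mem_permsF.1 hl).2]
        simp
      exact ⟨k, hk, l', ⟨⟨(cons_mem_permsF hk).1 hl, hP⟩, rfl⟩⟩
    · rintro ⟨k, hk, l', hl', rfl⟩
      exact ⟨(cons_mem_permsF hk).2 hl'.1, hl'.2⟩
  rw [hset, Finset.card_biUnion]
  · exact Finset.sum_congr rfl fun k _ =>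
      Finset.card_image_of_injective _ (fun a b h => by injection h)
  · intro k₁ _ k₂ _ hne
    simp only [Finset.disjoint_left, Finset.mem_image]
    rintro l ⟨a, _, rfl⟩ ⟨b, _, hb⟩
    exact hne (by injection hb; tauto)

lemma c_eval {S : Finset ℕ} (k t : ℕ) :
    ((permsF (S.erase k)).filter
      (fun l' => Avoid (k :: l') ∧ DecAbove t (k :: l'))).card =
    if k ≤ t then g (S.erase k) k
    else if ∀ x ∈ S, ¬ k < x then g (S.erase k) t else 0 := by
  by_cases hkt : k ≤ t
  · rw [if_pos hkt]
    unfold g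
    congr 1
    exact Finset.filter_congr fun l' _ => P_cons_le hkt
  · rw [if_neg hkt]
    push_neg at hkt
    by_cases hmax : ∀ x ∈ S, ¬ k < x
    · rw [if_pos hmax]
      unfold g
      congr 1
      refine Finset.filter_congr fun l' hl' => ?_
      refine P_cons_gt hkt fun x hx => hmax x ?_
      have := (mem_permsF.1 hl').2
      have : x ∈ S.erase k := this ▸ List.mem_toFinset.2 hx
      exact Finset.mem_of_mem_erase this
    · rw [if_neg hmax]
      push_neg at hmax
      obtain ⟨x, hxS, hkx⟩ := hmax
      rw [Finset.card_eq_zero, Finset.filter_eq_empty_iff]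
      intro l' hl'
      have hx : x ∈ l' := by
        rw [← List.mem_toFinset, (mem_permsF.1 hl').2]
        exact Finset.mem_erase.2 ⟨fun h => absurd (h ▸ hkx) (lt_irrefl _), hxS⟩
      exact P_cons_bad hkt hx hkx

def G : ℕ → ℕ → ℕ
  | 0, _ => 1
  | n+1, j => (∑ i ∈ Finset.range j, G n i) + if j < n + 1 then G n j else 0

lemma G_zero (n : ℕ) : G n 0 = 1 := by
  cases n with
  | zero => rfl
  | succ n => simp [G, G_zero n]

lemma G_succ_succ {n j : ℕ} (hj : j ≤ n) :
    G (n+1) (j+1) = G (n+1) j + (if j + 1 < n + 1 then G n (j+1) else 0) := by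
  show (∑ i ∈ Finset.range (j+1), G n i) + _ = ((∑ i ∈ Finset.range j, G n i) + _) + _
  rw [Finset.sum_range_succ, if_pos (Nat.lt_succ_of_le hj)]

lemma G_formula : ∀ n : ℕ, ∀ j ≤ n, (n+1) * G n j = (n+1-j) * (n+j).choose j := by
  intro n
  induction n with
  | zero =>
    intro j hj
    interval_cases j
    simp [G]
  | succ n IH =>
    intro j hj
    induction j with
    | zero => simp [G_zero]
    | succ j IHj =>
      have hjn : j ≤ n := by omega
      have hstep := G_succ_succ hjn
      have hIHj := IHj (by omega)
      obtain ⟨a, rfl⟩ : ∃ a, n = j + a := ⟨n - j, by omega⟩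
      by_cases hcase : j + 1 ≤ j + a
      · have houter := IH (j+1) hcase
        rw [if_pos (by omega)] at hstep
        apply Nat.eq_of_mul_eq_mul_left (show 0 < (j + a + 1) by omega)
        rw [hstep]
        have pascal : ((j+a+1)+(j+1)).choose (j+1)
            = ((j+a+1)+j).choose j + ((j+a+1)+j).choose (j+1) := by
          rw [show (j+a+1)+(j+1) = ((j+a+1)+j)+1 by omega, Nat.choose_succ_succ]
        have key : ((j+a+1)+j).choose (j+1) * (j+1)
            = ((j+a+1)+j).choose j * (j+a+1) := by
          rw [Nat.choose_succ_right_eq]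
          congr 1
          omega
        rw [pascal]
        have e1 : j + a + 1 + 1 - (j + 1) = a + 1 := by omega
        have e2 : j + a + 1 + 1 - j = a + 2 := by omega
        have e3 : j + a + 1 - (j + 1) = a := by omega
        rw [e1]
        rw [e2] at hIHj
        rw [e3] at houter
        rw [show j + a + (j+1) = j + a + 1 + j by omega] at houter
        zify at hIHj houter key ⊢
        linear_combination (((j:ℤ)+a+1)) * hIHj + ((j:ℤ)+a+2) * houter - key
      · have hja : a = 0 := by omega
        subst hja
        rw [if_neg (by omega)] at hstep
        have e2 : j + 0 + 1 + 1 - j = 2 := by omega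
        rw [e2] at hIHj
        have sym : ((j+0+1)+(j+1)).choose (j+1)
            = 2 * ((j+0+1)+j).choose j := by
          rw [show (j+0+1)+(j+1) = ((2*j+1))+1 by omega, Nat.choose_succ_succ]
          have : (2*j+1).choose (j+1) = (2*j+1).choose j := by
            rw [show j+1 = 2*j+1-j by omega]
            exact Nat.choose_symm (by omega)
          rw [show (j+0+1)+j = 2*j+1 by omega, this]
          omega
        rw [sym]
        have : j + 0 + 1 + 1 - (j + 1) = 1 := by omega
        rw [this, one_mul, hstep]
        zify at hIHj ⊢
        linear_combination hIHj

lemma rank_lt_rank {T : Finset ℕ} {k₁ k₂ : ℕ} (h₁ : k₁ ∈ T) (h : k₁ < k₂) :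
    (T.filter (fun x => x < k₁)).card < (T.filter (fun x => x < k₂)).card := by
  apply Finset.card_lt_card
  constructor
  · intro x hx
    rw [Finset.mem_filter] at hx ⊢
    exact ⟨hx.1, lt_trans hx.2 h⟩
  · intro hsub
    have := hsub (Finset.mem_filter.2 ⟨h₁, h⟩)
    simp at this

lemma rank_injOn {T : Finset ℕ} {k₁ k₂ : ℕ} (h₁ : k₁ ∈ T) (h₂ : k₂ ∈ T)
    (heq : (T.filter (fun x => x < k₁)).card = (T.filter (fun x => x < k₂)).card) : k₁ = k₂ := by
  rcases lt_trichotomy k₁ k₂ with h | h | h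
  · have := rank_lt_rank h₁ h; omega
  · exact h
  · have := rank_lt_rank h₂ h; omega

lemma sum_rank {M : Type*} [AddCommMonoid M] (T : Finset ℕ) (f : ℕ → M) :
    ∑ k ∈ T, f ((T.filter (fun x => x < k)).card) = ∑ i ∈ Finset.range T.card, f i := by
  apply Finset.sum_bij (fun k _ => (T.filter (fun x => x < k)).card)
  · intro k hk
    rw [Finset.mem_range]
    apply Finset.card_lt_card
    exact ⟨Finset.filter_subset _ _, fun hsub => by have := hsub hk; simp at this⟩
  · intro k₁ h₁ k₂ h₂ heq
    exact rank_injOn h₁ h₂ heq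
  · intro b hb
    have := Finset.surj_on_of_inj_on_of_card_le (s := T) (t := Finset.range T.card)
      (fun k _ => (T.filter (fun x => x < k)).card)
      (fun k hk => by
        rw [Finset.mem_range]
        apply Finset.card_lt_card
        exact ⟨Finset.filter_subset _ _, fun hsub => by have := hsub hk; simp at this⟩)
      (fun k₁ k₂ h₁ h₂ heq => rank_injOn h₁ h₂ heq)
      (by rw [Finset.card_range]) b hb
    obtain ⟨a, ha, hab⟩ := this
    exact ⟨a, ha, hab.symm⟩
  · intro k hk
    rfl

lemma g_empty (t : ℕ) : g ∅ t = 1 := by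
  unfold g
  have h1 : permsF ∅ = {[]} := by
    ext l
    rw [mem_permsF]
    simp [List.toFinset_eq_empty_iff]
    exact fun h => h ▸ List.nodup_nil
  rw [h1]
  rw [Finset.filter_singleton, if_pos]
  · simp
  · constructor
    · intro a ha; simp at ha
    · unfold DecAbove; simp

lemma g_eq : ∀ (n : ℕ) (S : Finset ℕ), S.card = n → ∀ t,
    g S t = G n ((S.filter (fun x => x ≤ t)).card) := by
  intro n
  induction n with
  | zero =>
    intro S hcard t
    rw [Finset.card_eq_zero] at hcard
    subst hcard
    rw [g_empty]
    simp [G]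
  | succ n IH =>
    intro S hcard t
    have hS : S.Nonempty := by rw [← Finset.card_pos, hcard]; omega
    rw [g_decomp hS t, Finset.sum_congr rfl (fun k hk => c_eval k t)]
    rw [← Finset.sum_filter_add_sum_filter_not S (fun k => k ≤ t)]
    set T := S.filter (fun x => x ≤ t) with hT
    set U := S.filter (fun x => ¬ x ≤ t) with hU
    have hTU : T.card + U.card = S.card := Finset.card_filter_add_card_filter_not _
    -- first sum
    have hsum1 : ∑ k ∈ T, (if k ≤ t then g (S.erase k) k
        else if ∀ x ∈ S, ¬ k < x then g (S.erase k) t else 0)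
        = ∑ i ∈ Finset.range T.card, G n i := by
      rw [← sum_rank T (fun i => G n i)]
      apply Finset.sum_congr rfl
      intro k hk
      rw [hT, Finset.mem_filter] at hk
      rw [if_pos hk.2]
      have hek : (S.erase k).card = n := by
        rw [Finset.card_erase_of_mem hk.1, hcard]
        omega
      rw [IH _ hek k]
      congr 2
      ext x
      rw [Finset.mem_filter, Finset.mem_filter, Finset.mem_erase, hT, Finset.mem_filter]
      constructor
      · rintro ⟨⟨hxk, hxS⟩, hxle⟩
        exact ⟨⟨hxS, le_trans hxle hk.2⟩, lt_of_le_of_ne hxle hxk⟩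
      · rintro ⟨⟨hxS, _⟩, hxlt⟩
        exact ⟨⟨Nat.ne_of_lt hxlt, hxS⟩, le_of_lt hxlt⟩
    rw [hsum1]
    -- second sum
    by_cases hUe : U = ∅
    · have hj : T.card = n + 1 := by
        rw [hUe] at hTU; simpa [hcard] using hTU
      rw [hUe, Finset.sum_empty, hj]
      show _ + 0 = G (n+1) (n+1)
      show _ = (∑ i ∈ Finset.range (n+1), G n i) + if n + 1 < n + 1 then G n (n+1) else 0
      rw [if_neg (by omega)]
    · have hUne : U.Nonempty := Finset.nonempty_of_ne_empty hUe
      have hjlt : T.card < n + 1 := by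
        have : 0 < U.card := Finset.card_pos.2 hUne
        omega
      set m := S.max' hS with hm
      have hmS : m ∈ S := S.max'_mem hS
      have hmax : ∀ x ∈ S, ¬ m < x := fun x hx => not_lt.2 (S.le_max' x hx)
      have htm : t < m := by
        obtain ⟨u, hu⟩ := hUne
        rw [hU, Finset.mem_filter] at hu
        exact lt_of_lt_of_le (by omega) (S.le_max' u hu.1)
      have hmU : m ∈ U := by
        rw [hU, Finset.mem_filter]
        exact ⟨hmS, by omega⟩
      have hsum2 : ∑ k ∈ U, (if k ≤ t then g (S.erase k) k
          else if ∀ x ∈ S, ¬ k < x then g (S.erase k) t else 0) = G n T.card := by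
        rw [Finset.sum_eq_single_of_mem m hmU]
        · rw [if_neg (by omega), if_pos hmax]
          have hek : (S.erase m).card = n := by
            rw [Finset.card_erase_of_mem hmS, hcard]
            omega
          rw [IH _ hek t]
          congr 2
          ext x
          rw [Finset.mem_filter, Finset.mem_erase, hT, Finset.mem_filter]
          constructor
          · rintro ⟨⟨_, hxS⟩, hxle⟩; exact ⟨hxS, hxle⟩
          · rintro ⟨hxS, hxle⟩
            exact ⟨⟨by omega, hxS⟩, hxle⟩
        · intro k hkU hkm
          rw [hU, Finset.mem_filter] at hkU
          rw [if_neg hkU.2, if_neg]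
          push_neg
          refine ⟨m, hmS, ?_⟩
          have : k ≤ m := S.le_max' k hkU.1
          omega
      rw [hsum2]
      rw [show G (n+1) T.card = (∑ i ∈ Finset.range T.card, G n i)
        + (if T.card < n + 1 then G n T.card else 0) from rfl, if_pos hjlt]

lemma triple_sublist_range {i j k n : ℕ} (hij : i < j) (hjk : j < k) (hkn : k < n) :
    [i, j, k] <+ List.range n := by
  have h1 : [i] <+ List.range (i+1) := by
    rw [List.range_succ]
    exact List.sublist_append_right _ _
  have h2 : [i, j] <+ List.range (j+1) := by
    rw [List.range_succ]
    exact (h1.trans (List.range_sublist.2 hij)).append (List.Sublist.refl [j])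
  have h3 : [i, j, k] <+ List.range (k+1) := by
    rw [List.range_succ]
    exact (h2.trans (List.range_sublist.2 hjk)).append (List.Sublist.refl [k])
  exact h3.trans (List.range_sublist.2 hkn)

lemma avoid_map_range_iff {n : ℕ} {f : ℕ → ℕ} :
    Avoid ((List.range n).map f) ↔
      ∀ i j k : ℕ, i < j → j < k → k < n → ¬(f i < f j ∧ f j < f k) := by
  constructor
  · intro h i j k hij hjk hkn ⟨h1, h2⟩
    have hs : [f i, f j, f k] <+ (List.range n).map f :=
      (triple_sublist_range hij hjk hkn).map f
    exact avoid_iff.1 h _ _ _ hs h1 h2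
  · intro h
    rw [avoid_iff]
    intro a b c hs hab hbc
    obtain ⟨is, his, hpw⟩ := List.sublist_eq_map_getElem hs
    have hlen : is.length = 3 := by
      have := congrArg List.length his
      simpa using this.symm
    match is, hlen with
    | [i, j, k], _ =>
      simp only [List.map_cons, List.map_nil, List.cons.injEq, and_true] at his
      obtain ⟨ha, hb, hc⟩ := his
      rw [List.pairwise_cons, List.pairwise_cons] at hpw
      have hij : (i : ℕ) < j := hpw.1 j (by simp)
      have hjk : (j : ℕ) < k := hpw.2.1 k (by simp)
      have hkn : (k : ℕ) < n := by
        have := k.isLt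
        simpa using this
      have hgi : ((List.range n).map f)[i] = f i := by
        simp
      have hgj : ((List.range n).map f)[j] = f j := by
        simp
      have hgk : ((List.range n).map f)[k] = f k := by
        simp
      refine h i j k hij hjk hkn ?_
      rw [← hgi, ← hgj, ← hgk, ← ha, ← hb, ← hc]
      exact ⟨hab, hbc⟩

def fnOf (n : ℕ) (w : Equiv.Perm (Fin n)) : ℕ → ℕ :=
  fun m => if h : m < n then (w ⟨m, h⟩ : ℕ) else 0

def listOf (n : ℕ) (w : Equiv.Perm (Fin n)) : List ℕ := (List.range n).map (fnOf n w)

lemma strictMonoOn_triple {n : ℕ} (w : Equiv.Perm (Fin n)) {i j k : Fin n}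
    (hij : i < j) (hjk : j < k) (h1 : w i < w j) (h2 : w j < w k) :
    StrictMonoOn w ↑({i, j, k} : Finset (Fin n)) := by
  intro x hx y hy hxy
  simp only [Finset.coe_insert, Set.mem_insert_iff, Finset.coe_singleton,
    Set.mem_singleton_iff] at hx hy
  rcases hx with rfl | rfl | rfl <;> rcases hy with rfl | rfl | rfl
  · exact absurd hxy (lt_irrefl _)
  · exact h1
  · exact h1.trans h2
  · exact absurd hxy (lt_asymm hij)
  · exact absurd hxy (lt_irrefl _)
  · exact h2
  · exact absurd hxy (lt_asymm (hij.trans hjk))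
  · exact absurd hxy (lt_asymm hjk)
  · exact absurd hxy (lt_irrefl _)

lemma isLen_le_two_iff {n : ℕ} (w : Equiv.Perm (Fin n)) :
    isLen n w ≤ 2 ↔ Avoid (listOf n w) := by
  have hchar : isLen n w ≤ 2 ↔
      ∀ s : Finset (Fin n), StrictMonoOn w ↑s → s.card ≤ 2 := by
    unfold isLen
    rw [Finset.sup_le_iff]
    constructor
    · intro h s hs
      exact h s (Finset.mem_filter.2 ⟨Finset.mem_powerset.2 (Finset.subset_univ s), hs⟩)
    · intro h s hs
      exact h s (Finset.mem_filter.1 hs).2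
  rw [hchar]
  unfold listOf
  rw [avoid_map_range_iff]
  constructor
  · intro h i j k hij hjk hkn ⟨hv1, hv2⟩
    have hjn : j < n := hjk.trans hkn
    have hin : i < n := hij.trans hjn
    simp only [fnOf, dif_pos hin, dif_pos hjn, dif_pos hkn] at hv1 hv2
    set i' : Fin n := ⟨i, hin⟩
    set j' : Fin n := ⟨j, hjn⟩
    set k' : Fin n := ⟨k, hkn⟩
    have hw1 : w i' < w j' := hv1
    have hw2 : w j' < w k' := hv2
    have hsm := strictMonoOn_triple w (show i' < j' from hij) (show j' < k' from hjk) hw1 hw2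
    have hcard : ({i', j', k'} : Finset (Fin n)).card = 3 := by
      rw [Finset.card_insert_of_notMem, Finset.card_insert_of_notMem, Finset.card_singleton]
      · simp only [Finset.mem_singleton]
        intro hh
        have : j = k := congrArg Fin.val hh
        omega
      · simp only [Finset.mem_insert, Finset.mem_singleton]
        push_neg
        refine ⟨fun hh => ?_, fun hh => ?_⟩
        · have : i = j := congrArg Fin.val hh
          omega
        · have : i = k := congrArg Fin.val hh
          omega
    have := h _ hsm
    omega
  · intro h s hs
    by_contra hc
    push_neg at hc
    obtain ⟨t, hts, htc⟩ := Finset.exists_subset_card_eq (show 3 ≤ s.card from hc)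
    have e := t.orderIsoOfFin htc
    set i' := e ⟨0, by omega⟩
    set j' := e ⟨1, by omega⟩
    set k' := e ⟨2, by omega⟩
    have hij : (i' : Fin n) < j' := by
      have := e.strictMono (show (⟨0, by omega⟩ : Fin 3) < ⟨1, by omega⟩ from by simp)
      exact this
    have hjk : (j' : Fin n) < k' := by
      have := e.strictMono (show (⟨1, by omega⟩ : Fin 3) < ⟨2, by omega⟩ from by simp)
      exact this
    have hmi : (i' : Fin n) ∈ s := hts i'.2
    have hmj : (j' : Fin n) ∈ s := hts j'.2
    have hmk : (k' : Fin n) ∈ s := hts k'.2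
    have hw1 : w i' < w j' := hs hmi hmj hij
    have hw2 : w j' < w k' := hs hmj hmk hjk
    refine h (i' : Fin n).val (j' : Fin n).val (k' : Fin n).val hij hjk (k' : Fin n).isLt ?_
    simp only [fnOf, dif_pos (i' : Fin n).isLt, dif_pos (j' : Fin n).isLt,
      dif_pos (k' : Fin n).isLt, Fin.eta]
    exact ⟨hw1, hw2⟩

lemma listOf_nodup (n : ℕ) (w : Equiv.Perm (Fin n)) : (listOf n w).Nodup := by
  refine List.Nodup.map_on ?_ List.nodup_range
  intro x hx y hy hxy
  rw [List.mem_range] at hx hy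
  simp only [fnOf, dif_pos hx, dif_pos hy] at hxy
  have : (⟨x, hx⟩ : Fin n) = ⟨y, hy⟩ := w.injective (Fin.val_injective hxy)
  exact congrArg Fin.val this

lemma listOf_toFinset (n : ℕ) (w : Equiv.Perm (Fin n)) :
    (listOf n w).toFinset = Finset.range n := by
  ext m
  rw [List.mem_toFinset, Finset.mem_range]
  unfold listOf
  rw [List.mem_map]
  constructor
  · rintro ⟨a, ha, rfl⟩
    rw [List.mem_range] at ha
    simp only [fnOf, dif_pos ha]
    exact (w ⟨a, ha⟩).isLt
  · intro hm
    refine ⟨(w.symm ⟨m, hm⟩).val, List.mem_range.2 (w.symm ⟨m, hm⟩).isLt, ?_⟩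
    simp only [fnOf, dif_pos (w.symm ⟨m, hm⟩).isLt, Fin.eta, Equiv.apply_symm_apply]

lemma listOf_decAbove (n : ℕ) (w : Equiv.Perm (Fin n)) : DecAbove n (listOf n w) := by
  unfold DecAbove
  have : (listOf n w).filter (fun x => n < x) = [] := by
    rw [List.filter_eq_nil_iff]
    intro x hx
    have : x ∈ (listOf n w).toFinset := List.mem_toFinset.2 hx
    rw [listOf_toFinset, Finset.mem_range] at this
    simpa using by omega
  rw [this]
  exact List.Pairwise.nil

lemma perm_card_eq (n : ℕ) :
    ((Finset.univ : Finset (Equiv.Perm (Fin n))).filter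
      fun w => isLen n w ≤ 2).card = g (Finset.range n) n := by
  unfold g
  apply Finset.card_bij (fun w _ => listOf n w)
  · intro w hw
    rw [Finset.mem_filter] at hw ⊢
    refine ⟨mem_permsF.2 ⟨listOf_nodup n w, listOf_toFinset n w⟩,
      (isLen_le_two_iff w).1 hw.2, listOf_decAbove n w⟩
  · intro w₁ h₁ w₂ h₂ heq
    unfold listOf at heq
    have := List.map_inj_left.1 heq
    ext i
    have hv := this i.val (List.mem_range.2 i.isLt)
    simpa only [fnOf, dif_pos i.isLt, Fin.eta] using hv
  · intro l hl
    rw [Finset.mem_filter] at hl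
    obtain ⟨hmem, hav, _⟩ := hl
    obtain ⟨hnd, htf⟩ := mem_permsF.1 hmem
    have hlen : l.length = n := by
      have := congrArg Finset.card htf
      rw [List.toFinset_card_of_nodup hnd, Finset.card_range] at this
      exact this
    have hbound : ∀ m (h : m < l.length), l[m] < n := by
      intro m h
      have : l[m] ∈ l.toFinset := List.mem_toFinset.2 (l.getElem_mem h)
      rw [htf, Finset.mem_range] at this
      exact this
    set f0 : Fin n → Fin n := fun i => ⟨l[i.val]'(by omega), hbound _ _⟩ with hf0
    have hinj : Function.Injective f0 := by
      intro a b hab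
      have : l[a.val]'(by omega) = l[b.val]'(by omega) := congrArg Fin.val hab
      have := (List.Nodup.getElem_inj_iff hnd).1 this
      exact Fin.val_injective this
    set w : Equiv.Perm (Fin n) := Equiv.ofBijective f0 (Finite.injective_iff_bijective.1 hinj)
      with hwdef
    have hlw : listOf n w = l := by
      apply List.ext_getElem
      · simp [listOf, hlen]
      · intro m h1 h2
        simp only [listOf, List.getElem_map, List.getElem_range]
        have hmn : m < n := by simpa [listOf] using h1
        simp only [fnOf, dif_pos hmn]
        show (w ⟨m, hmn⟩).val = _
        rw [hwdef]
        simp [Equiv.ofBijective, f0]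
    refine ⟨w, Finset.mem_filter.2 ⟨Finset.mem_univ w, ?_⟩, hlw⟩
    rw [isLen_le_two_iff w, hlw]
    exact hav

open scoped Classical in
/-- The number of permutations in `S_n` with no increasing subsequence of length 3
equals the Catalan number `C_n = (2n).choose n / (n+1)`. -/
theorem card_isLen_le_two_eq_catalan (n : ℕ) :
    ((Finset.univ : Finset (Equiv.Perm (Fin n))).filter
      fun w => isLen n w ≤ 2).card = (2 * n).choose n / (n + 1) := by
  rw [perm_card_eq n]
  rw [g_eq n (Finset.range n) (Finset.card_range n) n]
  have hfil : (Finset.range n).filter (fun x => x ≤ n) = Finset.range n := by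
    apply Finset.filter_true_of_mem
    intro x hx
    rw [Finset.mem_range] at hx
    omega
  rw [hfil, Finset.card_range]
  have hf := G_formula n n le_rfl
  rw [show n + 1 - n = 1 by omega, one_mul, show n + n = 2 * n by ring] at hf
  rw [← hf, Nat.mul_div_cancel_left _ (by omega : 0 < n + 1)]
end

section
/- The number of 312-avoiding permutations in S_n equals the Catalan number C_n. -/
open scoped Classical

set_option maxHeartbeats 1000000

namespace Avoid312

open Equiv Finset

def Avoids {n : ℕ} (w : Equiv.Perm (Fin n)) : Prop :=
  ¬ ∃ i j k : Fin n, i < j ∧ j < k ∧ w j < w k ∧ w k < w i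

noncomputable def P (n : ℕ) : Finset (Equiv.Perm (Fin n)) :=
  (Finset.univ : Finset (Equiv.Perm (Fin n))).filter
    fun w => ¬ ∃ i j k : Fin n, i < j ∧ j < k ∧ w j < w k ∧ w k < w i

lemma mem_P {n : ℕ} {w : Equiv.Perm (Fin n)} : w ∈ P n ↔ Avoids w := by
  rw [P, Finset.mem_filter]
  exact ⟨fun h => h.2, fun h => ⟨Finset.mem_univ _, h⟩⟩

variable {n j : ℕ}

def glueFun (n j : ℕ) (hj : j ≤ n) (u : Perm (Fin j)) (v : Perm (Fin (n - j)))
    (i : Fin (n + 1)) : Fin (n + 1) :=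
  if h : (i : ℕ) < j then ⟨(u ⟨i, h⟩ : ℕ) + 1, by have := (u ⟨i, h⟩).isLt; omega⟩
  else if h2 : (i : ℕ) = j then ⟨0, by omega⟩
  else ⟨j + 1 + (v ⟨(i : ℕ) - (j + 1), by have := i.isLt; omega⟩ : ℕ), by
    have := (v ⟨(i : ℕ) - (j + 1), by have := i.isLt; omega⟩).isLt; omega⟩

lemma glueFun_val_lt (hj : j ≤ n) (u : Perm (Fin j)) (v : Perm (Fin (n - j)))
    (i : Fin (n + 1)) (h : (i : ℕ) < j) :
    (glueFun n j hj u v i : ℕ) = (u ⟨i, h⟩ : ℕ) + 1 := by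
  simp [glueFun, h]

lemma glueFun_val_eq (hj : j ≤ n) (u : Perm (Fin j)) (v : Perm (Fin (n - j)))
    (i : Fin (n + 1)) (h : (i : ℕ) = j) :
    (glueFun n j hj u v i : ℕ) = 0 := by
  unfold glueFun; rw [dif_neg (by omega), dif_pos h]

lemma glueFun_val_gt (hj : j ≤ n) (u : Perm (Fin j)) (v : Perm (Fin (n - j)))
    (i : Fin (n + 1)) (h : j < (i : ℕ)) (h2 : (i : ℕ) - (j + 1) < n - j) :
    (glueFun n j hj u v i : ℕ) = j + 1 + (v ⟨(i : ℕ) - (j + 1), h2⟩ : ℕ) := by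
  unfold glueFun; rw [dif_neg (by omega), dif_neg (by omega)]

lemma glueFun_injective (hj : j ≤ n) (u : Perm (Fin j)) (v : Perm (Fin (n - j))) :
    Function.Injective (glueFun n j hj u v) := by
  intro x y hxy
  have hx := x.isLt; have hy := y.isLt
  have hxy' : (glueFun n j hj u v x : ℕ) = (glueFun n j hj u v y : ℕ) := congrArg Fin.val hxy
  rcases lt_trichotomy (x : ℕ) j with hxj | hxj | hxj <;>
    rcases lt_trichotomy (y : ℕ) j with hyj | hyj | hyj
  · rw [glueFun_val_lt hj u v x hxj, glueFun_val_lt hj u v y hyj] at hxy'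
    have h1 : (u ⟨(x : ℕ), hxj⟩ : Fin j) = u ⟨(y : ℕ), hyj⟩ := Fin.ext (by omega)
    have h2 := u.injective h1
    have h3 : (x : ℕ) = (y : ℕ) := by simpa using h2
    exact Fin.ext h3
  · rw [glueFun_val_lt hj u v x hxj, glueFun_val_eq hj u v y hyj] at hxy'; omega
  · rw [glueFun_val_lt hj u v x hxj, glueFun_val_gt hj u v y hyj (by omega)] at hxy'
    have := (u ⟨(x : ℕ), hxj⟩).isLt; omega
  · rw [glueFun_val_eq hj u v x hxj, glueFun_val_lt hj u v y hyj] at hxy'; omega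
  · exact Fin.ext (by omega)
  · rw [glueFun_val_eq hj u v x hxj, glueFun_val_gt hj u v y hyj (by omega)] at hxy'; omega
  · rw [glueFun_val_gt hj u v x hxj (by omega), glueFun_val_lt hj u v y hyj] at hxy'
    have := (u ⟨(y : ℕ), hyj⟩).isLt; omega
  · rw [glueFun_val_gt hj u v x hxj (by omega), glueFun_val_eq hj u v y hyj] at hxy'; omega
  · rw [glueFun_val_gt hj u v x hxj (by omega), glueFun_val_gt hj u v y hyj (by omega)] at hxy'
    have h1 : (v ⟨(x : ℕ) - (j + 1), by omega⟩ : Fin (n - j)) = v ⟨(y : ℕ) - (j + 1), by omega⟩ :=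
      Fin.ext (by omega)
    have h2 := v.injective h1
    have h3 : (x : ℕ) - (j + 1) = (y : ℕ) - (j + 1) := by simpa using h2
    exact Fin.ext (by omega)

noncomputable def glue (n j : ℕ) (hj : j ≤ n) (u : Perm (Fin j)) (v : Perm (Fin (n - j))) :
    Perm (Fin (n + 1)) :=
  Equiv.ofBijective _ (Finite.injective_iff_bijective.mp (glueFun_injective hj u v))

lemma glue_val_lt (hj : j ≤ n) (u : Perm (Fin j)) (v : Perm (Fin (n - j)))
    (i : Fin (n + 1)) (h : (i : ℕ) < j) :
    ((glue n j hj u v) i : ℕ) = (u ⟨i, h⟩ : ℕ) + 1 :=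
  glueFun_val_lt hj u v i h

lemma glue_val_eq (hj : j ≤ n) (u : Perm (Fin j)) (v : Perm (Fin (n - j)))
    (i : Fin (n + 1)) (h : (i : ℕ) = j) :
    ((glue n j hj u v) i : ℕ) = 0 :=
  glueFun_val_eq hj u v i h

lemma glue_val_gt (hj : j ≤ n) (u : Perm (Fin j)) (v : Perm (Fin (n - j)))
    (i : Fin (n + 1)) (h : j < (i : ℕ)) (h2 : (i : ℕ) - (j + 1) < n - j) :
    ((glue n j hj u v) i : ℕ) = j + 1 + (v ⟨(i : ℕ) - (j + 1), h2⟩ : ℕ) :=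
  glueFun_val_gt hj u v i h h2


lemma avoids_glue (hj : j ≤ n) (u : Perm (Fin j)) (v : Perm (Fin (n - j)))
    (hu : Avoids u) (hv : Avoids v) : Avoids (glue n j hj u v) := by
  rintro ⟨a, b, c, hab, hbc, h1, h2⟩
  rw [Fin.lt_def] at hab hbc h1 h2
  have hc' := c.isLt
  have ha' := a.isLt
  rcases lt_trichotomy (b : ℕ) j with hb | hb | hb
  · have ha : (a : ℕ) < j := by omega
    rcases lt_trichotomy (c : ℕ) j with hc | hc | hc
    · rw [glue_val_lt hj u v b hb, glue_val_lt hj u v c hc] at h1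
      rw [glue_val_lt hj u v c hc, glue_val_lt hj u v a ha] at h2
      exact hu ⟨⟨a, ha⟩, ⟨b, hb⟩, ⟨c, hc⟩, Fin.mk_lt_mk.mpr hab, Fin.mk_lt_mk.mpr hbc,
        Fin.lt_def.mpr (by omega), Fin.lt_def.mpr (by omega)⟩
    · rw [glue_val_lt hj u v b hb, glue_val_eq hj u v c hc] at h1; omega
    · rw [glue_val_lt hj u v a ha, glue_val_gt hj u v c hc (by omega)] at h2
      have := (u ⟨(a : ℕ), ha⟩).isLt; omega
  · have ha : (a : ℕ) < j := by omega
    have hc : j < (c : ℕ) := by omega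
    rw [glue_val_lt hj u v a ha, glue_val_gt hj u v c hc (by omega)] at h2
    have := (u ⟨(a : ℕ), ha⟩).isLt; omega
  · have hc : j < (c : ℕ) := by omega
    rcases lt_trichotomy (a : ℕ) j with ha | ha | ha
    · rw [glue_val_lt hj u v a ha, glue_val_gt hj u v c hc (by omega)] at h2
      have := (u ⟨(a : ℕ), ha⟩).isLt; omega
    · rw [glue_val_eq hj u v a ha, glue_val_gt hj u v c hc (by omega)] at h2; omega
    · have pb : (b : ℕ) - (j + 1) < n - j := by omega
      have pc : (c : ℕ) - (j + 1) < n - j := by omega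
      have pa : (a : ℕ) - (j + 1) < n - j := by omega
      rw [glue_val_gt hj u v b hb pb] at h1
      rw [glue_val_gt hj u v c hc pc] at h1
      rw [glue_val_gt hj u v c hc pc] at h2
      rw [glue_val_gt hj u v a ha pa] at h2
      exact hv ⟨⟨(a : ℕ) - (j + 1), by omega⟩, ⟨(b : ℕ) - (j + 1), by omega⟩,
        ⟨(c : ℕ) - (j + 1), by omega⟩, Fin.mk_lt_mk.mpr (by omega), Fin.mk_lt_mk.mpr (by omega),
        Fin.lt_def.mpr (by omega), Fin.lt_def.mpr (by omega)⟩

lemma val_le_of_lt (w : Perm (Fin (n + 1))) (j : Fin (n + 1)) (hw : Avoids w)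
    (h0 : w j = 0) (i : Fin (n + 1)) (hij : i < j) :
    1 ≤ (w i : ℕ) ∧ (w i : ℕ) ≤ (j : ℕ) := by
  have h0' : (w j : ℕ) = 0 := by rw [h0]; rfl
  constructor
  · by_contra h
    have hz : (w i : ℕ) = 0 := by omega
    have hz' : w i = 0 := Fin.ext (by simp [hz])
    exact Fin.ne_of_lt hij (w.injective (hz'.trans h0.symm))
  · by_contra h
    push_neg at h
    have step : ∀ k : Fin (n + 1), j < k → (w i : ℕ) < (w k : ℕ) := by
      intro k hk
      by_contra hle
      push_neg at hle
      have hk0 : (w k : ℕ) ≠ 0 := by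
        intro e
        exact Fin.ne_of_lt hk (w.injective ((Fin.ext (by simp [e, h0'])).trans rfl) |>.symm)
      have hki : (w k : ℕ) ≠ (w i : ℕ) := by
        intro e
        have := w.injective (Fin.ext e)
        have h1 : i < k := lt_trans hij hk
        exact Fin.ne_of_lt h1 this.symm
      exact hw ⟨i, j, k, hij, hk, Fin.lt_def.mpr (by omega), Fin.lt_def.mpr (by omega)⟩
    have hcard := Finset.card_le_card_of_injOn (fun a => w.symm a)
      (fun a ha => ?_) (w.symm.injective.injOn) (s := Finset.Iic (w i)) (t := Finset.Iic j)
    · rw [Fin.card_Iic, Fin.card_Iic] at hcard; omega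
    · rw [Finset.mem_coe, Finset.mem_Iic] at ha ⊢
      by_contra hnot
      have hlt : j < w.symm a := lt_of_not_ge hnot
      have := step _ hlt
      rw [Equiv.apply_symm_apply] at this
      rw [Fin.le_def] at ha
      omega

lemma val_gt_of_gt (w : Perm (Fin (n + 1))) (j : Fin (n + 1)) (hw : Avoids w)
    (h0 : w j = 0) (k : Fin (n + 1)) (hjk : j < k) : (j : ℕ) < (w k : ℕ) := by
  by_contra h
  push_neg at h
  have h0' : (w j : ℕ) = 0 := by rw [h0]; rfl
  have hmaps : ∀ p ∈ insert k (Finset.Iic j), w p ∈ Finset.Iic j := by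
    intro p hp
    rw [Finset.mem_insert, Finset.mem_Iic] at hp
    rw [Finset.mem_Iic, Fin.le_def]
    rcases hp with rfl | hp
    · exact h
    · rcases eq_or_lt_of_le hp with rfl | hp'
      · omega
      · exact (val_le_of_lt w j hw h0 p hp').2
  have hcard := Finset.card_le_card_of_injOn w hmaps (w.injective.injOn)
  rw [Finset.card_insert_of_notMem (by rw [Finset.mem_Iic]; exact not_le.mpr hjk),
    Fin.card_Iic] at hcard
  omega


def posU {n : ℕ} (j : Fin (n + 1)) (a : Fin (j : ℕ)) : Fin (n + 1) :=
  ⟨(a : ℕ), by have := a.isLt; have := j.isLt; omega⟩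

def posV {n : ℕ} (j : Fin (n + 1)) (b : Fin (n - (j : ℕ))) : Fin (n + 1) :=
  ⟨(j : ℕ) + 1 + (b : ℕ), by have := b.isLt; have := j.isLt; omega⟩

lemma posU_lt {n : ℕ} (j : Fin (n + 1)) (a : Fin (j : ℕ)) : posU j a < j :=
  Fin.lt_def.mpr a.isLt

lemma lt_posV {n : ℕ} (j : Fin (n + 1)) (b : Fin (n - (j : ℕ))) : j < posV j b :=
  Fin.lt_def.mpr (by simp [posV]; omega)

noncomputable def splitU (w : Perm (Fin (n + 1))) (j : Fin (n + 1)) (hw : Avoids w)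
    (h0 : w j = 0) : Perm (Fin (j : ℕ)) :=
  Equiv.ofBijective
    (fun a => ⟨(w (posU j a) : ℕ) - 1, by
      have h := val_le_of_lt w j hw h0 (posU j a) (posU_lt j a); omega⟩)
    (Finite.injective_iff_bijective.mp (by
      intro a b hab
      have hab' : (w (posU j a) : ℕ) - 1 = (w (posU j b) : ℕ) - 1 := by
        have := congrArg Fin.val hab; simpa using this
      have ha := val_le_of_lt w j hw h0 (posU j a) (posU_lt j a)
      have hb := val_le_of_lt w j hw h0 (posU j b) (posU_lt j b)
      have : posU j a = posU j b := w.injective (Fin.ext (by omega))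
      have hv : (a : ℕ) = (b : ℕ) := by simpa [posU] using congrArg Fin.val this
      exact Fin.ext hv))

noncomputable def splitV (w : Perm (Fin (n + 1))) (j : Fin (n + 1)) (hw : Avoids w)
    (h0 : w j = 0) : Perm (Fin (n - (j : ℕ))) :=
  Equiv.ofBijective
    (fun b => ⟨(w (posV j b) : ℕ) - ((j : ℕ) + 1), by
      have h := val_gt_of_gt w j hw h0 (posV j b) (lt_posV j b)
      have := (w (posV j b)).isLt; omega⟩)
    (Finite.injective_iff_bijective.mp (by
      intro a b hab
      have hab' : (w (posV j a) : ℕ) - ((j : ℕ) + 1) = (w (posV j b) : ℕ) - ((j : ℕ) + 1) := by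
        have := congrArg Fin.val hab; simpa using this
      have ha := val_gt_of_gt w j hw h0 (posV j a) (lt_posV j a)
      have hb := val_gt_of_gt w j hw h0 (posV j b) (lt_posV j b)
      have : posV j a = posV j b := w.injective (Fin.ext (by omega))
      have hv : (a : ℕ) = (b : ℕ) := by
        have h2 := congrArg Fin.val this
        simp [posV] at h2
        omega
      exact Fin.ext hv))

lemma splitU_val (w : Perm (Fin (n + 1))) (j : Fin (n + 1)) (hw : Avoids w)
    (h0 : w j = 0) (a : Fin (j : ℕ)) :
    ((splitU w j hw h0) a : ℕ) = (w (posU j a) : ℕ) - 1 := by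
  simp [splitU, Equiv.ofBijective_apply]

lemma splitV_val (w : Perm (Fin (n + 1))) (j : Fin (n + 1)) (hw : Avoids w)
    (h0 : w j = 0) (b : Fin (n - (j : ℕ))) :
    ((splitV w j hw h0) b : ℕ) = (w (posV j b) : ℕ) - ((j : ℕ) + 1) := by
  simp [splitV, Equiv.ofBijective_apply]

lemma avoids_splitU (w : Perm (Fin (n + 1))) (j : Fin (n + 1)) (hw : Avoids w)
    (h0 : w j = 0) : Avoids (splitU w j hw h0) := by
  rintro ⟨a, b, c, hab, hbc, h1, h2⟩
  rw [Fin.lt_def] at hab hbc h1 h2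
  rw [splitU_val, splitU_val] at h1 h2
  have ha := val_le_of_lt w j hw h0 (posU j a) (posU_lt j a)
  have hb := val_le_of_lt w j hw h0 (posU j b) (posU_lt j b)
  have hc := val_le_of_lt w j hw h0 (posU j c) (posU_lt j c)
  exact hw ⟨posU j a, posU j b, posU j c, Fin.lt_def.mpr hab, Fin.lt_def.mpr hbc,
    Fin.lt_def.mpr (by omega), Fin.lt_def.mpr (by omega)⟩

lemma avoids_splitV (w : Perm (Fin (n + 1))) (j : Fin (n + 1)) (hw : Avoids w)
    (h0 : w j = 0) : Avoids (splitV w j hw h0) := by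
  rintro ⟨a, b, c, hab, hbc, h1, h2⟩
  rw [Fin.lt_def] at hab hbc h1 h2
  rw [splitV_val, splitV_val] at h1 h2
  have ha := val_gt_of_gt w j hw h0 (posV j a) (lt_posV j a)
  have hb := val_gt_of_gt w j hw h0 (posV j b) (lt_posV j b)
  have hc := val_gt_of_gt w j hw h0 (posV j c) (lt_posV j c)
  exact hw ⟨posV j a, posV j b, posV j c, Fin.lt_def.mpr (by simp [posV]; omega),
    Fin.lt_def.mpr (by simp [posV]; omega),
    Fin.lt_def.mpr (by omega), Fin.lt_def.mpr (by omega)⟩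

lemma glue_split (w : Perm (Fin (n + 1))) (j : Fin (n + 1)) (hw : Avoids w)
    (h0 : w j = 0) (hj : (j : ℕ) ≤ n) :
    glue n (j : ℕ) hj (splitU w j hw h0) (splitV w j hw h0) = w := by
  apply Equiv.ext; intro i
  apply Fin.ext
  rcases lt_trichotomy (i : ℕ) (j : ℕ) with h | h | h
  · rw [glue_val_lt hj _ _ i h, splitU_val]
    have e : posU j ⟨(i : ℕ), h⟩ = i := Fin.ext rfl
    rw [e]
    have := val_le_of_lt w j hw h0 i (Fin.lt_def.mpr h)
    omega
  · rw [glue_val_eq hj _ _ i h]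
    have e : i = j := Fin.ext h
    rw [e, h0]; rfl
  · have hi := i.isLt
    rw [glue_val_gt hj _ _ i h (by omega), splitV_val]
    have e : posV j ⟨(i : ℕ) - ((j : ℕ) + 1), by omega⟩ = i := Fin.ext (by simp [posV]; omega)
    rw [e]
    have := val_gt_of_gt w j hw h0 i (Fin.lt_def.mpr h)
    omega

lemma splitU_glue (j : Fin (n + 1)) (hj : (j : ℕ) ≤ n) (u : Perm (Fin (j : ℕ)))
    (v : Perm (Fin (n - (j : ℕ)))) (hw : Avoids (glue n (j : ℕ) hj u v))
    (h0 : (glue n (j : ℕ) hj u v) j = 0) :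
    splitU (glue n (j : ℕ) hj u v) j hw h0 = u := by
  apply Equiv.ext; intro a
  apply Fin.ext
  rw [splitU_val]
  have ha : ((posU j a : Fin (n + 1)) : ℕ) < (j : ℕ) := a.isLt
  rw [glue_val_lt hj u v (posU j a) ha]
  have e : (⟨((posU j a : Fin (n + 1)) : ℕ), ha⟩ : Fin (j : ℕ)) = a := Fin.ext rfl
  rw [e]
  omega

lemma splitV_glue (j : Fin (n + 1)) (hj : (j : ℕ) ≤ n) (u : Perm (Fin (j : ℕ)))
    (v : Perm (Fin (n - (j : ℕ)))) (hw : Avoids (glue n (j : ℕ) hj u v))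
    (h0 : (glue n (j : ℕ) hj u v) j = 0) :
    splitV (glue n (j : ℕ) hj u v) j hw h0 = v := by
  apply Equiv.ext; intro b
  apply Fin.ext
  rw [splitV_val]
  have hb : (j : ℕ) < ((posV j b : Fin (n + 1)) : ℕ) := by simp [posV]; omega
  have hb2 : ((posV j b : Fin (n + 1)) : ℕ) - ((j : ℕ) + 1) < n - (j : ℕ) := by
    have := b.isLt; simp only [posV]; omega
  rw [glue_val_gt hj u v (posV j b) hb hb2]
  have e : (⟨((posV j b : Fin (n + 1)) : ℕ) - ((j : ℕ) + 1), hb2⟩ : Fin (n - (j : ℕ))) = b :=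
    Fin.ext (by simp only [posV]; omega)
  rw [e]
  omega


lemma mem_fiber {n : ℕ} {j : Fin (n + 1)} {w : Perm (Fin (n + 1))}
    (hw : w ∈ (P (n + 1)).filter fun w => w.symm 0 = j) :
    Avoids w ∧ w j = 0 := by
  rw [Finset.mem_filter] at hw
  refine ⟨mem_P.mp hw.1, ?_⟩
  rw [← hw.2, Equiv.apply_symm_apply]

lemma fiber_card (n : ℕ) (j : Fin (n + 1)) :
    ((P (n + 1)).filter fun w => w.symm 0 = j).card
      = (P (j : ℕ)).card * (P (n - (j : ℕ))).card := by
  have hj : (j : ℕ) ≤ n := by have := j.isLt; omega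
  rw [← Finset.card_product]
  refine Finset.card_bij'
    (fun w hw => (splitU w j (mem_fiber hw).1 (mem_fiber hw).2,
                  splitV w j (mem_fiber hw).1 (mem_fiber hw).2))
    (fun p _ => glue n (j : ℕ) hj p.1 p.2) ?_ ?_ ?_ ?_
  · intro w hw
    rw [Finset.mem_product]
    exact ⟨mem_P.mpr (avoids_splitU w j (mem_fiber hw).1 (mem_fiber hw).2),
      mem_P.mpr (avoids_splitV w j (mem_fiber hw).1 (mem_fiber hw).2)⟩
  · intro p hp
    rw [Finset.mem_product] at hp
    rw [Finset.mem_filter]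
    refine ⟨mem_P.mpr (avoids_glue hj p.1 p.2 (mem_P.mp hp.1) (mem_P.mp hp.2)), ?_⟩
    rw [Equiv.symm_apply_eq]
    have hz : ((glue n (j : ℕ) hj p.1 p.2) j : ℕ) = 0 := glue_val_eq hj p.1 p.2 j rfl
    exact (Fin.ext (by simp [hz])).symm
  · intro w hw
    exact glue_split w j (mem_fiber hw).1 (mem_fiber hw).2 hj
  · intro p hp
    rw [Finset.mem_product] at hp
    have hgw : Avoids (glue n (j : ℕ) hj p.1 p.2) :=
      avoids_glue hj p.1 p.2 (mem_P.mp hp.1) (mem_P.mp hp.2)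
    have hz : ((glue n (j : ℕ) hj p.1 p.2) j : ℕ) = 0 := glue_val_eq hj p.1 p.2 j rfl
    have hg0 : (glue n (j : ℕ) hj p.1 p.2) j = 0 := Fin.ext (by simp [hz])
    exact Prod.ext (splitU_glue j hj p.1 p.2 hgw hg0) (splitV_glue j hj p.1 p.2 hgw hg0)

lemma card_P_eq_catalan : ∀ n : ℕ, (P n).card = catalan n := by
  intro n
  induction n using Nat.strong_induction_on with
  | _ n ih =>
    match n with
    | 0 =>
      have he : P 0 = Finset.univ := by
        rw [P]
        apply Finset.filter_true_of_mem
        intro w _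
        rintro ⟨i, _⟩
        exact i.elim0
      rw [he, Finset.card_univ, catalan_zero]
      simp
    | Nat.succ m =>
      rw [Finset.card_eq_sum_card_fiberwise
        (f := fun w : Perm (Fin (m + 1)) => w.symm 0) (t := Finset.univ)
        (fun x _ => Finset.mem_univ _), catalan_succ]
      apply Finset.sum_congr rfl
      intro j _
      rw [fiber_card m j, ih (j : ℕ) j.isLt, ih (m - (j : ℕ)) (by omega)]

end Avoid312

open scoped Classical in
/-- The number of 312-avoiding permutations in `S_n` equals the Catalan number `C_n`. -/
theorem card_avoid_312_eq_catalan (n : ℕ) :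
    ((Finset.univ : Finset (Equiv.Perm (Fin n))).filter
      fun w => ¬ ∃ i j k : Fin n, i < j ∧ j < k ∧ w j < w k ∧ w k < w i).card
      = (2 * n).choose n / (n + 1) := by
  have h := Avoid312.card_P_eq_catalan n
  rw [catalan_eq_centralBinom_div] at h
  rw [Avoid312.P] at h
  exact h
end

section
/- The number of 123-avoiding permutations in S_n equals the number of 132-avoiding permutations in S_n. -/
namespace AvoidSS

open Finset

variable {n : ℕ}

/-- `i` is a left-to-right minimum position of `f`. -/
def IsMin (f : Fin n → Fin n) (i : Fin n) : Prop := ∀ j, j < i → f i < f j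

instance (f : Fin n → Fin n) (i : Fin n) : Decidable (IsMin f i) := by
  unfold IsMin; infer_instance

/-- prefix minimum of `f` on positions `≤ i`. -/
def pmin (f : Fin n → Fin n) (i : Fin n) : Fin n :=
  (Finset.Iic i).inf' ⟨i, Finset.mem_Iic.mpr le_rfl⟩ f

lemma pmin_le (f : Fin n → Fin n) {i j : Fin n} (h : j ≤ i) : pmin f i ≤ f j :=
  Finset.inf'_le _ (Finset.mem_Iic.mpr h)

lemma exists_pmin (f : Fin n → Fin n) (i : Fin n) : ∃ j, j ≤ i ∧ f j = pmin f i := by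
  obtain ⟨j, hj, hji⟩ := Finset.exists_mem_eq_inf' (⟨i, Finset.mem_Iic.mpr le_rfl⟩ :
    (Finset.Iic i).Nonempty) f
  exact ⟨j, Finset.mem_Iic.mp hj, hji.symm⟩

lemma pmin_mono (f : Fin n → Fin n) {i i' : Fin n} (h : i ≤ i') : pmin f i' ≤ pmin f i :=
  Finset.le_inf' _ _ fun j hj => pmin_le f (le_trans (Finset.mem_Iic.mp hj) h)

lemma pmin_le_self (f : Fin n → Fin n) (i : Fin n) : pmin f i ≤ f i := pmin_le f le_rfl

/-- The prefix minimum is attained at a left-to-right minimum position. -/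
lemma exists_isMin_pmin (w : Equiv.Perm (Fin n)) (i : Fin n) :
    ∃ j, j ≤ i ∧ IsMin ⇑w j ∧ w j = pmin ⇑w i := by
  obtain ⟨j, hj, hjv⟩ := exists_pmin ⇑w i
  refine ⟨j, hj, fun k hk => ?_, hjv⟩
  have h1 : pmin ⇑w i ≤ w k := pmin_le ⇑w (le_trans hk.le hj)
  have h2 : w j ≠ w k := fun h => (ne_of_lt hk) (w.injective h).symm
  rw [hjv]
  exact lt_of_le_of_ne h1 (fun h => h2 (hjv.trans h))

lemma isMin_lt_pmin (w : Equiv.Perm (Fin n)) {i j : Fin n} (hm : IsMin ⇑w i) (h : j < i) :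
    w i < pmin ⇑w j := by
  obtain ⟨k, hk, hkv⟩ := exists_pmin ⇑w j
  rw [← hkv]
  exact hm k (lt_of_le_of_lt hk h)

lemma pmin_add_lt (w : Equiv.Perm (Fin n)) (i : Fin n) : (pmin ⇑w i).val + i.val < n := by
  classical
  have hsub : Finset.Iio (pmin ⇑w i) ⊆ (Finset.Ioi i).image ⇑w := by
    intro x hx
    rw [Finset.mem_Iio] at hx
    refine Finset.mem_image.mpr ⟨w.symm x, ?_, by simp⟩
    rw [Finset.mem_Ioi]
    by_contra hle
    push_neg at hle
    have := pmin_le ⇑w hle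
    simp only [Equiv.apply_symm_apply] at this
    exact absurd (lt_of_le_of_lt this hx) (lt_irrefl _)
  have h1 : (Finset.Iio (pmin ⇑w i)).card ≤ ((Finset.Ioi i).image ⇑w).card :=
    Finset.card_le_card hsub
  have h2 : ((Finset.Ioi i).image ⇑w).card ≤ (Finset.Ioi i).card := Finset.card_image_le
  rw [Fin.card_Iio] at h1
  rw [Fin.card_Ioi] at h2
  have := i.isLt
  omega

/-- Counting lemma: there is an unused value above the prefix minimum. -/
lemma exists_avail (w : Equiv.Perm (Fin n)) (i : Fin n) (S : Finset (Fin n))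
    (hc : S.card ≤ i.val) (hp : pmin ⇑w i ∈ S) : ∃ x, x ∉ S ∧ pmin ⇑w i < x := by
  have hcard : (Finset.Ici (pmin ⇑w i)).card = n - (pmin ⇑w i).val := Fin.card_Ici _
  have hlt := pmin_add_lt w i
  have hne : (Finset.Ici (pmin ⇑w i) \ S).Nonempty := by
    rw [← Finset.card_pos]
    have := Finset.le_card_sdiff S (Finset.Ici (pmin ⇑w i))
    omega
  obtain ⟨x, hx⟩ := hne
  rw [Finset.mem_sdiff, Finset.mem_Ici] at hx
  refine ⟨x, hx.2, lt_of_le_of_ne hx.1 ?_⟩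
  intro h
  exact hx.2 (h ▸ hp)

/-! ### greedy constructions -/

/-- greedy choice for the 132-avoiding completion. -/
def choice132 (w : Equiv.Perm (Fin n)) (i : Fin n) (used : List (Fin n)) : Fin n :=
  if IsMin ⇑w i then w i
  else if h : (Finset.univ.filter fun x => x ∉ used ∧ pmin ⇑w i < x).Nonempty
    then (Finset.univ.filter fun x => x ∉ used ∧ pmin ⇑w i < x).min' h
    else w i

/-- greedy choice for the 123-avoiding completion. -/
def choice123 (w : Equiv.Perm (Fin n)) (i : Fin n) (used : List (Fin n)) : Fin n :=
  if IsMin ⇑w i then w i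
  else if h : (Finset.univ.filter fun x => x ∉ used).Nonempty
    then (Finset.univ.filter fun x => x ∉ used).max' h
    else w i

def glist (choice : Fin n → List (Fin n) → Fin n) : ℕ → List (Fin n)
  | 0 => []
  | t + 1 => glist choice t ++ (if h : t < n then [choice ⟨t, h⟩ (glist choice t)] else [])

def g132 (w : Equiv.Perm (Fin n)) (i : Fin n) : Fin n :=
  choice132 w i (glist (choice132 w) i.val)

def g123 (w : Equiv.Perm (Fin n)) (i : Fin n) : Fin n :=
  choice123 w i (glist (choice123 w) i.val)

lemma mem_glist (choice : Fin n → List (Fin n) → Fin n) (t : ℕ) (x : Fin n) :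
    x ∈ glist choice t ↔ ∃ j : Fin n, j.val < t ∧ choice j (glist choice j.val) = x := by
  induction t with
  | zero => simp [glist]
  | succ t ih =>
    by_cases h : t < n
    · simp only [glist, dif_pos h, List.mem_append, List.mem_singleton, ih]
      constructor
      · rintro (⟨j, hj, hjv⟩ | rfl)
        · exact ⟨j, Nat.lt_succ_of_lt hj, hjv⟩
        · exact ⟨⟨t, h⟩, Nat.lt_succ_self t, rfl⟩
      · rintro ⟨j, hj, hjv⟩
        rcases Nat.lt_succ_iff_lt_or_eq.mp hj with hj' | hj'
        · exact Or.inl ⟨j, hj', hjv⟩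
        · right
          have hje : j = ⟨t, h⟩ := Fin.ext hj'
          rw [hje] at hjv
          exact hjv.symm
    · simp only [glist, dif_neg h, List.append_nil, ih]
      constructor
      · rintro ⟨j, hj, hjv⟩; exact ⟨j, Nat.lt_succ_of_lt hj, hjv⟩
      · rintro ⟨j, hj, hjv⟩
        exact ⟨j, lt_of_lt_of_le j.isLt (not_lt.mp h), hjv⟩

def used132 (w : Equiv.Perm (Fin n)) (i : Fin n) : Finset (Fin n) :=
  (Finset.Iio i).image (g132 w)

def avail132 (w : Equiv.Perm (Fin n)) (i : Fin n) : Finset (Fin n) :=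
  Finset.univ.filter fun x => x ∉ used132 w i ∧ pmin ⇑w i < x

def used123 (w : Equiv.Perm (Fin n)) (i : Fin n) : Finset (Fin n) :=
  (Finset.Iio i).image (g123 w)

def avail123 (w : Equiv.Perm (Fin n)) (i : Fin n) : Finset (Fin n) :=
  Finset.univ.filter fun x => x ∉ used123 w i

lemma mem_glist132 (w : Equiv.Perm (Fin n)) (i : Fin n) (x : Fin n) :
    x ∈ glist (choice132 w) i.val ↔ x ∈ used132 w i := by
  rw [mem_glist]
  simp only [used132, Finset.mem_image, Finset.mem_Iio]
  constructor
  · rintro ⟨j, hj, hjv⟩; exact ⟨j, hj, hjv⟩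
  · rintro ⟨j, hj, hjv⟩; exact ⟨j, hj, hjv⟩

lemma mem_glist123 (w : Equiv.Perm (Fin n)) (i : Fin n) (x : Fin n) :
    x ∈ glist (choice123 w) i.val ↔ x ∈ used123 w i := by
  rw [mem_glist]
  simp only [used123, Finset.mem_image, Finset.mem_Iio]
  constructor
  · rintro ⟨j, hj, hjv⟩; exact ⟨j, hj, hjv⟩
  · rintro ⟨j, hj, hjv⟩; exact ⟨j, hj, hjv⟩

lemma g132_min (w : Equiv.Perm (Fin n)) {i : Fin n} (h : IsMin ⇑w i) : g132 w i = w i := by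
  rw [g132, choice132, if_pos h]

lemma g123_min (w : Equiv.Perm (Fin n)) {i : Fin n} (h : IsMin ⇑w i) : g123 w i = w i := by
  rw [g123, choice123, if_pos h]

lemma used132_card (w : Equiv.Perm (Fin n)) (i : Fin n) : (used132 w i).card ≤ i.val := by
  refine le_trans Finset.card_image_le ?_
  rw [Fin.card_Iio]

lemma used123_card (w : Equiv.Perm (Fin n)) (i : Fin n) : (used123 w i).card ≤ i.val := by
  refine le_trans Finset.card_image_le ?_
  rw [Fin.card_Iio]

lemma pmin_mem_used132 (w : Equiv.Perm (Fin n)) {i : Fin n} (hm : ¬ IsMin ⇑w i) :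
    pmin ⇑w i ∈ used132 w i := by
  obtain ⟨j, hj, hjm, hjv⟩ := exists_isMin_pmin w i
  have hji : j < i := lt_of_le_of_ne hj (by rintro rfl; exact hm hjm)
  exact Finset.mem_image.mpr ⟨j, Finset.mem_Iio.mpr hji, by rw [g132_min w hjm, hjv]⟩

lemma pmin_mem_used123 (w : Equiv.Perm (Fin n)) {i : Fin n} (hm : ¬ IsMin ⇑w i) :
    pmin ⇑w i ∈ used123 w i := by
  obtain ⟨j, hj, hjm, hjv⟩ := exists_isMin_pmin w i
  have hji : j < i := lt_of_le_of_ne hj (by rintro rfl; exact hm hjm)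
  exact Finset.mem_image.mpr ⟨j, Finset.mem_Iio.mpr hji, by rw [g123_min w hjm, hjv]⟩

lemma avail132_nonempty (w : Equiv.Perm (Fin n)) {i : Fin n} (hm : ¬ IsMin ⇑w i) :
    (avail132 w i).Nonempty := by
  obtain ⟨x, hx1, hx2⟩ := exists_avail w i (used132 w i) (used132_card w i) (pmin_mem_used132 w hm)
  exact ⟨x, Finset.mem_filter.mpr ⟨Finset.mem_univ x, hx1, hx2⟩⟩

lemma avail123_nonempty (w : Equiv.Perm (Fin n)) {i : Fin n} (hm : ¬ IsMin ⇑w i) :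
    (avail123 w i).Nonempty := by
  obtain ⟨x, hx1, _⟩ := exists_avail w i (used123 w i) (used123_card w i) (pmin_mem_used123 w hm)
  exact ⟨x, Finset.mem_filter.mpr ⟨Finset.mem_univ x, hx1⟩⟩

lemma filter132_eq (w : Equiv.Perm (Fin n)) (i : Fin n) :
    (Finset.univ.filter fun x => x ∉ glist (choice132 w) i.val ∧ pmin ⇑w i < x)
      = avail132 w i := by
  rw [avail132]
  apply Finset.filter_congr
  intro x _
  rw [mem_glist132]

lemma filter123_eq (w : Equiv.Perm (Fin n)) (i : Fin n) :
    (Finset.univ.filter fun x => x ∉ glist (choice123 w) i.val) = avail123 w i := by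
  rw [avail123]
  apply Finset.filter_congr
  intro x _
  rw [mem_glist123]

lemma g132_notmin (w : Equiv.Perm (Fin n)) {i : Fin n} (hm : ¬ IsMin ⇑w i) :
    g132 w i = (avail132 w i).min' (avail132_nonempty w hm) := by
  rw [g132, choice132, if_neg hm]
  have h := filter132_eq w i
  rw [dif_pos (h ▸ avail132_nonempty w hm)]
  congr 1

lemma g123_notmin (w : Equiv.Perm (Fin n)) {i : Fin n} (hm : ¬ IsMin ⇑w i) :
    g123 w i = (avail123 w i).max' (avail123_nonempty w hm) := by
  rw [g123, choice123, if_neg hm]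
  have h := filter123_eq w i
  rw [dif_pos (h ▸ avail123_nonempty w hm)]
  congr 1

lemma g132_mem_avail (w : Equiv.Perm (Fin n)) {i : Fin n} (hm : ¬ IsMin ⇑w i) :
    g132 w i ∈ avail132 w i := by
  rw [g132_notmin w hm]; exact Finset.min'_mem _ _

lemma g123_mem_avail (w : Equiv.Perm (Fin n)) {i : Fin n} (hm : ¬ IsMin ⇑w i) :
    g123 w i ∈ avail123 w i := by
  rw [g123_notmin w hm]; exact Finset.max'_mem _ _

lemma g132_pmin_lt (w : Equiv.Perm (Fin n)) {i : Fin n} (hm : ¬ IsMin ⇑w i) :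
    pmin ⇑w i < g132 w i :=
  ((Finset.mem_filter.mp (g132_mem_avail w hm)).2).2

lemma g132_notmem_used (w : Equiv.Perm (Fin n)) {i : Fin n} (hm : ¬ IsMin ⇑w i) :
    g132 w i ∉ used132 w i :=
  ((Finset.mem_filter.mp (g132_mem_avail w hm)).2).1

lemma g123_notmem_used (w : Equiv.Perm (Fin n)) {i : Fin n} (hm : ¬ IsMin ⇑w i) :
    g123 w i ∉ used123 w i :=
  (Finset.mem_filter.mp (g123_mem_avail w hm)).2

lemma g123_pmin_lt (w : Equiv.Perm (Fin n)) {i : Fin n} (hm : ¬ IsMin ⇑w i) :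
    pmin ⇑w i < g123 w i := by
  obtain ⟨x, hx1, hx2⟩ := exists_avail w i (used123 w i) (used123_card w i) (pmin_mem_used123 w hm)
  have hxa : x ∈ avail123 w i := Finset.mem_filter.mpr ⟨Finset.mem_univ x, hx1⟩
  have hle := Finset.le_max' _ x hxa
  rw [← g123_notmin w hm] at hle
  exact lt_of_lt_of_le hx2 hle

lemma g132_ge_pmin (w : Equiv.Perm (Fin n)) (i : Fin n) : pmin ⇑w i ≤ g132 w i := by
  by_cases hm : IsMin ⇑w i
  · rw [g132_min w hm]; exact pmin_le_self ⇑w i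
  · exact le_of_lt (g132_pmin_lt w hm)

lemma g123_ge_pmin (w : Equiv.Perm (Fin n)) (i : Fin n) : pmin ⇑w i ≤ g123 w i := by
  by_cases hm : IsMin ⇑w i
  · rw [g123_min w hm]; exact pmin_le_self ⇑w i
  · exact le_of_lt (g123_pmin_lt w hm)

lemma g132_gt_of_isMin (w : Equiv.Perm (Fin n)) {i j : Fin n} (hm : IsMin ⇑w i) (h : j < i) :
    w i < g132 w j := by
  by_cases hj : IsMin ⇑w j
  · rw [g132_min w hj]; exact hm j h
  · exact lt_trans (isMin_lt_pmin w hm h) (g132_pmin_lt w hj)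

lemma g123_gt_of_isMin (w : Equiv.Perm (Fin n)) {i j : Fin n} (hm : IsMin ⇑w i) (h : j < i) :
    w i < g123 w j := by
  by_cases hj : IsMin ⇑w j
  · rw [g123_min w hj]; exact hm j h
  · exact lt_trans (isMin_lt_pmin w hm h) (g123_pmin_lt w hj)

lemma g132_ne (w : Equiv.Perm (Fin n)) {i j : Fin n} (h : j < i) : g132 w j ≠ g132 w i := by
  by_cases hm : IsMin ⇑w i
  · rw [g132_min w hm]; exact ne_of_gt (g132_gt_of_isMin w hm h)
  · intro he
    exact g132_notmem_used w hm
      (he ▸ Finset.mem_image.mpr ⟨j, Finset.mem_Iio.mpr h, rfl⟩)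

lemma g123_ne (w : Equiv.Perm (Fin n)) {i j : Fin n} (h : j < i) : g123 w j ≠ g123 w i := by
  by_cases hm : IsMin ⇑w i
  · rw [g123_min w hm]; exact ne_of_gt (g123_gt_of_isMin w hm h)
  · intro he
    exact g123_notmem_used w hm
      (he ▸ Finset.mem_image.mpr ⟨j, Finset.mem_Iio.mpr h, rfl⟩)

lemma g132_injective (w : Equiv.Perm (Fin n)) : Function.Injective (g132 w) := by
  intro a b hab
  rcases lt_trichotomy a b with h | h | h
  · exact absurd hab (g132_ne w h)
  · exact h
  · exact absurd hab (g132_ne w h).symm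

lemma g123_injective (w : Equiv.Perm (Fin n)) : Function.Injective (g123 w) := by
  intro a b hab
  rcases lt_trichotomy a b with h | h | h
  · exact absurd hab (g123_ne w h)
  · exact h
  · exact absurd hab (g123_ne w h).symm

noncomputable def perm132 (w : Equiv.Perm (Fin n)) : Equiv.Perm (Fin n) :=
  Equiv.ofBijective (g132 w) (Finite.injective_iff_bijective.mp (g132_injective w))

noncomputable def perm123 (w : Equiv.Perm (Fin n)) : Equiv.Perm (Fin n) :=
  Equiv.ofBijective (g123 w) (Finite.injective_iff_bijective.mp (g123_injective w))

@[simp] lemma perm132_apply (w : Equiv.Perm (Fin n)) (i : Fin n) : perm132 w i = g132 w i := rfl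
@[simp] lemma perm123_apply (w : Equiv.Perm (Fin n)) (i : Fin n) : perm123 w i = g123 w i := rfl

theorem fin_strong_ind {P : Fin n → Prop} (h : ∀ i, (∀ j, j < i → P j) → P i) : ∀ i, P i :=
  fun i => (wellFounded_lt (α := Fin n)).induction i h

theorem fin_strong_ind' {P : Fin n → Prop} (h : ∀ i, (∀ j, j < i → P j) → P i) : ∀ i, P i :=
  fin_strong_ind h

lemma pmin_g132 (w : Equiv.Perm (Fin n)) (i : Fin n) : pmin (g132 w) i = pmin ⇑w i := by
  apply le_antisymm
  · obtain ⟨j, hj, hjm, hjv⟩ := exists_isMin_pmin w i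
    calc pmin (g132 w) i ≤ g132 w j := pmin_le _ hj
    _ = w j := g132_min w hjm
    _ = pmin ⇑w i := hjv
  · exact Finset.le_inf' _ _ fun j hj =>
      le_trans (le_trans (pmin_mono ⇑w (Finset.mem_Iic.mp hj)) (g132_ge_pmin w j)) le_rfl

lemma pmin_g123 (w : Equiv.Perm (Fin n)) (i : Fin n) : pmin (g123 w) i = pmin ⇑w i := by
  apply le_antisymm
  · obtain ⟨j, hj, hjm, hjv⟩ := exists_isMin_pmin w i
    calc pmin (g123 w) i ≤ g123 w j := pmin_le _ hj
    _ = w j := g123_min w hjm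
    _ = pmin ⇑w i := hjv
  · exact Finset.le_inf' _ _ fun j hj =>
      le_trans (pmin_mono ⇑w (Finset.mem_Iic.mp hj)) (g123_ge_pmin w j)

lemma isMin_g132 (w : Equiv.Perm (Fin n)) (i : Fin n) : IsMin (g132 w) i ↔ IsMin ⇑w i := by
  constructor
  · intro hg
    by_contra hm
    obtain ⟨j, hj, hjm, hjv⟩ := exists_isMin_pmin w i
    have hji : j < i := lt_of_le_of_ne hj (by rintro rfl; exact hm hjm)
    have h1 : g132 w j = pmin ⇑w i := by rw [g132_min w hjm, hjv]
    have h2 := g132_pmin_lt w hm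
    have := hg j hji
    rw [h1] at this
    exact absurd h2 (not_lt.mpr this.le)
  · intro hm j hj
    rw [g132_min w hm]
    exact g132_gt_of_isMin w hm hj

lemma isMin_g123 (w : Equiv.Perm (Fin n)) (i : Fin n) : IsMin (g123 w) i ↔ IsMin ⇑w i := by
  constructor
  · intro hg
    by_contra hm
    obtain ⟨j, hj, hjm, hjv⟩ := exists_isMin_pmin w i
    have hji : j < i := lt_of_le_of_ne hj (by rintro rfl; exact hm hjm)
    have h1 : g123 w j = pmin ⇑w i := by rw [g123_min w hjm, hjv]
    have h2 := g123_pmin_lt w hm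
    have := hg j hji
    rw [h1] at this
    exact absurd h2 (not_lt.mpr this.le)
  · intro hm j hj
    rw [g123_min w hm]
    exact g123_gt_of_isMin w hm hj

/-! ### pattern-freeness of the constructions -/

def NoPat123 (f : Fin n → Fin n) : Prop :=
  ∀ i j k : Fin n, i < j → j < k → f i < f j → f j < f k → False

def NoPat132 (f : Fin n → Fin n) : Prop :=
  ∀ i j k : Fin n, i < j → j < k → f i < f k → f k < f j → False

lemma g123_noPat (w : Equiv.Perm (Fin n)) : NoPat123 (g123 w) := by
  intro i j k hij hjk h1 h2
  by_cases hm : IsMin ⇑w j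
  · have := g123_gt_of_isMin w hm hij
    rw [← g123_min w hm] at this
    exact absurd h1 (not_lt.mpr this.le)
  · have hknu : g123 w k ∉ used123 w j := by
      intro hk
      obtain ⟨l, hl, hlv⟩ := Finset.mem_image.mp hk
      have := g123_injective w hlv
      rw [this] at hl
      exact absurd (Finset.mem_Iio.mp hl) (not_lt.mpr (le_of_lt hjk))
    have hka : g123 w k ∈ avail123 w j := Finset.mem_filter.mpr ⟨Finset.mem_univ _, hknu⟩
    have := Finset.le_max' _ _ hka
    rw [← g123_notmin w hm] at this
    exact absurd h2 (not_lt.mpr this)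

lemma g132_noPat (w : Equiv.Perm (Fin n)) : NoPat132 (g132 w) := by
  intro i j k hij hjk h1 h2
  by_cases hm : IsMin ⇑w j
  · have := g132_gt_of_isMin w hm hij
    rw [← g132_min w hm] at this
    exact absurd (lt_trans h1 h2) (not_lt.mpr this.le)
  · have hknu : g132 w k ∉ used132 w j := by
      intro hk
      obtain ⟨l, hl, hlv⟩ := Finset.mem_image.mp hk
      have := g132_injective w hlv
      rw [this] at hl
      exact absurd (Finset.mem_Iio.mp hl) (not_lt.mpr (le_of_lt hjk))
    by_cases hpk : pmin ⇑w j < g132 w k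
    · have hka : g132 w k ∈ avail132 w j :=
        Finset.mem_filter.mpr ⟨Finset.mem_univ _, hknu, hpk⟩
      have := Finset.min'_le _ _ hka
      rw [← g132_notmin w hm] at this
      exact absurd h2 (not_lt.mpr this)
    · push_neg at hpk
      have hgi : pmin ⇑w i ≤ g132 w i := g132_ge_pmin w i
      have : g132 w k ≤ g132 w i :=
        le_trans hpk (le_trans (pmin_mono ⇑w (le_of_lt hij)) hgi)
      exact absurd h1 (not_lt.mpr this)

/-! ### uniqueness: avoiding permutations are fixed by the construction -/

lemma notMin_exists_lt (u : Equiv.Perm (Fin n)) {i : Fin n} (hm : ¬ IsMin ⇑u i) :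
    ∃ j, j < i ∧ u j < u i := by
  rw [IsMin] at hm
  push_neg at hm
  obtain ⟨j, hj, hle⟩ := hm
  refine ⟨j, hj, lt_of_le_of_ne hle ?_⟩
  exact fun h => (ne_of_lt hj) (u.injective h)

lemma g123_eq_self (u : Equiv.Perm (Fin n)) (hu : NoPat123 ⇑u) : ∀ i, g123 u i = u i := by
  apply fin_strong_ind'
  intro i IH
  by_cases hm : IsMin ⇑u i
  · exact g123_min u hm
  · have hused : used123 u i = (Finset.Iio i).image ⇑u :=
      Finset.image_congr fun j hj => IH j (Finset.mem_Iio.mp hj)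
    have huinotin : u i ∉ used123 u i := by
      rw [hused]
      intro h
      obtain ⟨l, hl, hlv⟩ := Finset.mem_image.mp h
      exact (ne_of_lt (Finset.mem_Iio.mp hl)) (u.injective hlv)
    have huia : u i ∈ avail123 u i := Finset.mem_filter.mpr ⟨Finset.mem_univ _, huinotin⟩
    rw [g123_notmin u hm]
    apply le_antisymm
    · by_contra hlt
      push_neg at hlt
      set x := (avail123 u i).max' (avail123_nonempty u hm) with hx
      have hxa : x ∈ avail123 u i := Finset.max'_mem _ _
      have hxnu : x ∉ used123 u i := (Finset.mem_filter.mp hxa).2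
      -- x = u k for some k > i
      obtain ⟨k, hk⟩ := u.surjective x
      have hki : i < k := by
        rcases lt_trichotomy i k with h | h | h
        · exact h
        · exfalso; rw [← h] at hk
          exact absurd hk.symm (ne_of_gt hlt)
        · exfalso
          apply hxnu
          rw [hused]
          exact Finset.mem_image.mpr ⟨k, Finset.mem_Iio.mpr h, hk⟩
      obtain ⟨j, hj, hjv⟩ := notMin_exists_lt u hm
      exact hu j i k hj hki hjv (by rw [hk]; exact hlt)
    · exact Finset.le_max' _ _ huia

lemma g132_eq_self (u : Equiv.Perm (Fin n)) (hu : NoPat132 ⇑u) : ∀ i, g132 u i = u i := by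
  apply fin_strong_ind'
  intro i IH
  by_cases hm : IsMin ⇑u i
  · exact g132_min u hm
  · have hused : used132 u i = (Finset.Iio i).image ⇑u :=
      Finset.image_congr fun j hj => IH j (Finset.mem_Iio.mp hj)
    have huinotin : u i ∉ used132 u i := by
      rw [hused]
      intro h
      obtain ⟨l, hl, hlv⟩ := Finset.mem_image.mp h
      exact (ne_of_lt (Finset.mem_Iio.mp hl)) (u.injective hlv)
    have hpi : pmin ⇑u i < u i := by
      obtain ⟨j, hj, hjv⟩ := notMin_exists_lt u hm
      exact lt_of_le_of_lt (pmin_le ⇑u (le_of_lt hj)) hjv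
    have huia : u i ∈ avail132 u i :=
      Finset.mem_filter.mpr ⟨Finset.mem_univ _, huinotin, hpi⟩
    rw [g132_notmin u hm]
    apply le_antisymm
    · exact Finset.min'_le _ _ huia
    · by_contra hlt
      push_neg at hlt
      set x := (avail132 u i).min' (avail132_nonempty u hm) with hx
      have hxa : x ∈ avail132 u i := Finset.min'_mem _ _
      have hxnu : x ∉ used132 u i := (Finset.mem_filter.mp hxa).2.1
      have hxp : pmin ⇑u i < x := (Finset.mem_filter.mp hxa).2.2
      obtain ⟨k, hk⟩ := u.surjective x
      have hki : i < k := by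
        rcases lt_trichotomy i k with h | h | h
        · exact h
        · exfalso; rw [← h] at hk
          exact absurd hk.symm (ne_of_lt hlt)
        · exfalso
          apply hxnu
          rw [hused]
          exact Finset.mem_image.mpr ⟨k, Finset.mem_Iio.mpr h, hk⟩
      obtain ⟨j0, hj0, hj0m, hj0v⟩ := exists_isMin_pmin u i
      have hj0i : j0 < i := by
        rcases lt_or_eq_of_le hj0 with h | h
        · exact h
        · exfalso; rw [h] at hj0m; exact hm hj0m
      exact hu j0 i k hj0i hki (by rw [hj0v, hk]; exact hxp) (by rw [hk]; exact hlt)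

section congr

variable {w u : Equiv.Perm (Fin n)}
variable (hm : ∀ i, IsMin ⇑w i ↔ IsMin ⇑u i) (hv : ∀ i, IsMin ⇑w i → w i = u i)

include hm hv

lemma pmin_congr (i : Fin n) : pmin ⇑w i = pmin ⇑u i := by
  apply le_antisymm
  · obtain ⟨j, hj, hjm, hjv⟩ := exists_isMin_pmin u i
    calc pmin ⇑w i ≤ w j := pmin_le _ hj
    _ = u j := hv j ((hm j).mpr hjm)
    _ = pmin ⇑u i := hjv
  · obtain ⟨j, hj, hjm, hjv⟩ := exists_isMin_pmin w i
    calc pmin ⇑u i ≤ u j := pmin_le _ hj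
    _ = w j := (hv j hjm).symm
    _ = pmin ⇑w i := hjv

lemma g123_congr : ∀ i, g123 w i = g123 u i := by
  apply fin_strong_ind'
  intro i IH
  by_cases hmi : IsMin ⇑w i
  · rw [g123_min w hmi, g123_min u ((hm i).mp hmi)]
    exact hv i hmi
  · have hmu : ¬ IsMin ⇑u i := fun h => hmi ((hm i).mpr h)
    have husede : used123 w i = used123 u i :=
      Finset.image_congr fun j hj => IH j (Finset.mem_Iio.mp hj)
    have he : avail123 w i = avail123 u i := by
      unfold avail123; rw [husede]
    rw [g123_notmin w hmi, g123_notmin u hmu]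
    congr 1

lemma g132_congr : ∀ i, g132 w i = g132 u i := by
  apply fin_strong_ind'
  intro i IH
  by_cases hmi : IsMin ⇑w i
  · rw [g132_min w hmi, g132_min u ((hm i).mp hmi)]
    exact hv i hmi
  · have hmu : ¬ IsMin ⇑u i := fun h => hmi ((hm i).mpr h)
    have husede : used132 w i = used132 u i :=
      Finset.image_congr fun j hj => IH j (Finset.mem_Iio.mp hj)
    have he : avail132 w i = avail132 u i := by
      unfold avail132; rw [husede, pmin_congr hm hv i]
    rw [g132_notmin w hmi, g132_notmin u hmu]
    congr 1

end congr

lemma coe_perm132 (w : Equiv.Perm (Fin n)) : ⇑(perm132 w) = g132 w := rfl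
lemma coe_perm123 (w : Equiv.Perm (Fin n)) : ⇑(perm123 w) = g123 w := rfl

lemma roundtrip123 (w : Equiv.Perm (Fin n)) (hw : NoPat123 ⇑w) :
    perm123 (perm132 w) = w := by
  apply Equiv.ext
  intro i
  rw [perm123_apply]
  have hm : ∀ i, IsMin ⇑(perm132 w) i ↔ IsMin ⇑w i := by
    intro i; rw [coe_perm132]; exact isMin_g132 w i
  have hv : ∀ i, IsMin ⇑(perm132 w) i → (perm132 w) i = w i := by
    intro i h
    rw [perm132_apply]
    exact g132_min w ((isMin_g132 w i).mp (by rw [coe_perm132] at h; exact h))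
  rw [g123_congr hm hv i]
  exact g123_eq_self w hw i

lemma roundtrip132 (u : Equiv.Perm (Fin n)) (hu : NoPat132 ⇑u) :
    perm132 (perm123 u) = u := by
  apply Equiv.ext
  intro i
  rw [perm132_apply]
  have hm : ∀ i, IsMin ⇑(perm123 u) i ↔ IsMin ⇑u i := by
    intro i; rw [coe_perm123]; exact isMin_g123 u i
  have hv : ∀ i, IsMin ⇑(perm123 u) i → (perm123 u) i = u i := by
    intro i h
    rw [perm123_apply]
    exact g123_min u ((isMin_g123 u i).mp (by rw [coe_perm123] at h; exact h))
  rw [g132_congr hm hv i]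
  exact g132_eq_self u hu i

/-! ### pattern characterizations -/

lemma not_contains123_iff (w : Equiv.Perm (Fin n)) :
    ¬ (∃ f : Fin 3 → Fin n, StrictMono f ∧
        ∀ a b : Fin 3, (1 : Equiv.Perm (Fin 3)) a < (1 : Equiv.Perm (Fin 3)) b
          ↔ w (f a) < w (f b)) ↔ NoPat123 ⇑w := by
  constructor
  · intro h i j k hij hjk h3 h4
    apply h
    refine ⟨![i, j, k], ?_, ?_⟩
    · intro a b hab
      fin_cases a <;> fin_cases b <;>
        first
          | exact absurd hab (by decide)
          | simpa using hij
          | simpa using hjk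
          | simpa using lt_trans hij hjk
    · intro a b
      fin_cases a <;> fin_cases b <;>
        simp only [Matrix.cons_val_zero, Matrix.cons_val_one, Matrix.head_cons,
          Matrix.cons_val_two, Matrix.tail_cons, Equiv.Perm.coe_one, id_eq] <;>
        first
          | exact iff_of_true (by decide) h3
          | exact iff_of_true (by decide) h4
          | exact iff_of_true (by decide) (lt_trans h3 h4)
          | exact iff_of_false (by decide) (lt_irrefl _)
          | exact iff_of_false (by decide) (asymm h3)
          | exact iff_of_false (by decide) (asymm h4)
          | exact iff_of_false (by decide) (asymm (lt_trans h3 h4))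
  · rintro h ⟨f, hsm, hc⟩
    exact h (f 0) (f 1) (f 2) (hsm (show (0 : Fin 3) < 1 by decide))
      (hsm (show (1 : Fin 3) < 2 by decide))
      ((hc 0 1).mp (by decide)) ((hc 1 2).mp (by decide))

lemma not_contains132_iff (w : Equiv.Perm (Fin n)) :
    ¬ (∃ f : Fin 3 → Fin n, StrictMono f ∧
        ∀ a b : Fin 3, Equiv.swap (1 : Fin 3) 2 a < Equiv.swap (1 : Fin 3) 2 b
          ↔ w (f a) < w (f b)) ↔ NoPat132 ⇑w := by
  constructor
  · intro h i j k hij hjk h3 h4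
    apply h
    refine ⟨![i, j, k], ?_, ?_⟩
    · intro a b hab
      fin_cases a <;> fin_cases b <;>
        first
          | exact absurd hab (by decide)
          | simpa using hij
          | simpa using hjk
          | simpa using lt_trans hij hjk
    · intro a b
      fin_cases a <;> fin_cases b <;>
        simp only [Matrix.cons_val_zero, Matrix.cons_val_one, Matrix.head_cons,
          Matrix.cons_val_two, Matrix.tail_cons] <;>
        first
          | exact iff_of_true (by decide) h3
          | exact iff_of_true (by decide) h4
          | exact iff_of_true (by decide) (lt_trans h3 h4)
          | exact iff_of_false (by decide) (lt_irrefl _)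
          | exact iff_of_false (by decide) (asymm h3)
          | exact iff_of_false (by decide) (asymm h4)
          | exact iff_of_false (by decide) (asymm (lt_trans h3 h4))
  · rintro h ⟨f, hsm, hc⟩
    exact h (f 0) (f 1) (f 2) (hsm (show (0 : Fin 3) < 1 by decide))
      (hsm (show (1 : Fin 3) < 2 by decide))
      ((hc 0 2).mp (by decide)) ((hc 2 1).mp (by decide))

end AvoidSS

/-- `w` contains the pattern `v` if some subsequence of `w` is in the same relative
order as `v`. -/
def ContainsPat {n k : ℕ} (w : Equiv.Perm (Fin n)) (v : Equiv.Perm (Fin k)) : Prop :=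
  ∃ f : Fin k → Fin n, StrictMono f ∧ ∀ a b : Fin k, v a < v b ↔ w (f a) < w (f b)

open scoped Classical in
/-- The number of 123-avoiding permutations in `S_n` equals the number of
132-avoiding permutations in `S_n`. -/
theorem card_avoid_123_eq_card_avoid_132 (n : ℕ) :
    ((Finset.univ : Finset (Equiv.Perm (Fin n))).filter
      fun w => ¬ ContainsPat w (1 : Equiv.Perm (Fin 3))).card =
    ((Finset.univ : Finset (Equiv.Perm (Fin n))).filter
      fun w => ¬ ContainsPat w (Equiv.swap (1 : Fin 3) 2)).card := by
  have e1 : ((Finset.univ : Finset (Equiv.Perm (Fin n))).filter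
      fun w => ¬ ContainsPat w (1 : Equiv.Perm (Fin 3))) =
      (Finset.univ : Finset (Equiv.Perm (Fin n))).filter (fun w : Equiv.Perm (Fin n) => AvoidSS.NoPat123 ⇑w) :=
    Finset.filter_congr (fun w _ => AvoidSS.not_contains123_iff w)
  have e2 : ((Finset.univ : Finset (Equiv.Perm (Fin n))).filter
      fun w => ¬ ContainsPat w (Equiv.swap (1 : Fin 3) 2)) =
      (Finset.univ : Finset (Equiv.Perm (Fin n))).filter (fun w : Equiv.Perm (Fin n) => AvoidSS.NoPat132 ⇑w) :=
    Finset.filter_congr (fun w _ => AvoidSS.not_contains132_iff w)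
  rw [e1, e2]
  refine Finset.card_nbij' (i := fun w => AvoidSS.perm132 w)
    (j := fun u => AvoidSS.perm123 u) ?_ ?_ ?_ ?_
  · intro w _
    exact Finset.mem_filter.mpr ⟨Finset.mem_univ _, AvoidSS.g132_noPat w⟩
  · intro u _
    exact Finset.mem_filter.mpr ⟨Finset.mem_univ _, AvoidSS.g123_noPat u⟩
  · intro w hw
    exact AvoidSS.roundtrip123 w (Finset.mem_filter.mp hw).2
  · intro u hu
    exact AvoidSS.roundtrip132 u (Finset.mem_filter.mp hu).2
end

section
/- Every permutation of {1,…,n} has a 1-unimodal subsequence (a subsequence that is a concatenation of at most two monotone sequences) of length at least ⌈√(2n + 1/4) − 1/2⌉. -/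
/-- A list is monotone if it is sorted increasingly or decreasingly. -/
def MonotoneList {α : Type*} [LinearOrder α] (l : List α) : Prop :=
  l.Pairwise (· ≤ ·) ∨ l.Pairwise (· ≥ ·)

open Function Finset

private lemma sorted_sublist_finRange {n : ℕ} {l : List (Fin n)}
    (h : l.Pairwise (· < ·)) : l.Sublist (List.finRange n) :=
  List.sublist_of_subperm_of_pairwise
    (h.nodup.subperm (fun x _ => List.mem_finRange x)) h (List.pairwise_lt_finRange n)

private lemma key_unimodal {n K : ℕ} {α : Type*} [LinearOrder α] {f : Fin n → α}
    (hf : Function.Injective f) (hn : K * (K + 1) / 2 < n) :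
    ∃ l₁ l₂ : List α, (l₁ ++ l₂).Sublist (List.ofFn f) ∧ l₁.Pairwise (· ≤ ·) ∧
      l₂.Pairwise (· ≥ ·) ∧ K + 1 ≤ (l₁ ++ l₂).length := by
  -- increasing subsequences ending at `i`, decreasing subsequences starting at `i`
  let I : Fin n → Finset (Finset (Fin n)) := fun i =>
    univ.powerset.filter fun t => t.max = i ∧ StrictMonoOn f ↑t
  let D : Fin n → Finset (Finset (Fin n)) := fun i =>
    univ.powerset.filter fun t => t.min = i ∧ StrictAntiOn f ↑t
  have inc_i : ∀ i, {i} ∈ I i := fun i => by simp [I, StrictMonoOn]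
  have dec_i : ∀ i, {i} ∈ D i := fun i => by simp [D, StrictAntiOn]
  let A : Fin n → ℕ := fun i => max' ((I i).image card) (Nonempty.image ⟨{i}, inc_i i⟩ _)
  let B : Fin n → ℕ := fun i => max' ((D i).image card) (Nonempty.image ⟨{i}, dec_i i⟩ _)
  have hA1 : ∀ i, 1 ≤ A i := fun i => by
    apply le_max'
    exact mem_image.mpr ⟨{i}, inc_i i, card_singleton i⟩
  have hB1 : ∀ i, 1 ≤ B i := fun i => by
    apply le_max'
    exact mem_image.mpr ⟨{i}, dec_i i, card_singleton i⟩
  have hAmem : ∀ i, A i ∈ (I i).image card := fun i => max'_mem _ _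
  have hBmem : ∀ i, B i ∈ (D i).image card := fun i => max'_mem _ _
  -- key monotonicity of labels
  have inc_lt : ∀ i j : Fin n, i < j → f i < f j → A i < A j := by
    intro i j hij hfij
    obtain ⟨t, ht, htc⟩ := mem_image.mp (hAmem i)
    rw [mem_filter] at ht
    obtain ⟨-, htmax, htmono⟩ := ht
    rw [Nat.lt_iff_add_one_le]
    apply le_max'
    have hjt : j ∉ t := fun hjt =>
      absurd (le_max_of_eq hjt htmax) (not_le_of_gt hij)
    refine mem_image.mpr ⟨insert j t, mem_filter.mpr ⟨mem_powerset.mpr (subset_univ _), ?_, ?_⟩,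
      by rw [card_insert_of_notMem hjt, htc]⟩
    · convert max_insert (a := j) (s := t)
      rw [htmax, max_eq_left]
      exact WithBot.coe_le_coe.mpr hij.le
    · have hle : ∀ x ∈ t, f x ≤ f i := by
        intro x hx
        rcases lt_or_eq_of_le (le_max_of_eq hx htmax) with h | rfl
        · exact (htmono hx (mem_of_max htmax) h).le
        · exact le_rfl
      rintro x hx y hy hxy
      simp only [coe_insert, Set.mem_insert_iff, mem_coe] at hx hy
      rcases hx with rfl | hx <;> rcases hy with rfl | hy
      · exact absurd hxy (lt_irrefl _)
      · exact absurd (le_max_of_eq hy htmax) (not_le_of_gt (hij.trans hxy))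
      · exact lt_of_le_of_lt (hle x hx) hfij
      · exact htmono hx hy hxy
  have dec_lt : ∀ i j : Fin n, i < j → f j < f i → B j < B i := by
    intro i j hij hfij
    obtain ⟨t, ht, htc⟩ := mem_image.mp (hBmem j)
    rw [mem_filter] at ht
    obtain ⟨-, htmin, htanti⟩ := ht
    rw [Nat.lt_iff_add_one_le]
    apply le_max'
    have hit : i ∉ t := fun hit =>
      absurd (min_le_of_eq hit htmin) (not_le_of_gt hij)
    refine mem_image.mpr ⟨insert i t, mem_filter.mpr ⟨mem_powerset.mpr (subset_univ _), ?_, ?_⟩,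
      by rw [card_insert_of_notMem hit, htc]⟩
    · convert min_insert (a := i) (s := t)
      rw [htmin, min_eq_left]
      exact WithTop.coe_le_coe.mpr hij.le
    · have hle : ∀ x ∈ t, f x ≤ f j := by
        intro x hx
        rcases lt_or_eq_of_le (min_le_of_eq hx htmin) with h | h
        · exact (htanti (mem_of_min htmin) hx h).le
        · rw [← h]
      rintro x hx y hy hxy
      simp only [coe_insert, Set.mem_insert_iff, mem_coe] at hx hy
      rcases hx with rfl | hx <;> rcases hy with rfl | hy
      · exact absurd hxy (lt_irrefl _)
      · exact lt_of_le_of_lt (hle y hy) hfij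
      · exact absurd (min_le_of_eq hx htmin) (not_le_of_gt (hxy.trans hij))
      · exact htanti hx hy hxy
  -- it suffices to find a "big" label
  rsuffices ⟨i, hi⟩ : ∃ i, K + 2 ≤ A i + B i
  · obtain ⟨t₁, ht₁, hc₁⟩ := mem_image.mp (hAmem i)
    obtain ⟨t₂, ht₂, hc₂⟩ := mem_image.mp (hBmem i)
    rw [mem_filter] at ht₁ ht₂
    obtain ⟨-, hmax₁, hmono₁⟩ := ht₁
    obtain ⟨-, hmin₂, hanti₂⟩ := ht₂
    set s₂ := t₂.erase i with hs₂
    have hmem₁ : ∀ x ∈ t₁, x ≤ i := fun x hx => le_max_of_eq hx hmax₁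
    have hmem₂ : ∀ y ∈ s₂, i < y := fun y hy =>
      lt_of_le_of_ne (min_le_of_eq (mem_of_mem_erase hy) hmin₂) (Ne.symm (ne_of_mem_erase hy))
    refine ⟨(t₁.sort (· ≤ ·)).map f, (s₂.sort (· ≤ ·)).map f, ?_, ?_, ?_, ?_⟩
    · rw [← List.map_append, List.ofFn_eq_map]
      apply List.Sublist.map
      apply sorted_sublist_finRange
      rw [List.pairwise_append]
      refine ⟨(sortedLT_sort t₁).pairwise, (sortedLT_sort s₂).pairwise, ?_⟩
      intro a ha b hb
      exact lt_of_le_of_lt (hmem₁ a ((mem_sort _).mp ha)) (hmem₂ b ((mem_sort _).mp hb))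
    · rw [List.pairwise_map]
      exact ((sortedLT_sort t₁).pairwise).imp_of_mem fun ha hb h =>
        (hmono₁ ((mem_sort _).mp ha) ((mem_sort _).mp hb) h).le
    · rw [List.pairwise_map]
      exact ((sortedLT_sort s₂).pairwise).imp_of_mem fun ha hb h =>
        (hanti₂ (mem_of_mem_erase ((mem_sort _).mp ha))
          (mem_of_mem_erase ((mem_sort _).mp hb)) h).le
    · have hi₂ : i ∈ t₂ := mem_of_min hmin₂
      simp only [List.length_append, List.length_map, length_sort, hs₂,
        card_erase_of_mem hi₂, hc₁, hc₂]
      omega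
  -- otherwise, count labels
  by_contra! q
  have hinj : Set.InjOn (fun i => (⟨A i + B i - 2, A i - 1⟩ : Σ _ : ℕ, ℕ)) ↑(univ : Finset (Fin n)) := by
    rintro i - j - hgij
    have h1 : A i + B i - 2 = A j + B j - 2 := congrArg Sigma.fst hgij
    have h2 : A i - 1 = A j - 1 := congrArg Sigma.snd hgij
    have hAij : A i = A j := by have := hA1 i; have := hA1 j; omega
    have hBij : B i = B j := by
      have := hA1 i; have := hA1 j; have := hB1 i; have := hB1 j; omega
    by_contra hne
    rcases lt_or_gt_of_ne hne with h | h
    · rcases lt_or_gt_of_ne (fun hf' : f i = f j => hne (hf hf')) with h' | h'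
      · exact absurd hAij (ne_of_lt (inc_lt i j h h'))
      · exact absurd hBij.symm (ne_of_lt (dec_lt i j h h'))
    · rcases lt_or_gt_of_ne (fun hf' : f j = f i => hne (hf hf').symm) with h' | h'
      · exact absurd hAij.symm (ne_of_lt (inc_lt j i h h'))
      · exact absurd hBij (ne_of_lt (dec_lt j i h h'))
  have hmaps : ∀ i ∈ (univ : Finset (Fin n)),
      (⟨A i + B i - 2, A i - 1⟩ : Σ _ : ℕ, ℕ) ∈ (range K).sigma fun s => range (s + 1) := by
    rintro i -
    have := q i
    have := hA1 i
    have := hB1 i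
    simp only [mem_sigma, mem_range]
    omega
  have hcount : n ≤ K * (K + 1) / 2 := by
    have hle := card_le_card_of_injOn _ hmaps hinj
    rw [card_univ, Fintype.card_fin, card_sigma] at hle
    simp only [card_range] at hle
    have hsum : ∀ m : ℕ, (∑ s ∈ range m, (s + 1)) * 2 = m * (m + 1) := by
      intro m
      induction m with
      | zero => simp
      | succ p ih => rw [Finset.sum_range_succ, add_mul, ih]; ring
    have := hsum K
    omega
  omega

/-- Every permutation of `{1,…,n}` has a 1-unimodal subsequence (a concatenation of
at most two monotone sequences) of length at least `⌈√(2n + 1/4) − 1/2⌉`. -/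
theorem exists_unimodal_subseq (n : ℕ) (w : Equiv.Perm (Fin n)) :
    ∃ l₁ l₂ : List (Fin n), (l₁ ++ l₂).Sublist (List.ofFn w) ∧
      MonotoneList l₁ ∧ MonotoneList l₂ ∧
      ⌈Real.sqrt (2 * n + 1 / 4) - 1 / 2⌉₊ ≤ (l₁ ++ l₂).length := by
  set k := ⌈Real.sqrt (2 * n + 1 / 4) - 1 / 2⌉₊ with hk
  rcases Nat.eq_zero_or_pos k with h0 | hpos
  · exact ⟨[], [], List.nil_sublist _, Or.inl List.Pairwise.nil, Or.inl List.Pairwise.nil,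
      by simp [h0]⟩
  · set K := k - 1 with hK
    have hKlt : K < k := by omega
    have hreal : (K : ℝ) < Real.sqrt (2 * n + 1 / 4) - 1 / 2 := by
      rw [hk] at hKlt
      exact_mod_cast Nat.lt_ceil.mp hKlt
    have hsq : ((K : ℝ) + 1 / 2) ^ 2 < 2 * n + 1 / 4 := by
      have h1 : ((K : ℝ) + 1 / 2) < Real.sqrt (2 * n + 1 / 4) := by linarith
      have h2 : (0 : ℝ) ≤ 2 * n + 1 / 4 := by positivity
      have h3 : Real.sqrt (2 * n + 1 / 4) ^ 2 = 2 * n + 1 / 4 := Real.sq_sqrt h2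
      nlinarith [Real.sqrt_nonneg (2 * (n : ℝ) + 1 / 4)]
    have hKn : K * (K + 1) < 2 * n := by
      have : ((K * (K + 1) : ℕ) : ℝ) < ((2 * n : ℕ) : ℝ) := by push_cast; nlinarith
      exact_mod_cast this
    have hdiv : K * (K + 1) / 2 < n := by
      obtain ⟨m, hm⟩ := Nat.even_mul_succ_self K
      omega
    obtain ⟨l₁, l₂, hsub, hs₁, hs₂, hlen⟩ := key_unimodal (f := (w : Fin n → Fin n))
      w.injective hdiv
    exact ⟨l₁, l₂, hsub, Or.inl hs₁, Or.inr hs₂, by omega⟩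
end

section
/- The number of permutations w ∈ S_n (n ≥ 1) whose longest alternating subsequence has length at most 2 equals 2^{n-1}. -/
/-- A list `b₀ b₁ b₂ ⋯` is alternating if `b₀ > b₁ < b₂ > b₃ < ⋯`. -/
def IsAlt {α : Type*} [LinearOrder α] (l : List α) : Prop :=
  ∀ i : ℕ, ∀ h : i + 1 < l.length,
    (i % 2 = 0 → l[i + 1]'h < l[i]'(Nat.lt_of_succ_lt h)) ∧
    (i % 2 = 1 → l[i]'(Nat.lt_of_succ_lt h) < l[i + 1]'h)

/-- The length `as(w)` of the longest alternating subsequence of the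
permutation `w` of `{1,…,n}`. -/
noncomputable def asLen (n : ℕ) (w : Equiv.Perm (Fin n)) : ℕ :=
  sSup { k | ∃ l : List (Fin n), l.Sublist (List.ofFn w) ∧ IsAlt l ∧ l.length = k }

section AuxProof

def HasValley {n : ℕ} (w : Equiv.Perm (Fin n)) : Prop :=
  ∃ i j k : Fin n, i < j ∧ j < k ∧ w j < w i ∧ w j < w k

lemma isAlt_nil {α : Type*} [LinearOrder α] : IsAlt ([] : List α) := by
  intro i h; simp at h

lemma isAlt_triple {α : Type*} [LinearOrder α] {a b c : α} (h1 : b < a) (h2 : b < c) :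
    IsAlt [a, b, c] := by
  intro i h
  simp only [List.length_cons, List.length_nil] at h
  have hi2 : i < 2 := by omega
  interval_cases i <;> refine ⟨fun hm => ?_, fun hm => ?_⟩ <;> simp_all

lemma bddAbove_asSet (n : ℕ) (w : Equiv.Perm (Fin n)) :
    BddAbove { k | ∃ l : List (Fin n), l.Sublist (List.ofFn w) ∧ IsAlt l ∧ l.length = k } := by
  refine ⟨n, fun k hk => ?_⟩
  obtain ⟨l, hsub, -, rfl⟩ := hk
  simpa using hsub.length_le

lemma asLen_le_two_iff {n : ℕ} (w : Equiv.Perm (Fin n)) :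
    asLen n w ≤ 2 ↔ ¬ HasValley w := by
  constructor
  · intro hle hv
    obtain ⟨i, j, k, hij, hjk, h1, h2⟩ := hv
    have h3 : (3 : ℕ) ≤ asLen n w := by
      apply le_csSup (bddAbove_asSet n w)
      refine ⟨[w i, w j, w k], ?_, isAlt_triple h1 h2, rfl⟩
      have hlen : (List.ofFn w).length = n := List.length_ofFn
      have : [w i, w j, w k] = List.map (List.ofFn w).get
          [Fin.cast hlen.symm i, Fin.cast hlen.symm j, Fin.cast hlen.symm k] := by
        simp [List.get_ofFn]
      rw [this]
      apply List.map_getElem_sublist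
      simp only [List.pairwise_cons, List.mem_cons]
      refine ⟨?_, ?_, ?_⟩
      · rintro b (rfl | rfl | h) <;> first
          | exact hij
          | exact (lt_trans hij hjk : i < k)
          | simp_all
      · rintro b (rfl | h) <;> first | exact hjk | simp_all
      · simp
    omega
  · intro hv
    refine csSup_le ⟨0, [], List.nil_sublist _, isAlt_nil, rfl⟩ ?_
    rintro k ⟨l, hsub, halt, rfl⟩
    by_contra hgt
    push_neg at hgt
    obtain ⟨f, hf⟩ := List.sublist_iff_exists_fin_orderEmbedding_get_eq.mp hsub
    have hlen : (List.ofFn w).length = n := List.length_ofFn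
    have h0 : 0 < l.length := by omega
    have h1 : 1 < l.length := by omega
    have h2 : 2 < l.length := by omega
    set a0 : Fin l.length := ⟨0, h0⟩
    set a1 : Fin l.length := ⟨1, h1⟩
    set a2 : Fin l.length := ⟨2, h2⟩
    have e0 := hf a0
    have e1 := hf a1
    have e2 := hf a2
    rw [List.get_ofFn] at e0 e1 e2
    have v1 : l.get a1 < l.get a0 := by
      have := (halt 0 h1).1 rfl
      simpa [a0, a1, List.get_eq_getElem] using this
    have v2 : l.get a1 < l.get a2 := by
      have := (halt 1 h2).2 rfl
      simpa [a1, a2, List.get_eq_getElem] using this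
    apply hv
    refine ⟨Fin.cast hlen (f a0), Fin.cast hlen (f a1), Fin.cast hlen (f a2), ?_, ?_, ?_, ?_⟩
    · have : f a0 < f a1 := f.strictMono (by simp [a0, a1, Fin.lt_def])
      exact this
    · have : f a1 < f a2 := f.strictMono (by simp [a1, a2, Fin.lt_def])
      exact this
    · rw [← e0, ← e1]; exact v1
    · rw [← e1, ← e2]; exact v2



open List Finset

variable {m : ℕ}

def mkLeft (S : Finset (Fin m)) : List (Fin (m + 1)) :=
  (S.sort (· ≤ ·)).map Fin.castSucc

def mkRight (S : Finset (Fin m)) : List (Fin (m + 1)) :=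
  ((Sᶜ.sort (· ≤ ·)).reverse).map Fin.castSucc

def mkList (S : Finset (Fin m)) : List (Fin (m + 1)) :=
  mkLeft S ++ Fin.last m :: mkRight S

lemma length_mkLeft (S : Finset (Fin m)) : (mkLeft S).length = S.card := by
  simp [mkLeft, Finset.length_sort]

lemma length_mkList (S : Finset (Fin m)) : (mkList S).length = m + 1 := by
  have h := Finset.card_compl S
  have h2 : S.card ≤ m := by simpa using Finset.card_le_univ S
  simp only [mkList, mkLeft, mkRight, List.length_append, List.length_map, List.length_cons,
    List.length_reverse, Finset.length_sort, Fintype.card_fin] at *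
  omega

lemma sorted_mkLeft (S : Finset (Fin m)) : (mkLeft S).Pairwise (· < ·) := by
  exact List.Pairwise.map _ (fun a b h => by simpa using h) ((Finset.sortedLT_sort S).pairwise)

lemma sorted_mkRight (S : Finset (Fin m)) : (mkRight S).Pairwise (· > ·) := by
  apply List.Pairwise.map _ (fun a b h => by simpa using h)
  exact List.pairwise_reverse.mpr ((Finset.sortedLT_sort Sᶜ).pairwise)

lemma mem_mkLeft_iff {S : Finset (Fin m)} {x : Fin (m + 1)} :
    x ∈ mkLeft S ↔ ∃ v ∈ S, Fin.castSucc v = x := by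
  simp [mkLeft]

lemma mem_mkRight_iff {S : Finset (Fin m)} {x : Fin (m + 1)} :
    x ∈ mkRight S ↔ ∃ v, v ∉ S ∧ Fin.castSucc v = x := by
  simp [mkRight]

lemma last_not_mem_mkLeft (S : Finset (Fin m)) : Fin.last m ∉ mkLeft S := by
  rw [mem_mkLeft_iff]
  rintro ⟨v, -, hv⟩
  exact absurd hv (Fin.castSucc_lt_last v).ne

lemma last_not_mem_mkRight (S : Finset (Fin m)) : Fin.last m ∉ mkRight S := by
  rw [mem_mkRight_iff]
  rintro ⟨v, -, hv⟩
  exact absurd hv (Fin.castSucc_lt_last v).ne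

lemma mem_mkList (S : Finset (Fin m)) (x : Fin (m + 1)) : x ∈ mkList S := by
  rcases Fin.eq_castSucc_or_eq_last x with ⟨j, rfl⟩ | rfl
  · by_cases hj : j ∈ S
    · exact List.mem_append_left _ (mem_mkLeft_iff.mpr ⟨j, hj, rfl⟩)
    · exact List.mem_append_right _ (List.mem_cons_of_mem _ (mem_mkRight_iff.mpr ⟨j, hj, rfl⟩))
  · exact List.mem_append_right _ List.mem_cons_self

lemma nodup_mkLeft (S : Finset (Fin m)) : (mkLeft S).Nodup :=
  (Finset.sort_nodup S _).map (Fin.castSucc_injective m)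

lemma nodup_mkRight (S : Finset (Fin m)) : (mkRight S).Nodup :=
  (List.nodup_reverse.mpr (Finset.sort_nodup Sᶜ _)).map (Fin.castSucc_injective m)

lemma nodup_mkList (S : Finset (Fin m)) : (mkList S).Nodup := by
  rw [mkList, List.nodup_append]
  refine ⟨nodup_mkLeft S, ?_, ?_⟩
  · rw [List.nodup_cons]
    exact ⟨last_not_mem_mkRight S, nodup_mkRight S⟩
  · intro a ha b ha' hab
    subst hab
    rcases List.mem_cons.mp ha' with rfl | ha'
    · exact last_not_mem_mkLeft S ha
    · obtain ⟨v, hv, rfl⟩ := mem_mkLeft_iff.mp ha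
      obtain ⟨v', hv', he⟩ := mem_mkRight_iff.mp ha'
      rw [Fin.castSucc_inj] at he
      exact hv' (he ▸ hv)


noncomputable def toPerm (S : Finset (Fin m)) : Equiv.Perm (Fin (m + 1)) :=
  Equiv.ofBijective (fun i => (mkList S).get (Fin.cast (length_mkList S).symm i))
    (by
      rw [Fintype.bijective_iff_injective_and_card]
      refine ⟨fun a b hab => ?_, rfl⟩
      have := List.nodup_iff_injective_get.mp (nodup_mkList S) hab
      simpa [Fin.ext_iff] using congrArg Fin.val this)

lemma toPerm_apply (S : Finset (Fin m)) (i : Fin (m + 1)) :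
    toPerm S i = (mkList S)[i.val]'(by rw [length_mkList]; exact i.isLt) := rfl

lemma ofFn_toPerm (S : Finset (Fin m)) : List.ofFn (toPerm S) = mkList S := by
  apply List.ext_getElem
  · simp [length_mkList]
  · intro i h1 h2
    rw [List.getElem_ofFn]
    exact toPerm_apply S _

lemma mkList_lt_left (S : Finset (Fin m)) {i j : ℕ} (hij : i < j) (hj : j < S.card)
    (hi1 : i < (mkList S).length) (hj1 : j < (mkList S).length) :
    (mkList S)[i] < (mkList S)[j] := by
  have hi : i < (mkLeft S).length := by rw [length_mkLeft]; omega
  have hjL : j < (mkLeft S).length := by rw [length_mkLeft]; exact hj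
  have e1 : (mkList S)[i]'hi1 = (mkLeft S)[i]'hi := List.getElem_append_left hi
  have e2 : (mkList S)[j]'hj1 = (mkLeft S)[j]'hjL := List.getElem_append_left hjL
  rw [e1, e2]
  exact List.pairwise_iff_getElem.mp (sorted_mkLeft S) i j hi hjL hij

lemma mkList_getElem_card (S : Finset (Fin m)) (h : S.card < (mkList S).length) :
    (mkList S)[S.card] = Fin.last m := by
  have e : (mkList S)[S.card]'h
      = (Fin.last m :: mkRight S)[S.card - (mkLeft S).length]'(by
          simp only [length_mkLeft]; simp) :=
    List.getElem_append_right (by rw [length_mkLeft])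
  rw [e]
  simp [length_mkLeft]

lemma mkList_gt_right (S : Finset (Fin m)) {j k : ℕ} (hj : S.card < j) (hjk : j < k)
    (hk : k < (mkList S).length) :
    (mkList S)[k]'hk < (mkList S)[j]'(by omega) := by
  have hL : (mkLeft S).length = S.card := length_mkLeft S
  have hlen2 : (mkList S).length = (mkLeft S).length + 1 + (mkRight S).length := by
    simp [mkList]; omega
  have ej : (mkList S)[j]'(by omega)
      = (Fin.last m :: mkRight S)[j - (mkLeft S).length]'(by simp only [List.length_cons]; omega) :=
    List.getElem_append_right (by omega)
  have ek : (mkList S)[k]'hk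
      = (Fin.last m :: mkRight S)[k - (mkLeft S).length]'(by simp only [List.length_cons]; omega) :=
    List.getElem_append_right (by omega)
  rw [ej, ek, List.getElem_cons, List.getElem_cons]
  split_ifs with h1 h2
  · omega
  · omega
  · omega
  · exact List.pairwise_iff_getElem.mp (sorted_mkRight S)
      (j - (mkLeft S).length - 1) (k - (mkLeft S).length - 1)
      (by simp only [mkRight, mkLeft, List.length_map, List.length_reverse,
            Finset.length_sort] at hlen2 ⊢; omega)
      (by simp only [mkRight, mkLeft, List.length_map, List.length_reverse,
            Finset.length_sort] at hlen2 ⊢; omega)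
      (by omega)
lemma not_hasValley_toPerm (S : Finset (Fin m)) : ¬ HasValley (toPerm S) := by
  rintro ⟨i, j, k, hij, hjk, h1, h2⟩
  rw [toPerm_apply, toPerm_apply] at h1
  rw [toPerm_apply, toPerm_apply] at h2
  rcases lt_trichotomy j.val S.card with hc | hc | hc
  · exact absurd h1 (asymm (mkList_lt_left S hij hc _ _))
  · have hlast : (mkList S)[(j : ℕ)]'(by rw [length_mkList]; exact j.isLt) = Fin.last m := by
      simp only [hc]
      exact mkList_getElem_card S (by rw [length_mkList]; omega)
    rw [hlast] at h2
    exact absurd h2 (not_lt.mpr (Fin.le_last _))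
  · exact absurd h2 (asymm (mkList_gt_right S hc hjk _))

lemma takeWhile_append_cons {α : Type*} (p : α → Bool) (A : List α) (b : α) (B : List α)
    (hA : ∀ x ∈ A, p x = true) (hb : p b = false) :
    (A ++ b :: B).takeWhile p = A := by
  induction A with
  | nil => simp [List.takeWhile_cons, hb]
  | cons a A ih =>
    simp [List.takeWhile_cons, hA a (by simp), ih (fun x hx => hA x (by simp [hx]))]

lemma takeWhile_mkList (S : Finset (Fin m)) :
    (mkList S).takeWhile (fun x => x != Fin.last m) = mkLeft S := by
  apply takeWhile_append_cons
  · intro x hx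
    simp only [bne_iff_ne, ne_eq, decide_eq_true_eq]
    intro he
    exact last_not_mem_mkLeft S (he ▸ hx)
  · simp

lemma toPerm_injective : Function.Injective (toPerm (m := m)) := by
  intro S T h
  have h1 : mkList S = mkList T := by rw [← ofFn_toPerm, ← ofFn_toPerm, h]
  have h2 : mkLeft S = mkLeft T := by
    rw [← takeWhile_mkList S, ← takeWhile_mkList T, h1]
  have h3 : S.sort (· ≤ ·) = T.sort (· ≤ ·) :=
    List.map_injective_iff.mpr (Fin.castSucc_injective m) h2
  have h4 := congrArg List.toFinset h3
  rwa [Finset.sort_toFinset, Finset.sort_toFinset] at h4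

lemma eq_of_sorted_lt {α : Type*} [LinearOrder α] {l₁ l₂ : List α}
    (h₁ : l₁.Pairwise (· < ·)) (h₂ : l₂.Pairwise (· < ·)) (h : ∀ x, x ∈ l₁ ↔ x ∈ l₂) :
    l₁ = l₂ := by
  haveI : IsAntisymm α (· < ·) := ⟨fun a b h h' => absurd h' (asymm h)⟩
  exact List.Perm.eq_of_pairwise' h₁ h₂ ((List.perm_ext_iff_of_nodup h₁.nodup h₂.nodup).mpr h)

lemma eq_of_sorted_gt {α : Type*} [LinearOrder α] {l₁ l₂ : List α}
    (h₁ : l₁.Pairwise (· > ·)) (h₂ : l₂.Pairwise (· > ·)) (h : ∀ x, x ∈ l₁ ↔ x ∈ l₂) :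
    l₁ = l₂ := by
  haveI : IsIrrefl α (· > ·) := ⟨fun a => lt_irrefl a⟩
  haveI : IsAntisymm α (· > ·) := ⟨fun a b h h' => absurd h' (asymm h)⟩
  exact List.Perm.eq_of_pairwise' h₁ h₂ ((List.perm_ext_iff_of_nodup h₁.nodup h₂.nodup).mpr h)

lemma perm_eq_of_ofFn_eq {n : ℕ} {w v : Equiv.Perm (Fin n)}
    (h : List.ofFn ⇑w = List.ofFn ⇑v) : w = v := by
  have := List.ofFn_inj.mp h
  exact Equiv.coe_fn_injective this

lemma exists_toPerm {w : Equiv.Perm (Fin (m + 1))} (hw : ¬ HasValley w) :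
    ∃ S : Finset (Fin m), toPerm S = w := by
  classical
  set p : Fin (m + 1) := w.symm (Fin.last m) with hp
  set L : List (Fin (m + 1)) := List.ofFn ⇑w with hL
  have hLlen : L.length = m + 1 := by simp [hL]
  have wp_last : w p = Fin.last m := by rw [hp]; exact w.apply_symm_apply _
  have wlt_last : ∀ x : Fin (m + 1), x ≠ p → w x < Fin.last m := by
    intro x hx
    refine lt_of_le_of_ne (Fin.le_last _) fun he => hx ?_
    have h2 := congrArg w.symm he
    rwa [Equiv.symm_apply_apply, ← hp] at h2
  have claimA : ∀ i j : Fin (m + 1), i < j → j ≤ p → w i < w j := by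
    intro i j hij hjp
    rcases lt_trichotomy (w i) (w j) with h | h | h
    · exact h
    · exact absurd (w.injective h) hij.ne
    · exfalso
      rcases eq_or_lt_of_le hjp with he | hjp'
      · rw [he, wp_last] at h
        exact absurd h (not_lt.mpr (Fin.le_last _))
      · exact hw ⟨i, j, p, hij, hjp', h, wp_last ▸ wlt_last j hjp'.ne⟩
  have claimB : ∀ j k : Fin (m + 1), p ≤ j → j < k → w k < w j := by
    intro j k hpj hjk
    rcases lt_trichotomy (w k) (w j) with h | h | h
    · exact h
    · exact absurd (w.injective h) hjk.ne'
    · exfalso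
      rcases eq_or_lt_of_le hpj with he | hpj'
      · rw [← he, wp_last] at h
        exact absurd h (not_lt.mpr (Fin.le_last _))
      · exact hw ⟨p, j, k, hpj', hjk, wp_last ▸ wlt_last j hpj'.ne', h⟩
  set S : Finset (Fin m) := Finset.univ.filter (fun v : Fin m => w.symm v.castSucc < p) with hS
  refine ⟨S, ?_⟩
  have hgetL : ∀ (i : ℕ) (hi : i < L.length), L[i] = w ⟨i, by omega⟩ := by
    intro i hi
    show (List.ofFn ⇑w)[i]'(hL ▸ hi) = _
    rw [List.getElem_ofFn]
  have hsymm_lt : ∀ x : Fin (m + 1), w.symm x < p → x ≠ Fin.last m := by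
    intro x hx he
    rw [he, ← hp] at hx
    exact lt_irrefl _ hx
  -- left part
  have hleft : mkLeft S = L.take p.val := by
    have hlt : (L.take p.val).length = p.val := by
      rw [List.length_take, hLlen]
      omega
    apply eq_of_sorted_lt (sorted_mkLeft S)
    · rw [List.pairwise_iff_getElem]
      intro a b ha hb hab
      rw [hlt] at ha hb
      rw [List.getElem_take, List.getElem_take, hgetL a (by omega), hgetL b (by omega)]
      exact claimA _ _ (by simp [Fin.lt_def, hab]) (le_of_lt (by simp [Fin.lt_def]; omega))
    · intro x
      rw [mem_mkLeft_iff, List.mem_iff_getElem]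
      constructor
      · rintro ⟨v, hv, rfl⟩
        rw [hS] at hv
        simp only [Finset.mem_filter, Finset.mem_univ, true_and] at hv
        refine ⟨(w.symm v.castSucc).val, by rw [hlt]; exact hv, ?_⟩
        rw [List.getElem_take, hgetL _ (by omega)]
        simp [Fin.eta]
      · rintro ⟨i, hi, rfl⟩
        rw [hlt] at hi
        rw [List.getElem_take, hgetL i (by omega)]
        have hsym : w.symm (w ⟨i, by omega⟩) = ⟨i, by omega⟩ := w.symm_apply_apply _
        have hlt2 : w.symm (w ⟨i, by omega⟩) < p := by rw [hsym]; exact by simp [Fin.lt_def]; omega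
        have hne := hsymm_lt _ hlt2
        rcases Fin.eq_castSucc_or_eq_last (w ⟨i, by omega⟩) with ⟨v, hv⟩ | he
        · refine ⟨v, ?_, hv.symm⟩
          rw [hS]
          simp only [Finset.mem_filter, Finset.mem_univ, true_and]
          rw [← hv]
          exact hlt2
        · exact absurd he hne
  -- right part
  have hdroplen : (L.drop (p.val + 1)).length = m - p.val := by
    rw [List.length_drop, hLlen]
    omega
  have hright : mkRight S = L.drop (p.val + 1) := by
    apply eq_of_sorted_gt (sorted_mkRight S)
    · rw [List.pairwise_iff_getElem]
      intro a b ha hb hab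
      rw [hdroplen] at ha hb
      rw [List.getElem_drop, List.getElem_drop, hgetL _ (by omega), hgetL _ (by omega)]
      exact claimB ⟨p.val + 1 + a, by omega⟩ ⟨p.val + 1 + b, by omega⟩
        (le_of_lt (by simp only [Fin.lt_def]; omega)) (by simp only [Fin.lt_def]; omega)
    · intro x
      rw [mem_mkRight_iff, List.mem_iff_getElem]
      constructor
      · rintro ⟨v, hv, rfl⟩
        rw [hS] at hv
        simp only [Finset.mem_filter, Finset.mem_univ, true_and, not_lt] at hv
        have hne : w.symm v.castSucc ≠ p := by
          intro he
          have := congrArg w he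
          rw [w.apply_symm_apply, wp_last] at this
          exact absurd this (Fin.castSucc_lt_last v).ne
        have hgt : p < w.symm v.castSucc := lt_of_le_of_ne hv (Ne.symm hne)
        refine ⟨(w.symm v.castSucc).val - (p.val + 1), ?_, ?_⟩
        · rw [hdroplen]
          have := (w.symm v.castSucc).isLt
          have := hgt
          rw [Fin.lt_def] at this
          omega
        · rw [List.getElem_drop, hgetL _ ?hb]
          case hb =>
            have := (w.symm v.castSucc).isLt
            have h2 := hgt
            rw [Fin.lt_def] at h2
            omega
          have he : p.val + 1 + ((w.symm v.castSucc).val - (p.val + 1)) = (w.symm v.castSucc).val := by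
            have h2 := hgt
            rw [Fin.lt_def] at h2
            omega
          have : (⟨p.val + 1 + ((w.symm v.castSucc).val - (p.val + 1)), by omega⟩ : Fin (m + 1))
              = w.symm v.castSucc := by
            ext; exact he
          rw [this, w.apply_symm_apply]
      · rintro ⟨i, hi, rfl⟩
        rw [hdroplen] at hi
        rw [List.getElem_drop, hgetL _ (by omega)]
        set x := w ⟨p.val + 1 + i, by omega⟩ with hx
        have hne : (⟨p.val + 1 + i, by omega⟩ : Fin (m + 1)) ≠ p := by
          intro he
          have := congrArg Fin.val he
          simp at this
          omega
        have hxne : x ≠ Fin.last m := by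
          intro he
          have h2 := congrArg w.symm he
          rw [hx, Equiv.symm_apply_apply] at h2
          exact hne (h2.trans hp.symm)
        rcases Fin.eq_castSucc_or_eq_last x with ⟨v, hv⟩ | he
        · refine ⟨v, ?_, hv.symm⟩
          rw [hS]
          simp only [Finset.mem_filter, Finset.mem_univ, true_and, not_lt]
          rw [← hv, hx, Equiv.symm_apply_apply]
          rw [Fin.le_def]
          simp only [Fin.lt_def] at *
          omega
        · exact absurd he hxne
  -- assemble
  have hplt : p.val < L.length := by rw [hLlen]; omega
  have hlastL : L[p.val]'hplt = Fin.last m := by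
    rw [hgetL _ hplt]
    rw [show (⟨p.val, by omega⟩ : Fin (m + 1)) = p from Fin.eta p _]
    exact wp_last
  have hdec : L = L.take p.val ++ L[p.val]'hplt :: L.drop (p.val + 1) := by
    conv_lhs => rw [← List.take_append_drop p.val L]
    rw [List.drop_eq_getElem_cons hplt]
  apply perm_eq_of_ofFn_eq
  rw [ofFn_toPerm, ← hL]
  show mkLeft S ++ Fin.last m :: mkRight S = L
  rw [hleft, hright, ← hlastL]
  exact hdec.symm


end AuxProof

open scoped Classical in
/-- For `n ≥ 1`, the number of permutations in `S_n` whose longest alternating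
subsequence has length at most 2 equals `2^(n-1)`. -/
theorem card_asLen_le_two (n : ℕ) (hn : 1 ≤ n) :
    ((Finset.univ : Finset (Equiv.Perm (Fin n))).filter
      fun w => asLen n w ≤ 2).card = 2 ^ (n - 1) := by
  obtain ⟨m, rfl⟩ : ∃ m, n = m + 1 := ⟨n - 1, by omega⟩
  have hcard : (Finset.univ : Finset (Finset (Fin m))).card = 2 ^ (m + 1 - 1) := by
    simp [Finset.card_univ, Fintype.card_finset]
  rw [← hcard]
  symm
  apply Finset.card_bij (fun S _ => toPerm S)
  · intro S _
    simp only [Finset.mem_filter, Finset.mem_univ, true_and]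
    rw [asLen_le_two_iff]
    exact not_hasValley_toPerm S
  · intro S _ T _ h
    exact toPerm_injective h
  · intro w hw
    simp only [Finset.mem_filter, Finset.mem_univ, true_and] at hw
    rw [asLen_le_two_iff] at hw
    obtain ⟨S, hS⟩ := exists_toPerm hw
    exact ⟨S, Finset.mem_univ S, hS⟩
end

section
/- For n > 1, the average over all w ∈ S_n of the length as(w) of the longest alternating subsequence of w equals (4n+1)/6. -/
set_option linter.unnecessarySeqFocus false
set_option linter.unnecessarySimpa false
set_option maxHeartbeats 1000000

section Aux
variable {α : Type*} [LinearOrder α]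




def AltB : Bool → List α → Prop
  | _, [] => True
  | _, [_] => True
  | b, x :: y :: t => (if b then y < x else x < y) ∧ AltB (!b) (y :: t)

def greedy : Bool → List α → List α
  | _, [] => []
  | _, [x] => [x]
  | b, x :: y :: t =>
      if (if b then y < x else x < y) then x :: greedy (!b) (y :: t) else greedy b (y :: t)

def chg : List α → ℕ
  | x :: y :: z :: t => (if decide (y < x) ≠ decide (z < y) then 1 else 0) + chg (y :: z :: t)
  | _ => 0

lemma greedy_sublist (b : Bool) (l : List α) : (greedy b l).Sublist l := by
  induction l generalizing b with
  | nil => simp [greedy]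
  | cons x t ih =>
    cases t with
    | nil => simp [greedy]
    | cons y t' =>
      rw [greedy]
      by_cases hc : (if b then y < x else x < y)
      · rw [if_pos hc]; exact List.cons_sublist_cons.mpr (ih _)
      · rw [if_neg hc]; exact (ih _).trans (List.sublist_cons_self _ _)

lemma greedy_ne_nil (b : Bool) (x : α) (t : List α) : greedy b (x :: t) ≠ [] := by
  induction t generalizing b x with
  | nil => simp [greedy]
  | cons y t' ih =>
    rw [greedy]
    by_cases hc : (if b then y < x else x < y)
    · rw [if_pos hc]; simp
    · rw [if_neg hc]; exact ih _ _


lemma greedy_head_le : ∀ (t : List α) (x z : α) (r : List α), greedy false (x :: t) = z :: r → z ≤ x := by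
  intro t
  induction t with
  | nil => intro x z r h; simp [greedy] at h; simp [h.1]
  | cons y t' ih =>
    intro x z r h
    rw [greedy] at h
    by_cases hc : x < y
    · rw [if_pos (by simpa using hc)] at h
      cases h; exact le_refl _
    · rw [if_neg (by simpa using hc)] at h
      exact (ih y z r h).trans (le_of_not_gt hc)

lemma greedy_head_ge : ∀ (t : List α) (x z : α) (r : List α), greedy true (x :: t) = z :: r → x ≤ z := by
  intro t
  induction t with
  | nil => intro x z r h; simp [greedy] at h; simp [h.1]
  | cons y t' ih =>
    intro x z r h
    rw [greedy] at h
    by_cases hc : y < x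
    · rw [if_pos (by simpa using hc)] at h
      cases h; exact le_refl _
    · rw [if_neg (by simpa using hc)] at h
      exact (le_of_not_gt hc).trans (ih y z r h)

lemma greedy_alt : ∀ (l : List α) (b : Bool), AltB b (greedy b l) := by
  intro l
  induction l with
  | nil => intro b; simp [greedy, AltB]
  | cons x t ih =>
    intro b
    cases t with
    | nil => simp [greedy, AltB]
    | cons y t' =>
      rw [greedy]
      by_cases hc : (if b then y < x else x < y)
      · rw [if_pos hc]
        rcases hg : greedy (!b) (y :: t') with _ | ⟨z, r⟩
        · exact absurd hg (greedy_ne_nil _ _ _)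
        · rw [AltB]
          refine ⟨?_, hg ▸ ih (!b)⟩
          cases b with
          | true =>
            rw [if_pos rfl]
            rw [if_pos rfl] at hc
            exact lt_of_le_of_lt (greedy_head_le t' y z r hg) hc
          | false =>
            rw [if_neg (by simp)]
            rw [if_neg (by simp)] at hc
            exact lt_of_lt_of_le hc (greedy_head_ge t' y z r hg)
      · rw [if_neg hc]; exact ih b

lemma greedy_balance : ∀ l : List α,
    (greedy true l).length ≤ (greedy false l).length + 1 ∧
    (greedy false l).length ≤ (greedy true l).length + 1 := by
  intro l
  induction l with
  | nil => simp [greedy]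
  | cons x t ih =>
    cases t with
    | nil => simp [greedy]
    | cons y t' =>
      rcases lt_trichotomy x y with h | h | h
      · simp only [greedy, if_pos (show (x < y) from h), if_neg (asymm h), if_true, if_false,
          Bool.ite_eq_true_distrib]
        simp [h, asymm h]
        omega
      · subst h
        simp [greedy]
        exact ⟨ih.1, ih.2⟩
      · simp only [greedy]
        simp [h, asymm h]
        omega

lemma alt_le_greedy : ∀ (l s : List α) (b : Bool), s.Sublist l → AltB b s →
    s.length ≤ (greedy b l).length := by
  intro l
  induction l with
  | nil => intro s b hs _; simp_all
  | cons x t ih =>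
    intro s b hs halt
    cases t with
    | nil =>
      rcases List.sublist_singleton.mp hs with rfl | rfl <;> simp [greedy]
    | cons y t' =>
      rcases List.sublist_cons_iff.mp hs with hs' | ⟨s', rfl, hs'⟩
      · -- s is a sublist of y :: t'
        by_cases hc : (if b then y < x else x < y)
        · rw [greedy, if_pos hc]
          calc s.length ≤ (greedy b (y :: t')).length := ih s b hs' halt
            _ ≤ (greedy (!b) (y :: t')).length + 1 := by
                cases b
                · exact (greedy_balance (y :: t')).2
                · exact (greedy_balance (y :: t')).1
            _ = (x :: greedy (!b) (y :: t')).length := by simp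
        · rw [greedy, if_neg hc]
          exact ih s b hs' halt
      · -- s = x :: s'
        cases s' with
        | nil =>
          have : 1 ≤ (greedy b (x :: y :: t')).length :=
            List.length_pos_iff.mpr (greedy_ne_nil _ _ _)
          simpa using this
        | cons h r =>
          rw [AltB] at halt
          obtain ⟨hcmp, halt'⟩ := halt
          by_cases hc : (if b then y < x else x < y)
          · rw [greedy, if_pos hc]
            simpa using ih (h :: r) (!b) hs' halt'
          · rw [greedy, if_neg hc]
            cases b with
            | true =>
              rw [if_pos rfl] at hc hcmp
              have hxy : x ≤ y := le_of_not_gt hc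
              have hhy : h ≠ y := fun he => hc (he ▸ hcmp)
              have hrt : (h :: r).Sublist t' := by
                rcases List.sublist_cons_iff.mp hs' with h1 | ⟨r2, he, _⟩
                · exact h1
                · rw [List.cons.injEq] at he
                  exact absurd he.1 hhy
              have hs2 : (y :: h :: r).Sublist (y :: t') := List.cons_sublist_cons.mpr hrt
              have halt2 : AltB true (y :: h :: r) := by
                rw [AltB]
                exact ⟨by rw [if_pos rfl]; exact lt_of_lt_of_le hcmp hxy, halt'⟩
              simpa using ih (y :: h :: r) true hs2 halt2
            | false =>
              rw [if_neg (by simp)] at hc hcmp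
              have hxy : y ≤ x := le_of_not_gt hc
              have hhy : h ≠ y := fun he => hc (he ▸ hcmp)
              have hrt : (h :: r).Sublist t' := by
                rcases List.sublist_cons_iff.mp hs' with h1 | ⟨r2, he, _⟩
                · exact h1
                · rw [List.cons.injEq] at he
                  exact absurd he.1 hhy
              have hs2 : (y :: h :: r).Sublist (y :: t') := List.cons_sublist_cons.mpr hrt
              have halt2 : AltB false (y :: h :: r) := by
                rw [AltB]
                exact ⟨by rw [if_neg (by simp)]; exact lt_of_le_of_lt hxy hcmp, halt'⟩
              simpa using ih (y :: h :: r) false hs2 halt2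

lemma greedy_length : ∀ (t : List α) (b : Bool) (x y : α), List.Chain' (· ≠ ·) (x :: y :: t) →
    (greedy b (x :: y :: t)).length
      = chg (x :: y :: t) + 1 + (if decide (y < x) = b then 1 else 0) := by
  intro t
  induction t with
  | nil =>
    intro b x y hch
    have hxy : x ≠ y := (List.isChain_cons_cons.mp hch).1
    rcases lt_trichotomy x y with h | h | h
    · cases b <;> simp [greedy, chg, h, asymm h]
    · exact absurd h hxy
    · cases b <;> simp [greedy, chg, h, asymm h]
  | cons z t' ih =>
    intro b x y hch
    have hch' : List.Chain' (· ≠ ·) (y :: z :: t') := (List.isChain_cons_cons.mp hch).2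
    have hxy : x ≠ y := (List.isChain_cons_cons.mp hch).1
    have hchg : chg (x :: y :: z :: t')
        = (if decide (y < x) ≠ decide (z < y) then 1 else 0) + chg (y :: z :: t') := rfl
    by_cases hd : decide (y < x) = b
    · have hcond : (if b then y < x else x < y) := by
        cases b
        · simp only [decide_eq_false_iff_not] at hd
          rw [if_neg (by simp)]
          exact lt_of_le_of_ne (le_of_not_gt hd) hxy
        · simp only [decide_eq_true_eq] at hd
          rw [if_pos rfl]; exact hd
      rw [greedy, if_pos hcond]
      simp only [List.length_cons, ih (!b) y z hch', hchg, hd, if_pos rfl]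
      cases b with
      | true =>
        have hyx : y < x := by simpa using hd
        rcases Decidable.em (z < y) with h | h <;> simp [h, hyx] <;> omega
      | false =>
        have hyx : ¬ y < x := by simpa using hd
        rcases Decidable.em (z < y) with h | h <;> simp [h, hyx] <;> omega
    · have hcond : ¬ (if b then y < x else x < y) := by
        cases b
        · simp only [decide_eq_false_iff_not, Bool.not_eq_false, decide_eq_true_eq] at hd
          rw [if_neg (by simp)]
          exact not_lt_of_gt (by simpa using hd)
        · simp only [Bool.not_eq_true, decide_eq_false_iff_not] at hd
          rw [if_pos rfl]; exact hd
      rw [greedy, if_neg hcond]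
      simp only [ih b y z hch', hchg, if_neg hd]
      cases b with
      | true =>
        have hyx : ¬ y < x := by simpa using hd
        rcases Decidable.em (z < y) with h | h <;> simp [h, hyx] <;> omega
      | false =>
        have hyx : y < x := by simpa using hd
        rcases Decidable.em (z < y) with h | h <;> simp [h, hyx] <;> omega

def PB (b : Bool) (l : List α) : Prop :=
  ∀ i : ℕ, ∀ h : i + 1 < l.length,
    ((i % 2 = 0 ↔ b = true) → l[i + 1]'h < l[i]'(Nat.lt_of_succ_lt h)) ∧
    ((i % 2 = 0 ↔ b = false) → l[i]'(Nat.lt_of_succ_lt h) < l[i + 1]'h)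

lemma isAlt'_iff_PB (l : List α) : IsAlt l ↔ PB true l := by
  constructor
  · intro hp i h
    constructor
    · intro hi
      exact (hp i h).1 (by simpa using hi)
    · intro hi
      have h2 : ¬ i % 2 = 0 := by simpa using hi
      exact (hp i h).2 (by omega)
  · intro hp i h
    constructor
    · intro hi
      exact (hp i h).1 (by simp [hi])
    · intro hi
      refine (hp i h).2 (by simp; omega)

lemma PB_iff : ∀ (t : List α) (b : Bool), PB b t ↔ AltB b t := by
  intro t
  induction t with
  | nil =>
    intro b
    simp only [AltB, iff_true]
    intro i h; simp at h
  | cons x t ih =>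
    cases t with
    | nil =>
      intro b
      simp only [AltB, iff_true]
      intro i h; simp at h
    | cons y t' =>
      intro b
      rw [AltB, ← ih (!b)]
      constructor
      · intro hp
        constructor
        · have h0 := hp 0 (by simp)
          cases b
          · rw [if_neg (by simp)]
            simpa using h0.2 (by simp)
          · rw [if_pos rfl]
            simpa using h0.1 (by simp)
        · intro i h
          have hi := hp (i + 1) (by simpa using Nat.succ_lt_succ h)
          simp only [List.getElem_cons_succ] at hi
          cases b
          · exact ⟨fun hc => hi.1 (by simp at hc ⊢; omega),
              fun hc => hi.2 (by simp at hc ⊢; omega)⟩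
          · exact ⟨fun hc => hi.1 (by simp at hc ⊢; omega),
              fun hc => hi.2 (by simp at hc ⊢; omega)⟩
      · rintro ⟨hcond, hp⟩ i h
        cases i with
        | zero =>
          simp only [List.getElem_cons_succ, List.getElem_cons_zero]
          cases b
          · rw [if_neg (by simp)] at hcond
            exact ⟨fun hc => absurd hc (by simp), fun _ => hcond⟩
          · rw [if_pos rfl] at hcond
            exact ⟨fun _ => hcond, fun hc => absurd hc (by simp)⟩
        | succ j =>
          have hj := hp j (by simpa using Nat.lt_of_succ_lt_succ h)
          simp only [List.getElem_cons_succ]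
          cases b
          · exact ⟨fun hc => hj.1 (by simp at hc ⊢; omega),
              fun hc => hj.2 (by simp at hc ⊢; omega)⟩
          · exact ⟨fun hc => hj.1 (by simp at hc ⊢; omega),
              fun hc => hj.2 (by simp at hc ⊢; omega)⟩

lemma chg_eq_sum (d : α) : ∀ l : List α,
    chg l = ∑ i ∈ Finset.range (l.length - 2),
      (if decide (l.getD (i+1) d < l.getD i d) ≠ decide (l.getD (i+2) d < l.getD (i+1) d)
        then 1 else 0) := by
  intro l
  induction l with
  | nil => simp [chg]
  | cons x t ih =>
    cases t with
    | nil => simp [chg]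
    | cons y t' =>
      cases t' with
      | nil => simp [chg]
      | cons z t'' =>
        rw [show chg (x :: y :: z :: t'')
            = (if decide (y < x) ≠ decide (z < y) then 1 else 0) + chg (y :: z :: t'') from rfl]
        rw [ih]
        rw [show (x :: y :: z :: t'').length - 2 = t''.length + 1 from by simp]
        rw [Finset.sum_range_succ']
        simp only [List.getD_cons_succ, List.getD_cons_zero]
        rw [show (y :: z :: t'').length - 2 = t''.length from by simp]
        omega

lemma sSup_alt (L : List α) :
    sSup { k | ∃ l : List α, l.Sublist L ∧ IsAlt l ∧ l.length = k }
      = (greedy true L).length := by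
  have hmem : (greedy true L).length ∈
      { k | ∃ l : List α, l.Sublist L ∧ IsAlt l ∧ l.length = k } :=
    ⟨greedy true L, greedy_sublist _ _,
      (isAlt'_iff_PB _).mpr ((PB_iff _ _).mpr (greedy_alt _ _)), rfl⟩
  have hub : ∀ k ∈ { k | ∃ l : List α, l.Sublist L ∧ IsAlt l ∧ l.length = k },
      k ≤ (greedy true L).length := by
    rintro k ⟨l, hs, ha, rfl⟩
    exact alt_le_greedy L l true hs ((PB_iff _ _).mp ((isAlt'_iff_PB _).mp ha))
  exact le_antisymm (csSup_le ⟨_, hmem⟩ hub) (le_csSup ⟨_, fun k hk => hub k hk⟩ hmem)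


section Perms
open Equiv Finset
variable {n : ℕ}

lemma perm_card : (Finset.univ : Finset (Equiv.Perm (Fin n))).card = n.factorial := by
  simp [Fintype.card_perm]

lemma sum_pair (p q : Fin n) (hpq : p ≠ q) :
    ∑ w : Equiv.Perm (Fin n), (if w q < w p then (1:ℚ) else 0)
      = (n.factorial : ℚ) / 2 := by
  have key : ∑ w : Equiv.Perm (Fin n), (if w q < w p then (1:ℚ) else 0)
      = ∑ w : Equiv.Perm (Fin n), (if w p < w q then (1:ℚ) else 0) := by
    apply Fintype.sum_equiv (Equiv.mulRight (Equiv.swap p q))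
    intro w
    simp [Equiv.Perm.mul_apply]
  have tot : (∑ w : Equiv.Perm (Fin n), (if w q < w p then (1:ℚ) else 0))
      + (∑ w : Equiv.Perm (Fin n), (if w p < w q then (1:ℚ) else 0))
      = (n.factorial : ℚ) := by
    rw [← Finset.sum_add_distrib]
    have h1 : ∀ w : Equiv.Perm (Fin n),
        (if w q < w p then (1:ℚ) else 0) + (if w p < w q then (1:ℚ) else 0) = 1 := by
      intro w
      have hne : w p ≠ w q := fun h => hpq (w.injective h)
      rcases lt_or_gt_of_ne hne with h | h
      · simp [h, asymm h]
      · simp [h, asymm h]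
    rw [Finset.sum_congr rfl (fun w _ => h1 w)]
    simp [Fintype.card_perm]
  linarith [key, tot]

def F3 {α : Type*} [LinearOrder α] (a b c : α) : ℚ :=
  if decide (b < a) ≠ decide (c < b) then 1 else 0

lemma six {α : Type*} [LinearOrder α] (a b c : α)
    (hab : a ≠ b) (hac : a ≠ c) (hbc : b ≠ c) :
    F3 a b c + F3 a c b + F3 b a c + F3 c b a + F3 b c a + F3 c a b = 4 := by
  unfold F3
  rcases lt_trichotomy a b with h1 | h1 | h1
  · rcases lt_trichotomy b c with h2 | h2 | h2
    · have h3 : a < c := lt_trans h1 h2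
      simp [h1, h2, h3, asymm h1, asymm h2, asymm h3] <;> norm_num
    · exact absurd h2 hbc
    · rcases lt_trichotomy a c with h3 | h3 | h3
      · simp [h1, h2, h3, asymm h1, asymm h2, asymm h3] <;> norm_num
      · exact absurd h3 hac
      · simp [h1, h2, h3, asymm h1, asymm h2, asymm h3] <;> norm_num
  · exact absurd h1 hab
  · rcases lt_trichotomy a c with h2 | h2 | h2
    · have h3 : b < c := lt_trans h1 h2
      simp [h1, h2, h3, asymm h1, asymm h2, asymm h3] <;> norm_num
    · exact absurd h2 hac
    · rcases lt_trichotomy b c with h3 | h3 | h3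
      · simp [h1, h2, h3, asymm h1, asymm h2, asymm h3] <;> norm_num
      · exact absurd h3 hbc
      · simp [h1, h2, h3, asymm h1, asymm h2, asymm h3] <;> norm_num

lemma sum_triple (p q r : Fin n) (hpq : p ≠ q) (hpr : p ≠ r) (hqr : q ≠ r) :
    ∑ w : Equiv.Perm (Fin n), F3 (w p) (w q) (w r) = 2 / 3 * (n.factorial : ℚ) := by
  have inv : ∀ π : Equiv.Perm (Fin n),
      ∑ w : Equiv.Perm (Fin n), F3 (w (π p)) (w (π q)) (w (π r))
        = ∑ w : Equiv.Perm (Fin n), F3 (w p) (w q) (w r) := by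
    intro π
    apply Fintype.sum_equiv (Equiv.mulRight π)
    intro w
    simp [Equiv.Perm.mul_apply]
  have e2 := inv (Equiv.swap q r)
  have e3 := inv (Equiv.swap p q)
  have e4 := inv (Equiv.swap p r)
  have e5 := inv (Equiv.swap p q * Equiv.swap q r)
  have e6 := inv (Equiv.swap q r * Equiv.swap p q)
  simp only [Equiv.Perm.mul_apply, Equiv.swap_apply_left, Equiv.swap_apply_right,
    Equiv.swap_apply_of_ne_of_ne hpq hpr, Equiv.swap_apply_of_ne_of_ne hpq.symm hqr,
    Equiv.swap_apply_of_ne_of_ne hpr.symm hqr.symm] at e2 e3 e4 e5 e6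
  have big : ∑ w : Equiv.Perm (Fin n),
      (F3 (w p) (w q) (w r) + F3 (w p) (w r) (w q) + F3 (w q) (w p) (w r)
        + F3 (w r) (w q) (w p) + F3 (w q) (w r) (w p) + F3 (w r) (w p) (w q))
      = 4 * (n.factorial : ℚ) := by
    have hpt : ∀ w : Equiv.Perm (Fin n),
        F3 (w p) (w q) (w r) + F3 (w p) (w r) (w q) + F3 (w q) (w p) (w r)
          + F3 (w r) (w q) (w p) + F3 (w q) (w r) (w p) + F3 (w r) (w p) (w q) = 4 := by
      intro w
      exact six _ _ _ (fun h => hpq (w.injective h)) (fun h => hpr (w.injective h))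
        (fun h => hqr (w.injective h))
    rw [Finset.sum_congr rfl (fun w _ => hpt w)]
    simp [Fintype.card_perm, mul_comm]
  simp only [Finset.sum_add_distrib] at big
  rw [e2, e3, e4, e5, e6] at big
  linarith [big]

lemma greedy_len_of {α : Type*} [LinearOrder α] (l : List α) (h2 : 2 ≤ l.length)
    (hch : l.Chain' (· ≠ ·)) (d : α) :
    (greedy true l).length = chg l + 1 + (if l.getD 1 d < l.getD 0 d then 1 else 0) := by
  match l, h2 with
  | x :: y :: t, _ =>
    rw [greedy_length t true x y hch]
    simp

end Perms

end Aux

/-- For `n > 1`, the average over all `w ∈ S_n` of the length of the longest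
alternating subsequence of `w` equals `(4n+1)/6`. -/
theorem average_asLen (n : ℕ) (hn : 1 < n) :
    (∑ w : Equiv.Perm (Fin n), (asLen n w : ℚ)) / (n.factorial : ℚ)
      = (4 * n + 1) / 6 := by
  have hn0 : 0 < n := by omega
  set idx : ℕ → Fin n := fun i => ⟨i % n, Nat.mod_lt _ hn0⟩ with hidx
  have hval : ∀ i, i < n → ((idx i : Fin n) : ℕ) = i := fun i hi => Nat.mod_eq_of_lt hi
  have hne : ∀ i j, i < n → j < n → i ≠ j → idx i ≠ idx j := by
    intro i j hi hj hij he
    exact hij ((hval i hi).symm.trans ((congrArg Fin.val he).trans (hval j hj)))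
  have hgetD : ∀ (w : Equiv.Perm (Fin n)) (i : ℕ) (hi : i < n) (d : Fin n),
      (List.ofFn ⇑w).getD i d = w (idx i) := by
    intro w i hi d
    rw [List.getD_eq_getElem _ _ (by simpa using hi), List.getElem_ofFn]
    congr 1
    exact Fin.ext (by simp [hidx, Nat.mod_eq_of_lt hi])
  have hw : ∀ w : Equiv.Perm (Fin n), (asLen n w : ℚ)
      = 1 + (if w (idx 1) < w (idx 0) then (1:ℚ) else 0)
        + ∑ i ∈ Finset.range (n - 2), F3 (w (idx i)) (w (idx (i+1))) (w (idx (i+2))) := by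
    intro w
    have hlen : (List.ofFn ⇑w).length = n := List.length_ofFn
    have hch : (List.ofFn ⇑w).Chain' (· ≠ ·) :=
      List.Pairwise.isChain (List.nodup_ofFn.mpr w.injective)
    have e1 : asLen n w = (greedy true (List.ofFn ⇑w)).length := sSup_alt _
    rw [e1, greedy_len_of _ (by omega) hch (idx 0), chg_eq_sum (idx 0), hlen]
    rw [hgetD w 0 (by omega), hgetD w 1 (by omega)]
    have hsum : ∀ i ∈ Finset.range (n - 2),
        (if decide ((List.ofFn ⇑w).getD (i+1) (idx 0) < (List.ofFn ⇑w).getD i (idx 0))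
            ≠ decide ((List.ofFn ⇑w).getD (i+2) (idx 0) < (List.ofFn ⇑w).getD (i+1) (idx 0))
          then (1:ℕ) else 0)
          = if decide (w (idx (i+1)) < w (idx i)) ≠ decide (w (idx (i+2)) < w (idx (i+1)))
              then (1:ℕ) else 0 := by
      intro i hi
      have hi' : i < n - 2 := Finset.mem_range.mp hi
      rw [hgetD w i (by omega), hgetD w (i+1) (by omega), hgetD w (i+2) (by omega)]
    rw [Finset.sum_congr rfl hsum]
    push_cast [apply_ite ((↑) : ℕ → ℚ)]
    unfold F3
    ring
  rw [Finset.sum_congr rfl (fun w _ => hw w)]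
  rw [Finset.sum_add_distrib, Finset.sum_add_distrib]
  rw [sum_pair (idx 0) (idx 1) (hne 0 1 (by omega) (by omega) (by omega))]
  rw [Finset.sum_comm]
  rw [Finset.sum_congr rfl (fun i hi => sum_triple (idx i) (idx (i+1)) (idx (i+2))
    (hne i (i+1) (by have := Finset.mem_range.mp hi; omega) (by have := Finset.mem_range.mp hi; omega) (by omega))
    (hne i (i+2) (by have := Finset.mem_range.mp hi; omega) (by have := Finset.mem_range.mp hi; omega) (by omega))
    (hne (i+1) (i+2) (by have := Finset.mem_range.mp hi; omega) (by have := Finset.mem_range.mp hi; omega) (by omega)))]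
  simp only [Finset.sum_const, Finset.card_range, Finset.card_univ, Fintype.card_perm,
    Fintype.card_fin, nsmul_eq_mul]
  have hfac : (n.factorial : ℚ) ≠ 0 := Nat.cast_ne_zero.mpr n.factorial_ne_zero
  have hc : ((n - 2 : ℕ) : ℚ) = (n : ℚ) - 2 := by
    rw [Nat.cast_sub (by omega)]
    norm_num
  rw [hc]
  field_simp
  ring
end

section
/- The number of oscillating tableaux of length 2n and shape ∅ equals (2n−1)!! = 1·3·5⋯(2n−1), the number of complete matchings on [2n]. -/
/-
Young's lattice is a 1-differential poset. Every diagram has exactly one more upper cover than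
lower covers (its addable corners are the removable ones shifted one row down, plus the corner in
row 0), and by modularity two distinct diagrams have a common upper cover iff they have a common
lower cover. For the operators `U f μ = ∑_{μ ⋖ ν} f ν` and `D f μ = ∑_{ν ⋖ μ} f ν` on `ℕ`-valued
functions this gives `U D = D U + 1`, hence `U (U + D)^(k+1) = (U + D)^(k+1) U + (k+1) (U + D)^k`.
The number of oscillating tableaux of length `k` and shape `μ` is `((U + D)^k δ_∅) μ`; since
`U δ_∅ = 0` and `∅` has no lower covers, the numbers `w_k = ((U + D)^k δ_∅) ∅` satisfy
`w_(k+2) = (k+1) w_k`, so `w_(2n) = (2n-1)!!`.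
-/

/-- An oscillating tableau of length `k` and shape `∅`: a sequence
`∅ = λ⁰, λ¹, …, λᵏ = ∅` of Young diagrams in which each `λ^{i+1}` is obtained from
`λ^i` by adding or removing exactly one square. -/
structure OscTab (k : ℕ) where
  seq : Fin (k + 1) → YoungDiagram
  first_eq : (seq 0).cells = ∅
  last_eq : (seq (Fin.last k)).cells = ∅
  step : ∀ i : Fin k,
    (seq i.castSucc ≤ seq i.succ ∧ (seq i.succ).card = (seq i.castSucc).card + 1) ∨
    (seq i.succ ≤ seq i.castSucc ∧ (seq i.castSucc).card = (seq i.succ).card + 1)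

open Finset

theorem sup_eq_of_covBy_of_covBy {α : Type*} [Lattice α] {a b c : α} (ha : a ⋖ c) (hb : b ⋖ c)
    (hab : a ≠ b) : a ⊔ b = c := by
  refine (ha.eq_or_eq le_sup_left (sup_le ha.le hb.le)).resolve_left fun h => hab ?_
  have hba : b ≤ a := sup_eq_left.1 h
  exact (hb.eq_or_eq hba ha.le).resolve_right ha.ne

theorem inf_eq_of_covBy_of_covBy {α : Type*} [Lattice α] {a b c : α} (ha : c ⋖ a) (hb : c ⋖ b)
    (hab : a ≠ b) : a ⊓ b = c :=
  sup_eq_of_covBy_of_covBy (α := αᵒᵈ) ha.toDual hb.toDual hab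

theorem mul_pow_succ_of_mul_eq_mul_add_one {R : Type*} [Semiring R] {d a : R}
    (h : d * a = a * d + 1) (k : ℕ) :
    d * a ^ (k + 1) = a ^ (k + 1) * d + (k + 1 : ℕ) * a ^ k := by
  induction k with
  | zero => simpa using h
  | succ k ih =>
    push_cast at ih ⊢
    calc d * a ^ (k + 1 + 1) = (a ^ (k + 1) * d + (k + 1) * a ^ k) * a := by
          rw [← ih, pow_succ _ (k + 1), mul_assoc]
      _ = a ^ (k + 1) * (a * d + 1) + (k + 1) * a ^ (k + 1) := by
          rw [add_mul, mul_assoc, h, mul_assoc, ← pow_succ]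
      _ = a ^ (k + 1 + 1) * d + (k + 1 + 1) * a ^ (k + 1) := by
          rw [mul_add, mul_one, ← mul_assoc, ← pow_succ, add_mul ((k : R) + 1) 1, one_mul]
          abel

@[simp]
theorem AddMonoid.End.add_apply {M : Type*} [AddCommMonoid M] (f g : AddMonoid.End M) (m : M) :
    (f + g) m = f m + g m :=
  rfl

def sumOver {α : Type*} (s : α → Finset α) : AddMonoid.End (α → ℕ) where
  toFun f a := ∑ b ∈ s a, f b
  map_zero' := by ext; simp
  map_add' f g := by ext; simp [sum_add_distrib]

@[simp]
theorem sumOver_apply {α : Type*} (s : α → Finset α) (f : α → ℕ) (a : α) :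
    sumOver s f a = ∑ b ∈ s a, f b :=
  rfl

namespace YoungDiagram

instance : DecidableEq YoungDiagram := fun μ ν =>
  decidable_of_iff (μ.cells = ν.cells) YoungDiagram.ext_iff.symm

theorem card_lt_card {μ ν : YoungDiagram} (h : μ < ν) : μ.card < ν.card :=
  Finset.card_lt_card (cells_ssubset_iff.2 h)

theorem covBy_of_le_of_card_eq {μ ν : YoungDiagram} (h : μ ≤ ν) (hcard : ν.card = μ.card + 1) :
    μ ⋖ ν :=
  ⟨h.lt_of_ne (by rintro rfl; omega), fun _ h₁ h₂ => by
    have := card_lt_card h₁; have := card_lt_card h₂; omega⟩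

def addCell (μ : YoungDiagram) (c : ℕ × ℕ) (hc : ∀ d < c, d ∈ μ) : YoungDiagram where
  cells := insert c μ.cells
  isLowerSet := by
    intro x y hyx hx
    rcases mem_insert.1 hx with rfl | hx
    · rcases hyx.lt_or_eq with hlt | rfl
      · exact mem_insert_of_mem (hc y hlt)
      · exact mem_insert_self _ _
    · exact mem_insert_of_mem (μ.isLowerSet hyx hx)

def removeCell (μ : YoungDiagram) (c : ℕ × ℕ) (hc : ∀ d ∈ μ, ¬c < d) : YoungDiagram where
  cells := μ.cells.erase c
  isLowerSet := by
    intro x y hyx hx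
    obtain ⟨hxc, hxμ⟩ := mem_erase.1 hx
    refine mem_erase.2 ⟨?_, μ.isLowerSet hyx hxμ⟩
    rintro rfl
    exact hc x hxμ (hyx.lt_of_ne (Ne.symm hxc))

section Cells

variable {μ : YoungDiagram} {c : ℕ × ℕ}

@[simp]
theorem mem_addCell {hc : ∀ d < c, d ∈ μ} {d : ℕ × ℕ} : d ∈ μ.addCell c hc ↔ d = c ∨ d ∈ μ :=
  Finset.mem_insert

@[simp]
theorem mem_removeCell {hc : ∀ d ∈ μ, ¬c < d} {d : ℕ × ℕ} :
    d ∈ μ.removeCell c hc ↔ d ≠ c ∧ d ∈ μ :=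
  Finset.mem_erase

theorem covBy_addCell (hc : ∀ d < c, d ∈ μ) (hcμ : c ∉ μ) : μ ⋖ μ.addCell c hc :=
  covBy_of_le_of_card_eq (cells_subset_iff.1 (subset_insert _ _)) (card_insert_of_notMem hcμ)

theorem removeCell_covBy (hc : ∀ d ∈ μ, ¬c < d) (hcμ : c ∈ μ) : μ.removeCell c hc ⋖ μ :=
  covBy_of_le_of_card_eq (cells_subset_iff.1 (erase_subset _ _)) (card_erase_add_one hcμ).symm

theorem eq_of_addCell_eq {c' : ℕ × ℕ} {hc : ∀ d < c, d ∈ μ} {hc' : ∀ d < c', d ∈ μ}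
    (h : μ.addCell c hc = μ.addCell c' hc') (hcμ : c ∉ μ) : c = c' := by
  have : c ∈ μ.addCell c' hc' := h ▸ mem_addCell.2 (Or.inl rfl)
  exact (mem_addCell.1 this).resolve_right hcμ

theorem eq_of_removeCell_eq {c' : ℕ × ℕ} {hc : ∀ d ∈ μ, ¬c < d} {hc' : ∀ d ∈ μ, ¬c' < d}
    (h : μ.removeCell c hc = μ.removeCell c' hc') (hcμ : c ∈ μ) : c = c' := by
  have : c ∉ μ.removeCell c' hc' := h ▸ fun h' => (mem_removeCell.1 h').1 rfl
  by_contra hne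
  exact this (mem_removeCell.2 ⟨hne, hcμ⟩)

end Cells

section Rows

variable {μ ν : YoungDiagram} {i : ℕ}

theorem notMem_rowLen (μ : YoungDiagram) (i : ℕ) : (i, μ.rowLen i) ∉ μ := by
  simp [mem_iff_lt_rowLen]

def removableRows (μ : YoungDiagram) : Finset ℕ :=
  (range (μ.colLen 0)).filter fun i => μ.rowLen (i + 1) < μ.rowLen i

theorem mem_removableRows : i ∈ μ.removableRows ↔ μ.rowLen (i + 1) < μ.rowLen i := by
  rw [removableRows, mem_filter, mem_range, and_iff_right_iff_imp, ← mem_iff_lt_colLen,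
    mem_iff_lt_rowLen]
  omega

def addableRows (μ : YoungDiagram) : Finset ℕ :=
  insert 0 (μ.removableRows.image (· + 1))

theorem card_addableRows (μ : YoungDiagram) : #μ.addableRows = #μ.removableRows + 1 := by
  rw [addableRows, card_insert_of_notMem (by simp),
    card_image_of_injective _ (add_left_injective 1)]

theorem lt_mem_of_mem_addableRows (hi : i ∈ μ.addableRows) : ∀ d < (i, μ.rowLen i), d ∈ μ := by
  rintro ⟨a, b⟩ hd
  rw [mem_iff_lt_rowLen]
  simp only [addableRows, mem_insert, mem_image, mem_removableRows] at hi
  rcases hi with rfl | ⟨j, hj, rfl⟩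
  · obtain rfl : a = 0 := by rw [Prod.lt_iff] at hd; omega
    rw [Prod.lt_iff] at hd
    omega
  · rcases Prod.lt_iff.1 hd with ⟨ha, hb⟩ | ⟨ha, hb⟩
    · have := μ.rowLen_anti a j (by omega)
      omega
    · have := μ.rowLen_anti a (j + 1) ha
      omega

theorem not_lt_of_mem_removableRows (hi : i ∈ μ.removableRows) :
    ∀ d ∈ μ, ¬(i, μ.rowLen i - 1) < d := by
  rintro ⟨a, b⟩ hd hlt
  rw [mem_iff_lt_rowLen] at hd
  rw [mem_removableRows] at hi
  rcases Prod.lt_iff.1 hlt with ⟨ha, hb⟩ | ⟨ha, hb⟩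
  · have := μ.rowLen_anti (i + 1) a ha
    omega
  · have := μ.rowLen_anti i a ha
    omega

theorem mem_of_mem_removableRows (hi : i ∈ μ.removableRows) : (i, μ.rowLen i - 1) ∈ μ := by
  rw [mem_removableRows] at hi
  rw [mem_iff_lt_rowLen]
  omega

theorem rowLen_addCell (hi : i ∈ μ.addableRows) (k : ℕ) :
    (μ.addCell (i, μ.rowLen i) (lt_mem_of_mem_addableRows hi)).rowLen k =
      if k = i then μ.rowLen i + 1 else μ.rowLen k := by
  refine eq_of_forall_lt_iff fun j => ?_
  rw [← mem_iff_lt_rowLen, mem_addCell, mem_iff_lt_rowLen, Prod.mk.injEq]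
  split_ifs with hk
  · subst hk
    omega
  · omega

theorem exists_mem_addableRows_rowLen_lt (h : μ < ν) :
    ∃ i ∈ μ.addableRows, μ.rowLen i < ν.rowLen i := by
  have hex : ∃ i, μ.rowLen i < ν.rowLen i := by
    obtain ⟨⟨a, b⟩, hν, hμ⟩ := SetLike.exists_of_lt h
    rw [mem_iff_lt_rowLen] at hν hμ
    exact ⟨a, by omega⟩
  refine ⟨Nat.find hex, ?_, Nat.find_spec hex⟩
  -- the first row where `ν` is longer than `μ` is addable
  rcases hi : Nat.find hex with _ | j
  · exact mem_insert_self _ _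
  · have hlt : μ.rowLen (j + 1) < ν.rowLen (j + 1) := hi ▸ Nat.find_spec hex
    have hj := Nat.find_min hex (by omega : j < Nat.find hex)
    have := ν.rowLen_anti j (j + 1) j.le_succ
    exact mem_insert_of_mem (mem_image_of_mem _ (mem_removableRows.2 (by omega)))

def upperCovers (μ : YoungDiagram) : Finset YoungDiagram :=
  μ.addableRows.attach.image fun i =>
    μ.addCell (i.1, μ.rowLen i.1) (lt_mem_of_mem_addableRows i.2)

def lowerCovers (μ : YoungDiagram) : Finset YoungDiagram :=
  μ.removableRows.attach.image fun i =>
    μ.removeCell (i.1, μ.rowLen i.1 - 1) (not_lt_of_mem_removableRows i.2)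

theorem mem_upperCovers : ν ∈ μ.upperCovers ↔ μ ⋖ ν := by
  constructor
  · simp only [upperCovers, mem_image, mem_attach, true_and]
    rintro ⟨⟨i, hi⟩, rfl⟩
    exact covBy_addCell _ (notMem_rowLen μ i)
  · intro h
    obtain ⟨i, hi, hlt⟩ := exists_mem_addableRows_rowLen_lt h.lt
    have hcov := covBy_addCell (lt_mem_of_mem_addableRows hi) (notMem_rowLen μ i)
    have hle : μ.addCell (i, μ.rowLen i) (lt_mem_of_mem_addableRows hi) ≤ ν := fun d hd => by
      rcases mem_addCell.1 hd with rfl | hd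
      · exact mem_iff_lt_rowLen.2 hlt
      · exact h.le hd
    exact mem_image.2 ⟨⟨i, hi⟩, mem_attach _ _, (h.eq_or_eq hcov.le hle).resolve_left hcov.ne'⟩

theorem mem_lowerCovers : ν ∈ μ.lowerCovers ↔ ν ⋖ μ := by
  constructor
  · simp only [lowerCovers, mem_image, mem_attach, true_and]
    rintro ⟨⟨i, hi⟩, rfl⟩
    exact removeCell_covBy _ (mem_of_mem_removableRows hi)
  · intro h
    obtain ⟨⟨i, hi⟩, -, rfl⟩ := mem_image.1 (mem_upperCovers.2 h)
    have hrem : i ∈ (ν.addCell (i, ν.rowLen i) (lt_mem_of_mem_addableRows hi)).removableRows := by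
      have := ν.rowLen_anti i (i + 1) i.le_succ
      rw [mem_removableRows, rowLen_addCell hi, rowLen_addCell hi, if_neg i.succ_ne_self,
        if_pos rfl]
      omega
    refine mem_image.2 ⟨⟨i, hrem⟩, mem_attach _ _, YoungDiagram.ext ?_⟩
    change (insert _ ν.cells).erase _ = ν.cells
    rw [rowLen_addCell hi, if_pos rfl, Nat.add_sub_cancel, erase_insert (notMem_rowLen ν i)]

theorem card_upperCovers (μ : YoungDiagram) : #μ.upperCovers = #μ.lowerCovers + 1 := by
  have hup : #μ.upperCovers = #μ.addableRows := by
    rw [upperCovers, card_image_of_injective _ fun i j h => ?_, card_attach]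
    exact Subtype.ext (congrArg Prod.fst (eq_of_addCell_eq h (notMem_rowLen μ i)))
  have hdown : #μ.lowerCovers = #μ.removableRows := by
    rw [lowerCovers, card_image_of_injective _ fun i j h => ?_, card_attach]
    exact Subtype.ext (congrArg Prod.fst (eq_of_removeCell_eq h (mem_of_mem_removableRows i.2)))
  rw [hup, hdown, card_addableRows]

theorem covBy_iff_le_and_card_eq : μ ⋖ ν ↔ μ ≤ ν ∧ ν.card = μ.card + 1 := by
  refine ⟨fun h => ⟨h.le, ?_⟩, fun h => covBy_of_le_of_card_eq h.1 h.2⟩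
  obtain ⟨⟨i, -⟩, -, rfl⟩ := mem_image.1 (mem_upperCovers.2 h)
  exact card_insert_of_notMem (notMem_rowLen μ i)

end Rows

theorem sum_sigma_upperCovers_lowerCovers (f : YoungDiagram → ℕ) (t : YoungDiagram) :
    ∑ p ∈ t.upperCovers.sigma fun μ => μ.lowerCovers.erase t, f p.2 =
      ∑ p ∈ t.lowerCovers.sigma fun μ => μ.upperCovers.erase t, f p.2 := by
  have hup : ∀ p : Σ _ : YoungDiagram, YoungDiagram,
      p ∈ t.upperCovers.sigma (fun μ => μ.lowerCovers.erase t) ↔ t ⋖ p.1 ∧ p.2 ⋖ p.1 ∧ t ≠ p.2 := by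
    simp [mem_upperCovers, mem_lowerCovers, and_comm, eq_comm]
  have hlow : ∀ p : Σ _ : YoungDiagram, YoungDiagram,
      p ∈ t.lowerCovers.sigma (fun μ => μ.upperCovers.erase t) ↔ p.1 ⋖ t ∧ p.1 ⋖ p.2 ∧ t ≠ p.2 := by
    simp [mem_upperCovers, mem_lowerCovers, and_comm, eq_comm]
  -- Young's lattice is modular: distinct `t, ν` with a common upper cover `μ` have `t ⊔ ν = μ`
  -- and `t ⊓ ν` as a common lower cover, and dually.
  refine sum_nbij' (fun p => ⟨t ⊓ p.2, p.2⟩) (fun p => ⟨t ⊔ p.2, p.2⟩) ?_ ?_ ?_ ?_ fun _ _ => rfl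
  · rintro ⟨μ, ν⟩ hp
    obtain ⟨htμ, hνμ, htν⟩ := (hup _).1 hp
    have hsup := sup_eq_of_covBy_of_covBy htμ hνμ htν
    refine (hlow _).2 ⟨inf_covBy_of_covBy_sup_right (hsup ▸ hνμ),
      inf_covBy_of_covBy_sup_left (hsup ▸ htμ), htν⟩
  · rintro ⟨μ, ν⟩ hp
    obtain ⟨hμt, hμν, htν⟩ := (hlow _).1 hp
    have hinf := inf_eq_of_covBy_of_covBy hμt hμν htν
    refine (hup _).2 ⟨covBy_sup_of_inf_covBy_right (hinf ▸ hμν),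
      covBy_sup_of_inf_covBy_left (hinf ▸ hμt), htν⟩
  · rintro ⟨μ, ν⟩ hp
    obtain ⟨htμ, hνμ, htν⟩ := (hup _).1 hp
    simp [sup_eq_of_covBy_of_covBy htμ hνμ htν]
  · rintro ⟨μ, ν⟩ hp
    obtain ⟨hμt, hμν, htν⟩ := (hlow _).1 hp
    simp [inf_eq_of_covBy_of_covBy hμt hμν htν]

theorem sumOver_upperCovers_mul_sumOver_lowerCovers :
    sumOver upperCovers * sumOver lowerCovers =
      sumOver lowerCovers * sumOver upperCovers + 1 := by
  ext f t
  simp only [AddMonoid.End.coe_mul, Function.comp_apply, AddMonoid.End.add_apply,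
    AddMonoid.End.one_apply, sumOver_apply, Pi.add_apply]
  calc ∑ μ ∈ t.upperCovers, ∑ ν ∈ μ.lowerCovers, f ν
        = ∑ μ ∈ t.upperCovers, (∑ ν ∈ μ.lowerCovers.erase t, f ν + f t) :=
          sum_congr rfl fun μ hμ =>
            (sum_erase_add _ _ (mem_lowerCovers.2 (mem_upperCovers.1 hμ))).symm
    _ = ∑ p ∈ t.upperCovers.sigma fun μ => μ.lowerCovers.erase t, f p.2
          + #t.upperCovers * f t := by
          rw [sum_add_distrib, sum_sigma', sum_const, smul_eq_mul]
    _ = ∑ p ∈ t.lowerCovers.sigma fun μ => μ.upperCovers.erase t, f p.2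
          + #t.lowerCovers * f t + f t := by
          rw [sum_sigma_upperCovers_lowerCovers, card_upperCovers, add_mul, one_mul, add_assoc]
    _ = ∑ μ ∈ t.lowerCovers, (∑ ν ∈ μ.upperCovers.erase t, f ν + f t) + f t := by
          rw [sum_add_distrib, sum_sigma', sum_const, smul_eq_mul]
    _ = ∑ μ ∈ t.lowerCovers, ∑ ν ∈ μ.upperCovers, f ν + f t := by
          congr 1
          exact sum_congr rfl fun μ hμ =>
            sum_erase_add _ _ (mem_upperCovers.2 (mem_lowerCovers.1 hμ))

theorem mem_upperCovers_union_lowerCovers {μ ν : YoungDiagram} :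
    ν ∈ μ.upperCovers ∪ μ.lowerCovers ↔ μ ⋖ ν ∨ ν ⋖ μ := by
  rw [mem_union, mem_upperCovers, mem_lowerCovers]

theorem disjoint_upperCovers_lowerCovers (μ : YoungDiagram) :
    Disjoint μ.upperCovers μ.lowerCovers :=
  disjoint_left.2 fun _ h₁ h₂ => (mem_upperCovers.1 h₁).lt.not_gt (mem_lowerCovers.1 h₂).lt

theorem sumOver_upperCovers_single_bot : sumOver upperCovers (Pi.single ⊥ 1) = 0 := by
  ext t
  rw [sumOver_apply, Pi.zero_apply]
  exact sum_eq_zero fun μ hμ => Pi.single_eq_of_ne (ne_bot_of_gt (mem_upperCovers.1 hμ).lt) _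

theorem lowerCovers_bot : (⊥ : YoungDiagram).lowerCovers = ∅ :=
  eq_empty_of_forall_notMem fun _ h => not_lt_bot (mem_lowerCovers.1 h).lt

end YoungDiagram

open YoungDiagram

local notation "𝒜" => sumOver upperCovers + sumOver lowerCovers

theorem sumOver_covers_pow_add_two_apply_bot (k : ℕ) :
    (𝒜 ^ (k + 2)) (Pi.single ⊥ 1) ⊥ = (k + 1) * (𝒜 ^ k) (Pi.single ⊥ 1) ⊥ := by
  have hcomm := mul_pow_succ_of_mul_eq_mul_add_one (d := sumOver upperCovers) (a := 𝒜) (by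
    rw [mul_add, add_mul, sumOver_upperCovers_mul_sumOver_lowerCovers, add_assoc]) k
  calc (𝒜 ^ (k + 2)) (Pi.single ⊥ 1) ⊥
        = (sumOver upperCovers * 𝒜 ^ (k + 1)) (Pi.single ⊥ 1) ⊥ := by
          rw [pow_succ', AddMonoid.End.coe_mul, Function.comp_apply, AddMonoid.End.add_apply,
            Pi.add_apply, sumOver_apply lowerCovers, lowerCovers_bot, sum_empty, add_zero]
          rfl
    _ = _ := by
          rw [hcomm, AddMonoid.End.add_apply, Pi.add_apply, AddMonoid.End.coe_mul,
            Function.comp_apply, sumOver_upperCovers_single_bot, map_zero, Pi.zero_apply,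
            zero_add, AddMonoid.End.coe_mul, Function.comp_apply, AddMonoid.End.natCast_apply,
            Pi.smul_apply, smul_eq_mul]

theorem sumOver_covers_pow_two_mul_apply_bot (n : ℕ) :
    (𝒜 ^ (2 * n)) (Pi.single ⊥ 1) ⊥ = (2 * n - 1).doubleFactorial := by
  induction n with
  | zero => simp
  | succ n ih =>
    rw [mul_add_one, sumOver_covers_pow_add_two_apply_bot, ih]
    rcases n with _ | n
    · simp
    · rw [show 2 * (n + 1) + 2 - 1 = 2 * (n + 1) - 1 + 2 by omega, Nat.doubleFactorial_add_two]
      congr 1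

def OscTableau (k : ℕ) (μ : YoungDiagram) : Type :=
  {f : Fin (k + 1) → YoungDiagram //
    f 0 = ⊥ ∧ f (Fin.last k) = μ ∧ ∀ i : Fin k, f i.castSucc ⋖ f i.succ ∨ f i.succ ⋖ f i.castSucc}

namespace OscTableau

instance (μ : YoungDiagram) : Subsingleton (OscTableau 0 μ) :=
  ⟨fun a b => Subtype.ext <| funext fun i => by
    rw [Subsingleton.elim (α := Fin 1) i 0, a.2.1, b.2.1]⟩

def snocEquiv (k : ℕ) (μ : YoungDiagram) :
    OscTableau (k + 1) μ ≃ Σ ν : ↥(μ.upperCovers ∪ μ.lowerCovers), OscTableau k ν where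
  toFun w := ⟨⟨w.1 (Fin.last k).castSucc, by
      have h := w.2.2.2 (Fin.last k)
      rw [Fin.succ_last, w.2.2.1] at h
      exact mem_upperCovers_union_lowerCovers.2 h.symm⟩,
    ⟨Fin.init w.1, w.2.1, rfl, fun i => by
      simpa only [Fin.init, Fin.succ_castSucc] using w.2.2.2 i.castSucc⟩⟩
  invFun p := ⟨Fin.snoc p.2.1 μ, by
      refine ⟨(Fin.snoc_castSucc (i := 0) ..).trans p.2.2.1, Fin.snoc_last .., fun i => ?_⟩
      induction i using Fin.lastCases with
      | last =>
        rw [Fin.snoc_castSucc, Fin.succ_last, Fin.snoc_last, p.2.2.2.1]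
        exact (mem_upperCovers_union_lowerCovers.1 p.1.2).symm
      | cast j =>
        rw [Fin.succ_castSucc, Fin.snoc_castSucc, Fin.snoc_castSucc]
        exact p.2.2.2.2 j⟩
  left_inv w := Subtype.ext <| by
    conv_rhs => rw [← Fin.snoc_init_self w.1, w.2.2.1]
  right_inv p := Sigma.subtype_ext (Subtype.ext (by simpa using p.2.2.2.1)) (by simp)

instance (k : ℕ) (μ : YoungDiagram) : Finite (OscTableau k μ) := by
  induction k generalizing μ with
  | zero => infer_instance
  | succ k ih => exact Finite.of_equiv _ (snocEquiv k μ).symm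

end OscTableau

theorem card_oscTableau (k : ℕ) (μ : YoungDiagram) :
    Nat.card (OscTableau k μ) = (𝒜 ^ k) (Pi.single ⊥ 1) μ := by
  induction k generalizing μ with
  | zero =>
    rw [pow_zero, AddMonoid.End.one_apply]
    by_cases hμ : μ = ⊥
    · subst hμ
      have : Nonempty (OscTableau 0 ⊥) := ⟨⟨fun _ => ⊥, rfl, rfl, Fin.elim0⟩⟩
      rw [Nat.card_eq_one_iff_unique.2 ⟨inferInstance, this⟩, Pi.single_eq_same]
    · have : IsEmpty (OscTableau 0 μ) := ⟨fun w => hμ (w.2.2.1.symm.trans w.2.1)⟩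
      rw [Nat.card_of_isEmpty, Pi.single_eq_of_ne hμ]
  | succ k ih =>
    rw [Nat.card_congr (OscTableau.snocEquiv k μ), Nat.card_sigma, pow_succ',
      AddMonoid.End.coe_mul, Function.comp_apply, AddMonoid.End.add_apply, Pi.add_apply,
      sumOver_apply, sumOver_apply, ← sum_union (disjoint_upperCovers_lowerCovers μ)]
    simp only [ih]
    exact sum_coe_sort _ _

def OscTab.equivOscTableau (k : ℕ) : OscTab k ≃ OscTableau k ⊥ where
  toFun o := ⟨o.seq, YoungDiagram.ext o.first_eq, YoungDiagram.ext o.last_eq, fun i => by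
    simpa only [covBy_iff_le_and_card_eq] using o.step i⟩
  invFun w := ⟨w.1, by rw [w.2.1]; rfl, by rw [w.2.2.1]; rfl, fun i => by
    simpa only [covBy_iff_le_and_card_eq] using w.2.2.2 i⟩
  left_inv _ := rfl
  right_inv _ := rfl

/-- The number of oscillating tableaux of length `2n` and shape `∅` equals
`(2n−1)!! = 1·3·5⋯(2n−1)`, the number of complete matchings on `[2n]`. -/
theorem card_oscTab (n : ℕ) :
    Nat.card (OscTab (2 * n)) = Nat.doubleFactorial (2 * n - 1) := by
  rw [Nat.card_congr (OscTab.equivOscTableau _), card_oscTableau,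
    sumOver_covers_pow_two_mul_apply_bot]
end

section
/- For every matching M on [2n], the length of the longest decreasing subsequence of the fixed-point-free involution w_M associated to M equals twice the nesting number ne(M) of M. -/
open scoped Classical in
/-- The length of the longest decreasing subsequence of the permutation `w`. -/
noncomputable def dsLen (n : ℕ) (w : Equiv.Perm (Fin n)) : ℕ :=
  Finset.sup ((Finset.univ : Finset (Fin n)).powerset.filter
    fun s : Finset (Fin n) => StrictAntiOn w ↑s) Finset.card

open scoped Classical in
/-- The nesting number of the matching given by the fixed-point-free involution `w`:
the maximum number of mutually nesting arcs.  A set of arcs, recorded by their left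
endpoints, is mutually nesting if any two of its arcs `{i, w i}`, `{k, w k}` nest. -/
noncomputable def neNum (m : ℕ) (w : Equiv.Perm (Fin m)) : ℕ :=
  Finset.sup ((Finset.univ : Finset (Fin m)).powerset.filter
    fun s : Finset (Fin m) => (∀ i ∈ s, i < w i) ∧
      ∀ i ∈ s, ∀ k ∈ s, i < k → k < w k ∧ w k < w i) Finset.card

/-- For every matching `M` on `[2n]`, i.e. every fixed-point-free involution `w` of
`[2n]`, the length of the longest decreasing subsequence of `w` equals twice the
nesting number of `M`. -/
theorem dsLen_eq_two_mul_neNum (n : ℕ) (w : Equiv.Perm (Fin (2 * n)))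
    (hw : w * w = 1) (hfpf : ∀ i, w i ≠ i) :
    dsLen (2 * n) w = 2 * neNum (2 * n) w := by
  classical
  have hww : ∀ i, w (w i) = i := by
    intro i
    have := Equiv.ext_iff.mp hw i
    simpa [Equiv.Perm.mul_apply] using this
  apply le_antisymm
  · -- dsLen ≤ 2 * neNum
    apply Finset.sup_le
    intro s hs
    simp only [Finset.mem_filter, Finset.mem_powerset] at hs
    obtain ⟨-, hanti⟩ := hs
    set A := s.filter (fun i => i < w i) with hA
    set B := s.filter (fun i => ¬ i < w i) with hB
    have hBlt : ∀ i ∈ B, w i < i := by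
      intro i hi
      rw [hB, Finset.mem_filter] at hi
      rcases lt_or_eq_of_le (not_lt.mp hi.2) with h | h
      · exact h
      · exact absurd h (hfpf i)
    have hcard : A.card + B.card = s.card :=
      Finset.card_filter_add_card_filter_not _
    -- A is a nesting set
    have hAne : A.card ≤ neNum (2 * n) w := by
      apply Finset.le_sup
      simp only [Finset.mem_filter, Finset.mem_powerset]
      refine ⟨Finset.subset_univ _, ?_, ?_⟩
      · intro i hi; exact (Finset.mem_filter.mp hi).2
      · intro i hi k hk hik
        have hks : k ∈ s := (Finset.mem_filter.mp hk).1
        have his : i ∈ s := (Finset.mem_filter.mp hi).1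
        exact ⟨(Finset.mem_filter.mp hk).2, hanti his hks hik⟩
    -- w(B) is a nesting set
    have hBne : B.card ≤ neNum (2 * n) w := by
      have himg : (B.image w).card = B.card :=
        Finset.card_image_of_injective _ w.injective
      rw [← himg]
      apply Finset.le_sup
      simp only [Finset.mem_filter, Finset.mem_powerset]
      refine ⟨Finset.subset_univ _, ?_, ?_⟩
      · intro i hi
        obtain ⟨b, hb, rfl⟩ := Finset.mem_image.mp hi
        rw [hww]
        exact hBlt b hb
      · intro i hi k hk hik
        obtain ⟨b, hb, rfl⟩ := Finset.mem_image.mp hi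
        obtain ⟨c, hc, rfl⟩ := Finset.mem_image.mp hk
        have hbs : b ∈ s := (Finset.mem_filter.mp hb).1
        have hcs : c ∈ s := (Finset.mem_filter.mp hc).1
        have hcb : c < b := by
          rcases lt_trichotomy b c with h | h | h
          · exact absurd (hanti hbs hcs h) (asymm hik)
          · subst h; exact absurd rfl (ne_of_lt hik)
          · exact h
        rw [hww, hww]
        exact ⟨hBlt c hc, hcb⟩
    calc s.card = A.card + B.card := hcard.symm
      _ ≤ neNum (2 * n) w + neNum (2 * n) w := Nat.add_le_add hAne hBne
      _ = 2 * neNum (2 * n) w := (two_mul _).symm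
  · -- 2 * neNum ≤ dsLen
    unfold neNum
    rw [Finset.comp_sup_eq_sup_comp (2 * ·)
      (fun x y => by omega) (by simp)]
    apply Finset.sup_le
    intro s hs
    simp only [Finset.mem_filter, Finset.mem_powerset] at hs
    obtain ⟨-, h1, h2⟩ := hs
    -- the decreasing set s ∪ w(s)
    have hdisj : Disjoint s (s.image w) := by
      rw [Finset.disjoint_left]
      intro a ha hai
      obtain ⟨b, hb, rfl⟩ := Finset.mem_image.mp hai
      have h1b : b < w b := h1 b hb
      have h1a : w b < w (w b) := h1 _ ha
      rw [hww] at h1a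
      exact absurd (h1b.trans h1a) (lt_irrefl b)
    have hcardT : (s ∪ s.image w).card = 2 * s.card := by
      rw [Finset.card_union_of_disjoint hdisj,
        Finset.card_image_of_injective _ w.injective]
      omega
    have hmem : s ∪ s.image w ∈ (Finset.univ : Finset (Fin (2 * n))).powerset.filter
        (fun t : Finset (Fin (2 * n)) => StrictAntiOn w ↑t) := by
      simp only [Finset.mem_filter, Finset.mem_powerset]
      refine ⟨Finset.subset_univ _, ?_⟩
      intro x hx y hy hxy
      simp only [Finset.coe_union, Set.mem_union, Finset.mem_coe] at hx hy
      rcases hx with hx | hx <;> rcases hy with hy | hy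
      · exact (h2 x hx y hy hxy).2
      · -- x ∈ s, y = w k
        obtain ⟨k, hk, rfl⟩ := Finset.mem_image.mp hy
        rw [hww]
        rcases lt_trichotomy x k with h | h | h
        · exact (h1 k hk).trans (h2 x hx k hk h).2
        · subst h; exact h1 x hx
        · exact h.trans (h2 k hk x hx h).1
      · -- x = w b, y ∈ s : impossible
        obtain ⟨b, hb, rfl⟩ := Finset.mem_image.mp hx
        have hby : b < y := (h1 b hb).trans hxy
        have := h2 b hb y hy hby
        exact absurd (this.1.trans (this.2.trans hxy)) (lt_irrefl y)
      · -- x = w b, y = w c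
        obtain ⟨b, hb, rfl⟩ := Finset.mem_image.mp hx
        obtain ⟨c, hc, rfl⟩ := Finset.mem_image.mp hy
        rw [hww, hww]
        rcases lt_trichotomy b c with h | h | h
        · exact absurd (h2 b hb c hc h).2 (asymm hxy)
        · subst h; exact absurd rfl (ne_of_lt hxy)
        · exact h
    calc 2 * s.card = (s ∪ s.image w).card := hcardT.symm
      _ ≤ dsLen (2 * n) w := Finset.le_sup hmem
end
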